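/- arXiv:2202.09718 — 11 statements merged into one kernel-verified Lean document; each statement's English description precedes it below -/
import Mathlib

section
/- Let G be a connected graph, let s and t be distinct vertices of G, and let G' be the graph obtained from G by adding a new vertex p adjacent only to s. Then every non-separating s-t path P in G' satisfies V(G') \ V(P) = {p}; equivalently, V(P) = V(G). -/
/-!
The new vertex `p` has `s` as its only neighbour. It cannot lie on an `s`-`t` path `P`: the
vertex following it on `P` would be `s`, which already starts `P`. So `p` lies in `G' - V(P)`,
where it is isolated because `s ∈ V(P)`; a connected graph with an isolated vertex has no other
vertex.
-/

/-- The graph obtained from `G` by adding one new vertex (`none`) adjacent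
exactly to the vertices in `N`. -/
def SimpleGraph.addVertex {V : Type*} (G : SimpleGraph V) (N : Set V) :
    SimpleGraph (Option V) where
  Adj a b :=
    match a, b with
    | some u, some w => G.Adj u w
    | some u, none => u ∈ N
    | none, some w => w ∈ N
    | none, none => False
  symm := by
    constructor
    rintro (u | u) (w | w) h
    · exact h
    · exact h
    · exact h
    · exact h.symm
  loopless := by
    constructor
    rintro (u | u) h
    · exact h
    · exact G.irrefl h

namespace SimpleGraph

variable {V : Type*} {G : SimpleGraph V}

lemma neighborSet_addVertex_none (N : Set V) : (G.addVertex N).neighborSet none = some '' N := by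
  ext (w | w) <;> simp [addVertex, neighborSet]

lemma Walk.IsPath.notMem_support_of_neighborSet_subset {u v x : V} {p : G.Walk u v}
    (hp : p.IsPath) (hx : G.neighborSet x ⊆ {u}) (hxv : x ≠ v) : x ∉ p.support := by
  intro hmem
  obtain ⟨n, rfl, hn⟩ := Walk.mem_support_iff_exists_getVert.mp hmem
  have hlt : n < p.length := hn.lt_of_ne fun h => hxv (h ▸ p.getVert_length)
  have hnext : p.getVert (n + 1) = p.getVert 0 := by
    rw [p.getVert_zero]
    exact hx (p.adj_getVert_succ hlt)
  exact n.succ_ne_zero (hp.getVert_injOn (by simpa using hlt) (by simp) hnext)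

lemma Preconnected.eq_singleton_of_induce {S : Set V} {a : V} (hS : (G.induce S).Preconnected)
    (ha : a ∈ S) (hiso : ∀ w ∈ S, ¬ G.Adj a w) : S = {a} := by
  by_contra hne
  have : Nontrivial S := Set.nontrivial_coe_sort.mpr ((Set.nontrivial_iff_ne_singleton ha).mpr hne)
  exact hS.not_isIsolated ⟨a, ha⟩ fun w => hiso w w.2

end SimpleGraph

theorem stmt0_general {V : Type*} (G : SimpleGraph V) (s t : V)
    (P : (G.addVertex {s}).Walk (some s) (some t)) (hP : P.IsPath)
    (hNS : ((G.addVertex {s}).induce {x | x ∉ P.support}).Connected) :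
    {x | x ∉ P.support} = ({none} : Set (Option V)) := by
  have hneighbors : (G.addVertex {s}).neighborSet none = {some s} := by
    rw [SimpleGraph.neighborSet_addVertex_none, Set.image_singleton]
  have hnone : none ∉ P.support :=
    hP.notMem_support_of_neighborSet_subset hneighbors.subset nofun
  refine hNS.preconnected.eq_singleton_of_induce hnone fun w hw hadj => hw ?_
  obtain rfl : w = some s := hneighbors.subset hadj
  exact P.start_mem_support

/-- if `G` is connected, `s ≠ t`, and `G'` is obtained from `G` by adding a
pendant vertex `p` adjacent only to `s`, then every non-separating `s`-`t` path `P` in `G'`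
satisfies `V(G') \ V(P) = {p}`. -/
theorem stmt0 {V : Type*} (G : SimpleGraph V) (hG : G.Connected) (s t : V) (hst : s ≠ t)
    (P : (G.addVertex {s}).Walk (some s) (some t)) (hP : P.IsPath)
    (hNS : ((G.addVertex {s}).induce {x | x ∉ P.support}).Connected) :
    {x | x ∉ P.support} = ({none} : Set (Option V)) :=
  stmt0_general G s t P hP hNS
end

section
/- Let G be a connected graph, let s and t be distinct vertices of G, and let G' be the graph obtained from G by adding a new vertex p adjacent only to s. Then G' has a non-separating s-t path if and only if G has a Hamiltonian s-t path. -/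
namespace SimpleGraph

variable {V W : Type*}

theorem Reachable.eq_of_forall_not_adj {G : SimpleGraph V} {u v : V} (h : G.Reachable u v)
    (hu : ∀ w, ¬G.Adj u w) : u = v := by
  obtain ⟨_ | ⟨huw, _⟩⟩ := h
  · rfl
  · exact (hu _ huw).elim

namespace Walk

theorem exists_map_eq_of_support_subset_range {G : SimpleGraph V} {G' : SimpleGraph W}
    (f : G ↪g G') {a b : V} (p : G'.Walk (f a) (f b)) (hp : ∀ x ∈ p.support, x ∈ Set.range f) :
    ∃ q : G.Walk a b, q.map f.toHom = p := by
  suffices key : ∀ {x y : W} (p : G'.Walk x y), (∀ x ∈ p.support, x ∈ Set.range f) →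
      ∀ {a b : V} (hx : f a = x) (hy : f b = y), ∃ q : G.Walk a b, (q.map f.toHom).copy hx hy = p
    from key p hp rfl rfl
  intro x y p hp
  induction p with
  | nil =>
    rintro a b rfl hy
    obtain rfl := f.injective hy
    exact ⟨.nil, rfl⟩
  | cons hxz p ih =>
    rintro a b rfl rfl
    obtain ⟨c, rfl⟩ := hp _ (p.start_mem_support.tail _)
    obtain ⟨q, hq⟩ := ih (fun x hx ↦ hp x (hx.tail _)) rfl rfl
    exact ⟨.cons (f.map_adj_iff.mp hxz) q, by simpa using hq⟩

end Walk

variable (G : SimpleGraph V) (N : Set V)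

@[simp]
theorem addVertex_adj_none_some {a : V} : (G.addVertex N).Adj none (some a) ↔ a ∈ N :=
  Iff.rfl

@[simp]
theorem addVertex_not_adj_none_none : ¬(G.addVertex N).Adj none none :=
  id

theorem addVertex_neighborSet_none : (G.addVertex N).neighborSet none = some '' N := by
  ext (_ | a) <;> simp

def addVertexEmbedding : G ↪g G.addVertex N :=
  ⟨⟨some, Option.some_injective V⟩, Iff.rfl⟩

variable {G N}

theorem Walk.IsPath.exists_isPath_support_eq_map_some (hN : N.Subsingleton) {a b : V}
    {p : (G.addVertex N).Walk (some a) (some b)} (hp : p.IsPath) :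
    ∃ q : G.Walk a b, q.IsPath ∧ p.support = q.support.map some := by
  have hnone : none ∉ p.support :=
    hp.isTrail.not_mem_support_of_subsingleton_neighborSet (Option.some_ne_none a).symm
      (Option.some_ne_none b).symm (addVertex_neighborSet_none G N ▸ hN.image some)
  obtain ⟨q, hq⟩ := p.exists_map_eq_of_support_subset_range (G.addVertexEmbedding N) (a := a)
    (b := b) fun x hx ↦ by
      obtain _ | a := x
      · exact (hnone hx).elim
      · exact ⟨a, rfl⟩
  refine ⟨q, ?_, by rw [← hq]; exact Walk.support_map _ _⟩
  rw [← hq] at hp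
  exact hp.of_map

end SimpleGraph

open SimpleGraph

theorem stmt1_general {V : Type*} (G : SimpleGraph V) (s t : V) :
    (∃ P : (G.addVertex {s}).Walk (some s) (some t), P.IsPath ∧
      ((G.addVertex {s}).induce {x | x ∉ P.support}).Connected) ↔
    (∃ Q : G.Walk s t, Q.IsPath ∧ ∀ w, w ∈ Q.support) := by
  constructor
  · rintro ⟨P, hP, hconn⟩
    obtain ⟨Q, hQ, hPQ⟩ := hP.exists_isPath_support_eq_map_some Set.subsingleton_singleton
    have hnone : none ∉ P.support := by simp [hPQ]
    refine ⟨Q, hQ, fun w ↦ by_contra fun hw ↦ ?_⟩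
    have hw' : some w ∉ P.support := by simpa [hPQ] using hw
    have hisol : ∀ y, ¬((G.addVertex {s}).induce {x | x ∉ P.support}).Adj ⟨none, hnone⟩ y := by
      rintro ⟨_ | a, ha⟩ hadj
      · exact addVertex_not_adj_none_none G {s} hadj
      · obtain rfl : a = s := hadj
        exact ha P.start_mem_support
    simpa using (hconn.preconnected ⟨none, hnone⟩ ⟨some w, hw'⟩).eq_of_forall_not_adj hisol
  · rintro ⟨Q, hQ, hham⟩
    let P : (G.addVertex {s}).Walk (some s) (some t) := Q.map (G.addVertexEmbedding {s}).toHom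
    have hPQ : P.support = Q.support.map some := Walk.support_map _ _
    refine ⟨P, hQ.map (G.addVertexEmbedding {s}).injective, ?_⟩
    have hcompl : {x | x ∉ P.support} = {none} := by
      ext (_ | w) <;> simp [hPQ, hham]
    rw [hcompl]
    exact Connected.of_subsingleton

/-- if `G` is connected, `s ≠ t`, and `G'` is obtained from `G` by adding a
pendant vertex `p` adjacent only to `s`, then `G'` has a non-separating `s`-`t` path
if and only if `G` has a Hamiltonian `s`-`t` path. -/
theorem stmt1 {V : Type*} (G : SimpleGraph V) (hG : G.Connected) (s t : V) (hst : s ≠ t) :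
    (∃ P : (G.addVertex {s}).Walk (some s) (some t), P.IsPath ∧
      ((G.addVertex {s}).induce {x | x ∉ P.support}).Connected) ↔
    (∃ Q : G.Walk s t, Q.IsPath ∧ ∀ w, w ∈ Q.support) :=
  stmt1_general G s t
end

section
/- Let k ≥ 1 and let G be a graph whose vertex set is partitioned into classes V_1, …, V_k, with |V(G)| > k. Construct a graph H as follows: start with the vertex set V(G), and for u ∈ V_i, v ∈ V_j with |i − j| ≤ 1, make u and v adjacent in H if and only if they are adjacent in G; for each pair u ∈ V_i, v ∈ V_j with |i − j| ≥ 2 that is not an edge of G, add a new vertex w_{u,v} adjacent to exactly u and v together with a new pendant vertex adjacent only to w_{u,v} (pairs u ∈ V_i, v ∈ V_j with |i − j| ≥ 2 that are edges of G are non-adjacent in H); add a new vertex s adjacent to exactly the vertices of V_1 and a new vertex t adjacent to exactly the vertices of V_k; finally add a new vertex v* adjacent to every vertex of V(G) and a new pendant vertex p adjacent only to v*. Then G contains a clique C with |C ∩ V_i| = 1 for every 1 ≤ i ≤ k if and only if H contains a non-separating s-t path of length at most k + 1. -/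
namespace Stmt3

/-- The four special vertices added in the construction: `s`, `t`, `v*` and
the pendant vertex `p` adjacent to `v*`. -/
inductive Extra : Type
  | es : Extra
  | et : Extra
  | vstar : Extra
  | pend : Extra

/-- The "class distance" `|i - j|` of an unordered pair of vertices, where a vertex
`u` is in class `c u`. -/
def classSep {V : Type*} {k : ℕ} (c : V → Fin k) : Sym2 V → ℕ :=
  Sym2.lift ⟨fun u w => ((c u : ℤ) - (c w : ℤ)).natAbs, fun u w => by
    show ((c u : ℤ) - (c w : ℤ)).natAbs = ((c w : ℤ) - (c u : ℤ)).natAbs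
    omega⟩

/-- The unordered pairs `{u, w}` with `|i - j| ≥ 2` (where `u ∈ V_i`, `w ∈ V_j`)
that are *not* edges of `G`: for each such pair the construction adds an internal
gadget vertex `w_{u,w}` together with a pendant neighbor of it. -/
def BadPair {V : Type*} {k : ℕ} (G : SimpleGraph V) (c : V → Fin k) (e : Sym2 V) : Prop :=
  2 ≤ classSep c e ∧ e ∉ G.edgeSet

/-- Vertices of the constructed graph `H`: the original vertices, for every bad pair a
gadget vertex (`Bool = false`) and its pendant (`Bool = true`), and the four extra
vertices. -/
abbrev HVert {k : ℕ} (V : Type*) (G : SimpleGraph V) (c : V → Fin k) : Type _ :=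
  V ⊕ (({e : Sym2 V // BadPair G c e} × Bool) ⊕ Extra)

/-- The graph `H` constructed from the Multicolored Clique instance `(G, c)`:
* `u, w ∈ V(G)` with `|i - j| ≤ 1` are adjacent in `H` iff they are adjacent in `G`
  (pairs with `|i - j| ≥ 2` are never adjacent in `H`);
* for every bad pair `{u, w}` the gadget vertex `w_{u,w}` is adjacent exactly to `u`, `w`
  and its own pendant vertex;
* `s` is adjacent exactly to the vertices of `V_1` (class `0`), `t` exactly to those of
  `V_k` (class `k - 1`);
* `v*` is adjacent to every original vertex and to its pendant `p`. -/
def Hgraph {V : Type*} {k : ℕ} (G : SimpleGraph V) (c : V → Fin k) :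
    SimpleGraph (HVert V G c) :=
  SimpleGraph.fromRel fun a b =>
    match a, b with
    | Sum.inl u, Sum.inl w => G.Adj u w ∧ classSep c s(u, w) ≤ 1
    | Sum.inl u, Sum.inr (Sum.inl (e, false)) => u ∈ e.val
    | Sum.inr (Sum.inl (e, false)), Sum.inr (Sum.inl (e', true)) => e = e'
    | Sum.inr (Sum.inr Extra.es), Sum.inl u => (c u : ℕ) = 0
    | Sum.inr (Sum.inr Extra.et), Sum.inl u => (c u : ℕ) = k - 1
    | Sum.inr (Sum.inr Extra.vstar), Sum.inl u => True
    | Sum.inr (Sum.inr Extra.vstar), Sum.inr (Sum.inr Extra.pend) => True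
    | _, _ => False

section Adj
variable {V : Type*} {k : ℕ} {G : SimpleGraph V} {c : V → Fin k}

lemma adj_inl_inl {u w : V} :
    (Hgraph G c).Adj (Sum.inl u) (Sum.inl w) ↔ G.Adj u w ∧ classSep c s(u, w) ≤ 1 := by
  constructor
  · rintro ⟨hne, h | h⟩
    · exact h
    · refine ⟨h.1.symm, ?_⟩
      have := h.2
      simp only [classSep, Sym2.lift_mk] at *
      omega
  · intro h
    exact ⟨by simp [h.1.ne], Or.inl h⟩

lemma adj_es {y : HVert V G c} :
    (Hgraph G c).Adj (Sum.inr (Sum.inr Extra.es)) y ↔ ∃ u, y = Sum.inl u ∧ (c u : ℕ) = 0 := by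
  constructor
  · rintro ⟨hne, h | h⟩ <;>
    · rcases y with u | ⟨⟨e, (_|_)⟩ | (_|_|_|_)⟩ <;> simp_all [Hgraph]
  · rintro ⟨u, rfl, hu⟩
    exact ⟨by simp, Or.inl hu⟩

lemma adj_et {y : HVert V G c} :
    (Hgraph G c).Adj (Sum.inr (Sum.inr Extra.et)) y ↔ ∃ u, y = Sum.inl u ∧ (c u : ℕ) = k - 1 := by
  constructor
  · rintro ⟨hne, h | h⟩ <;>
    · rcases y with u | ⟨⟨e, (_|_)⟩ | (_|_|_|_)⟩ <;> simp_all [Hgraph]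
  · rintro ⟨u, rfl, hu⟩
    exact ⟨by simp, Or.inl hu⟩

lemma adj_vstar {y : HVert V G c} :
    (Hgraph G c).Adj (Sum.inr (Sum.inr Extra.vstar)) y ↔
      (∃ u, y = Sum.inl u) ∨ y = Sum.inr (Sum.inr Extra.pend) := by
  constructor
  · rintro ⟨hne, h | h⟩ <;>
    · rcases y with u | ⟨⟨e, (_|_)⟩ | (_|_|_|_)⟩ <;> simp_all [Hgraph]
  · rintro (⟨u, rfl⟩ | rfl)
    · exact ⟨by simp, Or.inl trivial⟩
    · exact ⟨by simp, Or.inl trivial⟩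

lemma adj_pend {y : HVert V G c} :
    (Hgraph G c).Adj (Sum.inr (Sum.inr Extra.pend)) y ↔ y = Sum.inr (Sum.inr Extra.vstar) := by
  constructor
  · rintro ⟨hne, h | h⟩ <;>
    · rcases y with u | ⟨⟨e, (_|_)⟩ | (_|_|_|_)⟩ <;> simp_all [Hgraph]
  · rintro rfl
    exact ⟨by simp, Or.inr trivial⟩

lemma adj_gadget {e : {e : Sym2 V // BadPair G c e}} {y : HVert V G c} :
    (Hgraph G c).Adj (Sum.inr (Sum.inl (e, false))) y ↔
      (∃ u, y = Sum.inl u ∧ u ∈ e.val) ∨ y = Sum.inr (Sum.inl (e, true)) := by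
  constructor
  · rintro ⟨hne, h | h⟩ <;>
    · rcases y with u | ⟨⟨e', (_|_)⟩ | (_|_|_|_)⟩ <;> simp_all [Hgraph]
  · rintro (⟨u, rfl, hu⟩ | rfl)
    · exact ⟨by simp, Or.inr hu⟩
    · exact ⟨by simp, Or.inl rfl⟩

lemma adj_pendant {e : {e : Sym2 V // BadPair G c e}} {y : HVert V G c} :
    (Hgraph G c).Adj (Sum.inr (Sum.inl (e, true))) y ↔ y = Sum.inr (Sum.inl (e, false)) := by
  constructor
  · rintro ⟨hne, h | h⟩ <;>
    · rcases y with u | ⟨⟨e', (_|_)⟩ | (_|_|_|_)⟩ <;> simp_all [Hgraph]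
  · rintro rfl
    exact ⟨by simp, Or.inr rfl⟩

lemma adj_inl {u : V} {y : HVert V G c} (h : (Hgraph G c).Adj (Sum.inl u) y) :
    (∃ w, y = Sum.inl w) ∨ (∃ e, y = Sum.inr (Sum.inl (e, false)))
      ∨ y = Sum.inr (Sum.inr Extra.es) ∨ y = Sum.inr (Sum.inr Extra.et)
      ∨ y = Sum.inr (Sum.inr Extra.vstar) := by
  rcases y with w | ⟨⟨e', (_|_)⟩ | (_|_|_|_)⟩ <;>
    simp_all [Hgraph] <;> rcases h with ⟨hne, h | h⟩ <;> simp_all [Hgraph]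

end Adj


open SimpleGraph

lemma exists_walk_of_fn {α : Type*} (H : SimpleGraph α) (f : ℕ → α) :
    ∀ n : ℕ, (∀ i < n, H.Adj (f i) (f (i + 1))) →
      ∃ W : H.Walk (f 0) (f n), W.length = n ∧ W.support = (List.range (n + 1)).map f := by
  intro n
  induction n with
  | zero => exact fun _ => ⟨Walk.nil, by simp [List.range_succ]⟩
  | succ m ih =>
    intro h
    obtain ⟨W, hlen, hsupp⟩ := ih fun i hi => h i (by omega)
    refine ⟨W.concat (h m (by omega)), by simp [hlen], ?_⟩
    rw [Walk.support_concat, hsupp]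
    simp [List.range_succ]

lemma walk_stay {α : Type*} {H : SimpleGraph α} {S A : Set α}
    (closed : ∀ x ∈ A, x ∈ S → ∀ z, H.Adj x z → z ∈ A ∨ z ∉ S) :
    ∀ {x y : S} (_ : (H.induce S).Walk x y), ↑x ∈ A → ↑y ∈ A := by
  intro x y W
  induction W with
  | nil => exact id
  | @cons a b d h q ih =>
    intro ha
    have hadj : H.Adj ↑a ↑b := h
    rcases closed _ ha a.2 _ hadj with hb | hb
    · exact ih hb
    · exact absurd b.2 hb

lemma not_connected_of_closed {α : Type*} {H : SimpleGraph α} {S A : Set α} {a b : α}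
    (ha : a ∈ S) (haA : a ∈ A) (hb : b ∈ S) (hbA : b ∉ A)
    (closed : ∀ x ∈ A, x ∈ S → ∀ z, H.Adj x z → z ∈ A ∨ z ∉ S) :
    ¬ (H.induce S).Connected := by
  intro hconn
  obtain ⟨W⟩ := hconn.preconnected ⟨a, ha⟩ ⟨b, hb⟩
  exact hbA (walk_stay closed W haA)

lemma reach_step {α : Type*} {H : SimpleGraph α} {S : Set α} {a b : α}
    (ha : a ∈ S) (hb : b ∈ S) (h : H.Adj a b) :
    (H.induce S).Reachable ⟨a, ha⟩ ⟨b, hb⟩ :=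
  SimpleGraph.Adj.reachable (by exact h)

section Wfn
variable {α : Type*} {H : SimpleGraph α} {u v : α}

/-- the `j`-th vertex of a walk, as a total function -/
def wfn (P : H.Walk u v) (j : ℕ) : α := P.support.getD j u

lemma wfn_len (P : H.Walk u v) : P.support.length = P.length + 1 := P.length_support

lemma wfn_eq_get (P : H.Walk u v) {j : ℕ} (h : j ≤ P.length) :
    wfn P j = P.support.get ⟨j, by rw [wfn_len]; omega⟩ :=
  List.getD_eq_getElem _ _ (by rw [wfn_len]; omega)

lemma wfn_zero (P : H.Walk u v) : wfn P 0 = u := by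
  show P.support.getD 0 u = u
  rw [P.support_eq_cons]
  rfl

lemma wfn_last (P : H.Walk u v) : wfn P P.length = v := by
  rw [wfn_eq_get P le_rfl]
  have h2 := P.getLast_support
  rw [List.getLast_eq_getElem] at h2
  · rw [List.get_eq_getElem]
    convert h2 using 2
    simp [wfn_len]

lemma wfn_mem_support (P : H.Walk u v) {j : ℕ} (h : j ≤ P.length) : wfn P j ∈ P.support := by
  rw [wfn_eq_get P h]; exact List.get_mem _ _

lemma wfn_adj (P : H.Walk u v) {j : ℕ} (h : j < P.length) :
    H.Adj (wfn P j) (wfn P (j + 1)) := by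
  have hc := List.isChain_iff_getElem.mp P.isChain_adj_support j (by rw [wfn_len]; omega)
  rw [wfn_eq_get P (by omega), wfn_eq_get P (by omega)]
  exact hc

lemma wfn_adj' (P : H.Walk u v) {a b : ℕ} (hab : b = a + 1) (hb : b ≤ P.length) :
    H.Adj (wfn P a) (wfn P b) := by
  subst hab
  exact wfn_adj P (by omega)

lemma wfn_mem (P : H.Walk u v) {y : α} (hy : y ∈ P.support) :
    ∃ j ≤ P.length, wfn P j = y := by
  obtain ⟨⟨j, hj⟩, rfl⟩ := List.mem_iff_get.mp hy
  rw [wfn_len] at hj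
  exact ⟨j, by omega, wfn_eq_get P (by omega)⟩

lemma wfn_inj {P : H.Walk u v} (hP : P.IsPath) {i j : ℕ}
    (hi : i ≤ P.length) (hj : j ≤ P.length) (h : wfn P i = wfn P j) : i = j := by
  rw [wfn_eq_get P hi, wfn_eq_get P hj] at h
  have := (List.Nodup.get_inj_iff hP.support_nodup).mp h
  exact congrArg Fin.val this

lemma interior_two_neighbors {P : H.Walk u v} (hP : P.IsPath) {y : α}
    (hy : y ∈ P.support) (hys : y ≠ u) (hyt : y ≠ v) :
    ∃ a b, a ≠ b ∧ H.Adj y a ∧ H.Adj y b := by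
  obtain ⟨j, hj, rfl⟩ := wfn_mem P hy
  have hj0 : j ≠ 0 := fun h => hys (h ▸ wfn_zero P)
  have hjl : j ≠ P.length := fun h => hyt (h ▸ wfn_last P)
  refine ⟨wfn P (j - 1), wfn P (j + 1), ?_, ?_, ?_⟩
  · intro h
    have := wfn_inj hP (by omega) (by omega) h
    omega
  · have := wfn_adj P (j := j - 1) (by omega)
    rw [show j - 1 + 1 = j by omega] at this
    exact this.symm
  · exact wfn_adj P (by omega)

end Wfn

section Main
variable {V : Type*} {k : ℕ} {G : SimpleGraph V} {c : V → Fin k}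

lemma fin_coe_int {m : ℕ} (z : Fin m) : (z : ℤ) = ((z : ℕ) : ℤ) := rfl

lemma classSep_mk {u w : V} : classSep c s(u, w) = ((c u : ℤ) - (c w : ℤ)).natAbs := rfl

end Main
/-- `G` (whose vertex set is partitioned by `c` into `k` classes, with more
than `k` vertices) contains a multicolored clique (one vertex from each class) iff the
constructed graph `H` contains a non-separating `s`-`t` path of length at most `k + 1`. -/
theorem stmt3 {V : Type*} [Fintype V] {k : ℕ} (hk : 1 ≤ k) (G : SimpleGraph V)
    (c : V → Fin k) (hcard : k < Fintype.card V) :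
    (∃ C : Set V, G.IsClique C ∧ ∀ i : Fin k, ∃! x, x ∈ C ∧ c x = i) ↔
    (∃ P : (Hgraph G c).Walk (Sum.inr (Sum.inr Extra.es)) (Sum.inr (Sum.inr Extra.et)),
      P.IsPath ∧ P.length ≤ k + 1 ∧
      ((Hgraph G c).induce {x | x ∉ P.support}).Connected) := by
  classical
  constructor
  · rintro ⟨C, hC, huniq⟩
    have hex : ∀ i : Fin k, ∃ x, x ∈ C ∧ c x = i := fun i => (huniq i).exists
    choose x hxC hxc using hex
    have hxinj : ∀ {i j : Fin k}, x i = x j → i = j := by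
      intro i j h
      rw [← hxc i, ← hxc j, h]
    have hxadj : ∀ {i j : Fin k}, i ≠ j → G.Adj (x i) (x j) := by
      intro i j hij
      exact hC (hxC i) (hxC j) (fun h => hij (hxinj h))
    set f : ℕ → HVert V G c := fun j => match j with
      | 0 => Sum.inr (Sum.inr Extra.es)
      | j + 1 => if h : j < k then Sum.inl (x ⟨j, h⟩) else Sum.inr (Sum.inr Extra.et)
      with hf
    have hf0 : f 0 = Sum.inr (Sum.inr Extra.es) := rfl
    have hfk : f (k + 1) = Sum.inr (Sum.inr Extra.et) := by simp [hf]
    have hfx : ∀ (j) (h : j < k), f (j + 1) = Sum.inl (x ⟨j, h⟩) := by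
      intro j h; simp [hf, h]
    have hadj : ∀ i < k + 1, (Hgraph G c).Adj (f i) (f (i + 1)) := by
      intro i hi
      match i with
      | 0 =>
        rw [hf0, hfx 0 (by omega)]
        refine adj_es.mpr ⟨_, rfl, ?_⟩
        rw [hxc]
      | j + 1 =>
        have hj : j < k := by omega
        rw [hfx j hj]
        by_cases h2 : j + 1 < k
        · rw [hfx (j + 1) h2]
          refine adj_inl_inl.mpr ⟨hxadj (by simp [Fin.ext_iff]), ?_⟩
          rw [classSep_mk, hxc, hxc]
          simp only [Fin.val_mk]
          omega
        · have h3 : j + 1 = k := by omega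
          rw [show f (j + 1 + 1) = Sum.inr (Sum.inr Extra.et) by simp [hf, h2]]
          refine (adj_et.mpr ⟨_, rfl, ?_⟩).symm
          rw [hxc]; simp; omega
    obtain ⟨W, hWlen, hWsupp⟩ := exists_walk_of_fn (Hgraph G c) f (k + 1) hadj
    have hmemW : ∀ y, y ∈ W.support ↔ ∃ j ≤ k + 1, f j = y := by
      intro y
      rw [hWsupp]
      simp only [List.mem_map, List.mem_range]
      constructor
      · rintro ⟨j, hj, rfl⟩; exact ⟨j, by omega, rfl⟩
      · rintro ⟨j, hj, rfl⟩; exact ⟨j, by omega, rfl⟩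
    have hfshape : ∀ j, f j = Sum.inr (Sum.inr Extra.es) ∨ f j = Sum.inr (Sum.inr Extra.et) ∨
        ∃ i : Fin k, f j = Sum.inl (x i) := by
      intro j
      match j with
      | 0 => exact Or.inl rfl
      | j + 1 =>
        by_cases h : j < k
        · exact Or.inr (Or.inr ⟨⟨j, h⟩, hfx j h⟩)
        · exact Or.inr (Or.inl (by simp [hf, h]))
    have hnotin : ∀ y : HVert V G c, y ≠ Sum.inr (Sum.inr Extra.es) →
        y ≠ Sum.inr (Sum.inr Extra.et) → (∀ i : Fin k, y ≠ Sum.inl (x i)) →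
        y ∉ W.support := by
      intro y h1 h2 h3 hy
      obtain ⟨j, _, rfl⟩ := (hmemW _).mp hy
      rcases hfshape j with h | h | ⟨i, h⟩
      exacts [h1 h, h2 h, h3 i h]
    refine ⟨W.copy rfl hfk, ?_, ?_, ?_⟩
    · rw [SimpleGraph.Walk.isPath_def, SimpleGraph.Walk.support_copy, hWsupp]
      refine List.Nodup.map_on ?_ List.nodup_range
      intro i hi j hj hij
      rw [List.mem_range] at hi hj
      match i, j with
      | 0, 0 => rfl
      | 0, j + 1 => by_cases h : j < k <;> simp [hf, h] at hij
      | i + 1, 0 => by_cases h : i < k <;> simp [hf, h] at hij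
      | i + 1, j + 1 =>
        by_cases h1 : i < k <;> by_cases h2 : j < k <;> simp [hf, h1, h2] at hij
        · have := hxinj hij
          rw [Fin.mk.injEq] at this
          omega
        · omega
    · rw [SimpleGraph.Walk.length_copy, hWlen]
    · rw [show {x : HVert V G c | x ∉ (W.copy rfl hfk).support} = {x | x ∉ W.support} by
        rw [SimpleGraph.Walk.support_copy], SimpleGraph.connected_iff]
      set S : Set (HVert V G c) := {v_1 | v_1 ∉ W.support} with hSdef
      have hvS : Sum.inr (Sum.inr Extra.vstar) ∈ S :=
        hnotin _ (by simp) (by simp) (fun i => by simp)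
      have hpS : Sum.inr (Sum.inr Extra.pend) ∈ S :=
        hnotin _ (by simp) (by simp) (fun i => by simp)
      have hgS : ∀ (e : {e : Sym2 V // BadPair G c e}) (b : Bool),
          Sum.inr (Sum.inl (e, b)) ∈ S :=
        fun e b => hnotin _ (by simp) (by simp) (fun i => by simp)
      have hinlS : ∀ z : V, z ∉ Set.range x → Sum.inl z ∈ S := by
        intro z hz
        refine hnotin _ (by simp) (by simp) (fun i h => ?_)
        rw [Sum.inl.injEq] at h
        exact hz ⟨i, h.symm⟩
      have hgoodv : ∀ e : {e : Sym2 V // BadPair G c e}, ∃ z, z ∈ e.val ∧ z ∉ Set.range x := by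
        rintro ⟨e, he⟩
        induction e with
        | _ a b =>
          by_cases ha : a ∈ Set.range x
          · by_cases hb : b ∈ Set.range x
            · exfalso
              obtain ⟨i, rfl⟩ := ha
              obtain ⟨j, rfl⟩ := hb
              have h1 := he.1
              rw [classSep_mk] at h1
              have hij : i ≠ j := by
                intro h
                subst h
                omega
              exact he.2 (G.mem_edgeSet.mpr (hxadj hij))
            · exact ⟨b, by simp, hb⟩
          · exact ⟨a, by simp, ha⟩
      have hreach : ∀ (a : HVert V G c) (ha : a ∈ S),
          ((Hgraph G c).induce S).Reachable ⟨a, ha⟩ ⟨Sum.inr (Sum.inr Extra.vstar), hvS⟩ := by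
        intro a ha
        have hgadget_reach : ∀ (e : {e : Sym2 V // BadPair G c e}),
            ((Hgraph G c).induce S).Reachable ⟨Sum.inr (Sum.inl (e, false)), hgS e false⟩
              ⟨Sum.inr (Sum.inr Extra.vstar), hvS⟩ := by
          intro e
          obtain ⟨z, hz1, hz2⟩ := hgoodv e
          refine (reach_step (hgS e false) (hinlS z hz2) ?_).trans
            (reach_step (hinlS z hz2) hvS ?_)
          · exact adj_gadget.mpr (Or.inl ⟨z, rfl, hz1⟩)
          · exact (adj_vstar.mpr (Or.inl ⟨z, rfl⟩)).symm
        rcases a with u | ⟨⟨e, (_ | _)⟩ | (_ | _ | _ | _)⟩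
        · refine reach_step ha hvS ?_
          exact (adj_vstar.mpr (Or.inl ⟨u, rfl⟩)).symm
        · exact hgadget_reach e
        · refine (reach_step ha (hgS e false) ?_).trans (hgadget_reach e)
          exact adj_pendant.mpr rfl
        · exact absurd ((hmemW _).mpr ⟨0, by omega, hf0⟩) ha
        · exact absurd ((hmemW _).mpr ⟨k + 1, by omega, hfk⟩) ha
        · exact SimpleGraph.Reachable.refl _
        · exact reach_step ha hvS (adj_pend.mpr rfl)
      constructor
      · intro a b
        exact (hreach a.1 a.2).trans (hreach b.1 b.2).symm
      · exact ⟨⟨_, hvS⟩⟩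
  · rintro ⟨P, hP, hlen, hconn⟩
    have hV : Nonempty V := by
      have : 0 < Fintype.card V := by omega
      exact Fintype.card_pos_iff.mp this
    set S : Set (HVert V G c) := {x | x ∉ P.support} with hSdef
    have hpend_not : Sum.inr (Sum.inr Extra.pend) ∉ P.support := by
      intro h
      obtain ⟨a, b, hab, ha, hb⟩ := interior_two_neighbors hP h (by simp) (by simp)
      rw [adj_pend] at ha hb
      exact hab (ha.trans hb.symm)
    have hpendant_not : ∀ e : {e : Sym2 V // BadPair G c e},
        Sum.inr (Sum.inl (e, true)) ∉ P.support := by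
      intro e h
      obtain ⟨a, b, hab, ha, hb⟩ := interior_two_neighbors hP h (by simp) (by simp)
      rw [adj_pendant] at ha hb
      exact hab (ha.trans hb.symm)
    obtain ⟨u0, hu0⟩ : ∃ u0 : V, Sum.inl u0 ∉ P.support := by
      by_contra hcon
      push_neg at hcon
      have hsub : Finset.univ.image (Sum.inl : V → HVert V G c) ⊆
          P.support.toFinset \ {Sum.inr (Sum.inr Extra.es), Sum.inr (Sum.inr Extra.et)} := by
        intro y hy
        simp only [Finset.mem_image] at hy
        obtain ⟨w, _, rfl⟩ := hy
        rw [Finset.mem_sdiff]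
        exact ⟨List.mem_toFinset.mpr (hcon w), by simp⟩
      have h1 := Finset.card_le_card hsub
      rw [Finset.card_image_of_injective _ Sum.inl_injective] at h1
      have h2 : ({Sum.inr (Sum.inr Extra.es), Sum.inr (Sum.inr Extra.et)} :
          Finset (HVert V G c)) ⊆ P.support.toFinset := by
        intro y hy
        simp only [Finset.mem_insert, Finset.mem_singleton] at hy
        rcases hy with rfl | rfl
        · exact List.mem_toFinset.mpr P.start_mem_support
        · exact List.mem_toFinset.mpr P.end_mem_support
      rw [Finset.card_sdiff_of_subset h2] at h1
      have h3 : P.support.toFinset.card = P.support.length :=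
        List.toFinset_card_of_nodup hP.support_nodup
      have h4 : P.support.length = P.length + 1 := P.length_support
      have h5 : ({Sum.inr (Sum.inr Extra.es), Sum.inr (Sum.inr Extra.et)} :
          Finset (HVert V G c)).card = 2 := by
        rw [Finset.card_insert_of_notMem (by simp), Finset.card_singleton]
      rw [Finset.card_univ] at h1
      omega
    have hvstar_not : Sum.inr (Sum.inr Extra.vstar) ∉ P.support := by
      intro h
      refine not_connected_of_closed (S := S) (A := {Sum.inr (Sum.inr Extra.pend)})
        (a := Sum.inr (Sum.inr Extra.pend)) (b := Sum.inl u0)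
        hpend_not rfl hu0 (by simp) ?_ hconn
      intro y hy _ z hz
      rw [Set.mem_singleton_iff] at hy
      subst hy
      rw [adj_pend] at hz
      subst hz
      exact Or.inr (fun hzS => hzS h)
    have hgadget_not : ∀ e : {e : Sym2 V // BadPair G c e},
        Sum.inr (Sum.inl (e, false)) ∉ P.support := by
      intro e h
      refine not_connected_of_closed (S := S) (A := {Sum.inr (Sum.inl (e, true))})
        (a := Sum.inr (Sum.inl (e, true))) (b := Sum.inr (Sum.inr Extra.vstar))
        (hpendant_not e) rfl hvstar_not (by simp) ?_ hconn
      intro y hy _ z hz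
      rw [Set.mem_singleton_iff] at hy
      subst hy
      rw [adj_pendant] at hz
      subst hz
      exact Or.inr (fun hzS => hzS h)
    have hn1 : 1 ≤ P.length := by
      rcases Nat.eq_zero_or_pos P.length with h | h
      · have := SimpleGraph.Walk.eq_of_length_eq_zero (p := P) h
        simp at this
      · exact h
    have hn2 : 2 ≤ P.length := by
      rcases Nat.lt_or_ge P.length 2 with h | h
      · exfalso
        have hadj := wfn_adj' P (a := 0) (b := P.length) (by omega) le_rfl
        rw [wfn_zero, wfn_last] at hadj
        obtain ⟨w, hw, _⟩ := adj_es.mp hadj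
        simp at hw
      · exact h
    have hint : ∀ j, 0 < j → j < P.length → ∃ w : V, wfn P j = Sum.inl w := by
      intro j h0 hn'
      have hmem := wfn_mem_support P (le_of_lt hn')
      rcases hsh : wfn P j with w | ⟨⟨e, (_ | _)⟩ | (_ | _ | _ | _)⟩
      · exact ⟨w, rfl⟩
      · rw [hsh] at hmem; exact absurd hmem (hgadget_not e)
      · rw [hsh] at hmem; exact absurd hmem (hpendant_not e)
      · exfalso
        have : j = 0 := wfn_inj hP (by omega) (by omega) (by rw [hsh, wfn_zero])
        omega
      · exfalso
        have : j = P.length := wfn_inj hP (by omega) le_rfl (by rw [hsh, wfn_last])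
        omega
      · rw [hsh] at hmem; exact absurd hmem hvstar_not
      · rw [hsh] at hmem; exact absurd hmem hpend_not
    obtain ⟨u, hu⟩ : ∃ u : ℕ → V, ∀ j, 0 < j → j < P.length → wfn P j = Sum.inl (u j) := by
      refine ⟨fun j => if h : 0 < j ∧ j < P.length then (hint j h.1 h.2).choose
        else Classical.arbitrary V, ?_⟩
      intro j h1 h2
      simp only [dif_pos (And.intro h1 h2)]
      exact (hint j h1 h2).choose_spec
    have hd1 : (c (u 1) : ℕ) = 0 := by
      have hadj := wfn_adj' P (a := 0) (b := 1) rfl (by omega)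
      rw [wfn_zero, hu 1 (by omega) (by omega)] at hadj
      obtain ⟨w, hw, hw0⟩ := adj_es.mp hadj
      rw [Sum.inl.injEq] at hw
      rw [hw]
      exact hw0
    have hdlast : (c (u (P.length - 1)) : ℕ) = k - 1 := by
      have hadj := wfn_adj' P (a := P.length - 1) (b := P.length) (by omega) le_rfl
      rw [wfn_last, hu (P.length - 1) (by omega) (by omega)] at hadj
      obtain ⟨w, hw, hw0⟩ := adj_et.mp hadj.symm
      rw [Sum.inl.injEq] at hw
      rw [hw]
      exact hw0
    have hstep : ∀ a b : ℕ, b = a + 1 → 1 ≤ a → b ≤ P.length - 1 →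
        (c (u a) : ℕ) ≤ (c (u b) : ℕ) + 1 ∧ (c (u b) : ℕ) ≤ (c (u a) : ℕ) + 1 := by
      intro a b hab h1 h2
      have hadj := wfn_adj' P hab (by omega)
      rw [hu a (by omega) (by omega), hu b (by omega) (by omega)] at hadj
      have hcs := (adj_inl_inl.mp hadj).2
      rw [classSep_mk, fin_coe_int, fin_coe_int] at hcs
      omega
    have hup : ∀ a b : ℕ, b = a + 1 → b ≤ P.length - 1 → (c (u b) : ℕ) ≤ a := by
      intro a
      induction a with
      | zero =>
        intro b hab hb
        rw [show b = 1 by omega]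
        omega
      | succ m ih =>
        intro b hab hb
        have h1 := ih (m + 1) rfl (by omega)
        have h2 := hstep (m + 1) b (by omega) (by omega) (by omega)
        omega
    have hnk : P.length = k + 1 := by
      have h1 := hup (P.length - 2) (P.length - 1) (by omega) (by omega)
      omega
    have hdk : (c (u k) : ℕ) = k - 1 := by
      have := hdlast
      rw [show P.length - 1 = k by omega] at this
      exact this
    have hdown : ∀ j, j ≤ k - 1 → (c (u (k - j)) : ℕ) = k - 1 - j := by
      intro j
      induction j with
      | zero =>
        intro _
        simpa using hdk
      | succ m ih =>
        intro hm1
        have h1 := ih (by omega)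
        have h2 := hstep (k - (m + 1)) (k - m) (by omega) (by omega) (by omega)
        have h3 := hup (k - (m + 1) - 1) (k - (m + 1)) (by omega) (by omega)
        omega
    have hcu : ∀ m, m < k → (c (u (m + 1)) : ℕ) = m := by
      intro m hm
      have h1 := hdown (k - 1 - m) (by omega)
      rw [show k - (k - 1 - m) = m + 1 by omega] at h1
      rw [h1]
      omega
    have hmain : ∀ i j : Fin k, (i : ℕ) < (j : ℕ) → G.Adj (u ((i : ℕ) + 1)) (u ((j : ℕ) + 1)) := by
      intro i j hij
      have hik := i.isLt
      have hjk := j.isLt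
      by_cases hcons : (j : ℕ) = (i : ℕ) + 1
      · have hadj := wfn_adj' P (a := (i : ℕ) + 1) (b := (j : ℕ) + 1) (by omega) (by omega)
        rw [hu ((i : ℕ) + 1) (by omega) (by omega), hu ((j : ℕ) + 1) (by omega) (by omega)] at hadj
        exact (adj_inl_inl.mp hadj).1
      · by_contra hnadj
        have hci := hcu (i : ℕ) hik
        have hcj := hcu (j : ℕ) hjk
        have hbad : BadPair G c s(u ((i : ℕ) + 1), u ((j : ℕ) + 1)) := by
          constructor
          · rw [classSep_mk, fin_coe_int, fin_coe_int]
            omega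
          · intro hmem
            exact hnadj (G.mem_edgeSet.mp hmem)
        refine absurd hconn (not_connected_of_closed (S := S)
          (A := {Sum.inr (Sum.inl (⟨_, hbad⟩, false)), Sum.inr (Sum.inl (⟨_, hbad⟩, true))})
          (a := Sum.inr (Sum.inl (⟨_, hbad⟩, false))) (b := Sum.inr (Sum.inr Extra.vstar))
          (hgadget_not _) (by simp) hvstar_not (by simp) ?_)
        intro y hy _ z hz
        simp only [Set.mem_insert_iff, Set.mem_singleton_iff] at hy
        rcases hy with rfl | rfl
        · rcases adj_gadget.mp hz with ⟨w, rfl, hw⟩ | rfl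
          · refine Or.inr (fun hzS => hzS ?_)
            rw [Sym2.mem_iff] at hw
            rcases hw with rfl | rfl
            · rw [← hu ((i : ℕ) + 1) (by omega) (by omega)]
              exact wfn_mem_support P (by omega)
            · rw [← hu ((j : ℕ) + 1) (by omega) (by omega)]
              exact wfn_mem_support P (by omega)
          · exact Or.inl (by simp)
        · rw [adj_pendant] at hz
          subst hz
          exact Or.inl (by simp)
    refine ⟨Set.range (fun i : Fin k => u ((i : ℕ) + 1)), ?_, ?_⟩
    · rintro a ⟨i, rfl⟩ b ⟨j, rfl⟩ hab
      rcases Nat.lt_trichotomy (i : ℕ) (j : ℕ) with h | h | h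
      · exact hmain i j h
      · exact absurd (by rw [Fin.ext_iff.mpr h] : u ((i : ℕ) + 1) = u ((j : ℕ) + 1)) hab
      · exact (hmain j i h).symm
    · intro i
      refine ⟨u ((i : ℕ) + 1), ⟨⟨i, rfl⟩, Fin.ext (hcu (i : ℕ) i.isLt)⟩, ?_⟩
      rintro z ⟨⟨j, rfl⟩, hz⟩
      have h1 := hcu (j : ℕ) j.isLt
      have h2 : (j : ℕ) = (i : ℕ) := by
        rw [hz] at h1
        exact h1.symm
      show u ((j : ℕ) + 1) = u ((i : ℕ) + 1)
      rw [h2]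

end Stmt3
end

section
/- Let G be a connected chordal graph and let S ⊆ V(G) be a vertex set such that the induced subgraph G[S] is connected. Then for all u, v ∈ S, every induced u-v path P in G satisfies V(P) ⊆ N[S]. -/
/-- A graph is chordal if it has no induced cycle of length at least 4, i.e. no induced
subgraph isomorphic to `cycleGraph n` with `n ≥ 4`.  (Graph embeddings `↪g` reflect
adjacency, so their images are induced subgraphs.) -/
def SimpleGraph.IsChordal {V : Type*} (G : SimpleGraph V) : Prop :=
  ∀ n : ℕ, 4 ≤ n → IsEmpty (SimpleGraph.cycleGraph n ↪g G)

/-- A path is induced if the only edges of `G` between its vertices are its own edges. -/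
def SimpleGraph.Walk.IsInducedPath {V : Type*} {G : SimpleGraph V} {u v : V}
    (p : G.Walk u v) : Prop :=
  p.IsPath ∧ ∀ a ∈ p.support, ∀ b ∈ p.support, G.Adj a b → s(a, b) ∈ p.edges

/-!
If a vertex `x` of `P` lies outside `N[S]`, cut out the segment `Q` of `P` through `x` whose
inner vertices avoid `N[S]` and whose ends `a`, `b` lie in `N[S]`. As a segment of an induced
path, `Q` is induced, and it has length at least two, so `a ≠ b` and `a`, `b` are not adjacent.
Since `G[S]` is connected, so is `G[S ∪ {a, b}]`, and a shortest `a`-`b` path `R` in it is an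
induced path of `G` with inner vertices in `S`. The inner vertices of `Q` are outside `N[S]`,
hence neither equal nor adjacent to those of `R`, so `Q` followed by `R` is an induced cycle of
length at least four.
-/

namespace SimpleGraph

variable {V : Type*} {G : SimpleGraph V}

def closedNeighborhood (G : SimpleGraph V) (S : Set V) : Set V :=
  {x | x ∈ S ∨ ∃ y ∈ S, G.Adj x y}

lemma induce_insert_connected {S : Set V} (hS : (G.induce S).Connected) {a : V}
    (ha : a ∈ G.closedNeighborhood S) : (G.induce (insert a S)).Connected := by
  rcases ha with ha | ⟨y, hy, hay⟩
  · rwa [Set.insert_eq_of_mem ha]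
  · have h := induce_union_connected (induce_pair_connected_of_adj hay).preconnected
      hS.preconnected ⟨y, by simp, hy⟩
    rwa [Set.insert_union, Set.singleton_union, Set.insert_eq_of_mem hy] at h

namespace Walk

variable {u v w x : V}

lemma two_le_length_of_ne_of_not_adj : ∀ (p : G.Walk u v), u ≠ v → ¬G.Adj u v → 2 ≤ p.length
  | nil, hne, _ => (hne rfl).elim
  | cons h nil, _, hadj => (hadj h).elim
  | cons _ (cons _ _), _, _ => by simp

lemma two_le_length_of_mem_support :
    ∀ (p : G.Walk u v), x ∈ p.support → x ≠ u → x ≠ v → 2 ≤ p.length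
  | nil, hx, hu, _ => by simp_all
  | cons _ nil, hx, hu, hv => by simp_all
  | cons _ (cons _ _), _, _, _ => by simp

lemma IsPath.eq_of_mem_support_of_mem_support {p : G.Walk u v} {q : G.Walk v w}
    (h : (p.append q).IsPath) (hp : x ∈ p.support) (hq : x ∈ q.support) : x = v := by
  rw [isPath_def, support_append] at h
  rw [← cons_tail_support] at hq
  rcases List.mem_cons.1 hq with rfl | hq
  · rfl
  · exact absurd hq (List.disjoint_of_nodup_append h hp)

lemma exists_isSubwalk_of_mem_support [DecidableEq V] (p : G.Walk u v) {a b : V}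
    (ha : a ∈ p.support) (hb : b ∈ p.support) :
    (∃ r : G.Walk a b, r.IsSubwalk p) ∨ ∃ r : G.Walk b a, r.IsSubwalk p := by
  rw [← p.take_spec ha, mem_support_append_iff] at hb
  rcases hb with hb | hb
  · exact .inr ⟨_, (isSubwalk_dropUntil _ hb).trans (isSubwalk_takeUntil p ha)⟩
  · exact .inl ⟨_, (isSubwalk_takeUntil _ hb).trans (isSubwalk_dropUntil p ha)⟩

lemma mk_mem_edges_of_length_eq_one {p : G.Walk u v} (hp : p.length = 1) : s(u, v) ∈ p.edges :=
  p.mk_mem_edges_iff_exists.2 ⟨0, by omega, by rw [getVert_zero, zero_add, ← hp, getVert_length]⟩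

lemma IsInducedPath.of_isSubwalk {p : G.Walk u v} {a b : V} {q : G.Walk a b}
    (hp : p.IsInducedPath) (hq : q.IsSubwalk p) : q.IsInducedPath := by
  refine ⟨isPath_of_isSubwalk hq hp.1, fun c hc d hd hcd => ?_⟩
  obtain ⟨ru, rv, rfl⟩ := hq
  have hpath := hp.1
  have hedge := hp.2 c (by simp [hc]) d (by simp [hd]) hcd
  simp only [edges_append, List.mem_append] at hedge
  rcases hedge with (h | h) | h
  · have hleft := hpath.of_append_left
    have := hleft.eq_of_mem_support_of_mem_support (fst_mem_support_of_mem_edges _ h) hc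
    have := hleft.eq_of_mem_support_of_mem_support (snd_mem_support_of_mem_edges _ h) hd
    exact absurd hcd (by simp_all)
  · exact h
  · rw [← append_assoc] at hpath
    have hright := hpath.of_append_right
    have := hright.eq_of_mem_support_of_mem_support hc (fst_mem_support_of_mem_edges _ h)
    have := hright.eq_of_mem_support_of_mem_support hd (snd_mem_support_of_mem_edges _ h)
    exact absurd hcd (by simp_all)

lemma IsInducedPath.ne_and_not_adj {p : G.Walk u v} (hp : p.IsInducedPath) (h : 2 ≤ p.length) :
    u ≠ v ∧ ¬G.Adj u v := by
  refine ⟨?_, fun hadj => ?_⟩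
  · rintro rfl
    simp [(isPath_iff_nil.1 hp.1).length_eq_zero] at h
  · have := hp.1.length_eq_one_of_mem_edges (hp.2 u p.start_mem_support v p.end_mem_support hadj)
    omega

lemma IsInducedPath.map {V' : Type*} {G' : SimpleGraph V'} (f : G ↪g G') {p : G.Walk u v}
    (hp : p.IsInducedPath) : (p.map f.toHom).IsInducedPath := by
  refine ⟨hp.1.map f.injective, fun a ha b hb hab => ?_⟩
  simp only [support_map, List.mem_map] at ha hb
  obtain ⟨a, ha, rfl⟩ := ha
  obtain ⟨b, hb, rfl⟩ := hb
  rw [edges_map]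
  exact List.mem_map_of_mem (f := Sym2.map f.toHom) (hp.2 a ha b hb (f.map_adj_iff.1 hab))

lemma isInducedPath_of_length_eq_dist {p : G.Walk u v} (hp : p.length = G.dist u v) :
    p.IsInducedPath := by
  classical
  refine ⟨p.isPath_of_length_eq_dist hp, fun a ha b hb hab => ?_⟩
  rcases p.exists_isSubwalk_of_mem_support ha hb with ⟨r, hr⟩ | ⟨r, hr⟩
  · have hr1 : r.length = 1 := (length_eq_dist_of_subwalk hp hr).trans (dist_eq_one_iff_adj.2 hab)
    exact hr.edges_subset (mk_mem_edges_of_length_eq_one hr1)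
  · have hr1 : r.length = 1 :=
      (length_eq_dist_of_subwalk hp hr).trans (dist_eq_one_iff_adj.2 hab.symm)
    exact Sym2.eq_swap ▸ hr.edges_subset (mk_mem_edges_of_length_eq_one hr1)

lemma exists_eq_append_of_end_mem (p : G.Walk u v) {T : Set V} (hv : v ∈ T) :
    ∃ a ∈ T, ∃ (q : G.Walk u a) (r : G.Walk a v), p = q.append r ∧
      ∀ z ∈ q.support, z ≠ a → z ∉ T := by
  induction p with
  | nil => exact ⟨_, hv, nil, nil, rfl, by simp⟩
  | @cons u w v h p ih =>
    by_cases hu : u ∈ T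
    · exact ⟨u, hu, nil, cons h p, rfl, by simp⟩
    · obtain ⟨a, ha, q, r, rfl, hq⟩ := ih hv
      refine ⟨a, ha, cons h q, r, rfl, fun z hz hza => ?_⟩
      rcases List.mem_cons.1 (support_cons h q ▸ hz) with rfl | hz
      · exact hu
      · exact hq z hz hza

lemma exists_isSubwalk_interior_notMem (p : G.Walk u v) {T : Set V} (hu : u ∈ T) (hv : v ∈ T)
    (hx : x ∈ p.support) :
    ∃ (a b : V) (q : G.Walk a b), q.IsSubwalk p ∧ a ∈ T ∧ b ∈ T ∧ x ∈ q.support ∧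
      ∀ z ∈ q.support, z ≠ a → z ≠ b → z ∉ T := by
  classical
  obtain ⟨a, ha, q₁, r₁, h₁, hq₁⟩ := (p.takeUntil x hx).reverse.exists_eq_append_of_end_mem hu
  obtain ⟨b, hb, q₂, r₂, h₂, hq₂⟩ := (p.dropUntil x hx).exists_eq_append_of_end_mem hv
  refine ⟨a, b, q₁.reverse.append q₂, ⟨r₁.reverse, r₂, ?_⟩, ha, hb, ?_, fun z hz hza hzb => ?_⟩
  · rw [← p.take_spec hx, ← (p.takeUntil x hx).reverse_reverse, h₁, h₂]
    simp [reverse_append, append_assoc]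
  · exact (mem_support_append_iff _ _).2 (.inr q₂.start_mem_support)
  · rcases (mem_support_append_iff _ _).1 hz with hz | hz
    · exact hq₁ z (by simpa using hz) hza
    · exact hq₂ z hz hzb

def IsInducedCycle (c : G.Walk u u) : Prop :=
  c.IsCycle ∧ ∀ a ∈ c.support, ∀ b ∈ c.support, G.Adj a b → s(a, b) ∈ c.edges

lemma IsInducedPath.isInducedCycle_append {a b : V} {q : G.Walk a b} {r : G.Walk b a}
    (hq : q.IsInducedPath) (hr : r.IsInducedPath) (hq₂ : 2 ≤ q.length)
    (hmeet : ∀ z ∈ q.support, z ∈ r.support → z = a ∨ z = b)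
    (hsep : ∀ c ∈ q.support, c ∉ r.support → ∀ d ∈ r.support, d ∉ q.support → ¬G.Adj c d) :
    (q.append r).IsInducedCycle := by
  refine ⟨hq.1.isCycle_append hr.1 (fun z hzq hzr => ?_) (.inl hq₂), fun c hc d hd hcd => ?_⟩
  · have ha : a ∉ q.support.tail := (List.nodup_cons.1 (q.cons_tail_support ▸ hq.1.support_nodup)).1
    have hb : b ∉ r.support.tail := (List.nodup_cons.1 (r.cons_tail_support ▸ hr.1.support_nodup)).1
    rcases hmeet z (List.mem_of_mem_tail hzq) (List.mem_of_mem_tail hzr) with rfl | rfl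
    · exact ha hzq
    · exact hb hzr
  rw [mem_support_append_iff] at hc hd
  rw [edges_append, List.mem_append]
  by_cases hqq : c ∈ q.support ∧ d ∈ q.support
  · exact .inl (hq.2 c hqq.1 d hqq.2 hcd)
  by_cases hrr : c ∈ r.support ∧ d ∈ r.support
  · exact .inr (hr.2 c hrr.1 d hrr.2 hcd)
  exfalso
  rcases hc with hc | hc <;> rcases hd with hd | hd
  · exact hqq ⟨hc, hd⟩
  · exact hsep c hc (fun h => hrr ⟨h, hd⟩) d hd (fun h => hqq ⟨hc, h⟩) hcd
  · exact hsep d hd (fun h => hrr ⟨hc, h⟩) c hc (fun h => hqq ⟨h, hd⟩) hcd.symm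
  · exact hrr ⟨hc, hd⟩

lemma IsInducedCycle.nonempty_cycleGraph_embedding {c : G.Walk u u} (hc : c.IsInducedCycle) :
    Nonempty (cycleGraph c.length ↪g G) := by
  obtain ⟨m, hm⟩ : ∃ m, c.length = m + 2 := ⟨c.length - 2, by have := hc.1.three_le_length; omega⟩
  have hwrap (i : Fin (m + 2)) : c.getVert ↑(i + 1) = c.getVert (i + 1) := by
    rw [Fin.val_add_one]
    split_ifs with h
    · rw [h, Fin.val_last, getVert_zero, ← hm, getVert_length]
    · rfl
  have hinj : Function.Injective fun i : Fin (m + 2) => c.getVert i := fun i j h =>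
    Fin.ext (hc.1.getVert_injOn' (by simp; omega) (by simp; omega) h)
  rw [hm]
  refine ⟨⟨⟨fun i => c.getVert i, hinj⟩, fun {i j} => ?_⟩⟩
  simp only [Function.Embedding.coeFn_mk, cycleGraph_adj, sub_eq_iff_eq_add']
  constructor
  · intro h
    obtain ⟨k, hk, hkij⟩ :=
      c.mk_mem_edges_iff_exists.1 (hc.2 _ (c.getVert_mem_support i) _ (c.getVert_mem_support j) h)
    let k' : Fin (m + 2) := ⟨k, by omega⟩
    rw [show k = k' from rfl, ← hwrap, Sym2.eq_iff] at hkij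
    rcases hkij with ⟨h₁, h₂⟩ | ⟨h₁, h₂⟩
    · rw [← hinj h₁, ← hinj h₂]; exact .inr rfl
    · rw [← hinj h₁, ← hinj h₂]; exact .inl rfl
  · rintro (rfl | rfl)
    · rw [hwrap]; exact (c.adj_getVert_succ (by omega)).symm
    · rw [hwrap]; exact c.adj_getVert_succ (by omega)

end Walk

lemma exists_isInducedPath_support_subset {S : Set V} (hS : (G.induce S).Connected) {a b : V}
    (ha : a ∈ G.closedNeighborhood S) (hb : b ∈ G.closedNeighborhood S) :
    ∃ r : G.Walk a b, r.IsInducedPath ∧ ∀ z ∈ r.support, z ∈ insert a (insert b S) := by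
  have ha' : a ∈ G.closedNeighborhood (insert b S) :=
    ha.imp Or.inr fun ⟨y, hy, hay⟩ => ⟨y, Or.inr hy, hay⟩
  have hT := induce_insert_connected (induce_insert_connected hS hb) ha'
  obtain ⟨r, hr⟩ := hT.exists_walk_length_eq_dist ⟨a, by simp⟩ ⟨b, by simp⟩
  have hrT : ∀ z ∈ (r.map (Embedding.induce _).toHom).support, z ∈ insert a (insert b S) := by
    intro z hz
    rw [Walk.support_map, List.mem_map] at hz
    obtain ⟨z, -, rfl⟩ := hz
    exact z.2
  exact ⟨_, (Walk.isInducedPath_of_length_eq_dist hr).map _, hrT⟩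

end SimpleGraph

theorem stmt5_general {V : Type*} (G : SimpleGraph V) (hch : G.IsChordal)
    (S : Set V) (hS : (G.induce S).Connected)
    (u v : V) (hu : u ∈ S) (hv : v ∈ S)
    (P : G.Walk u v) (hP : P.IsInducedPath) :
    ∀ x ∈ P.support, x ∈ S ∨ ∃ y ∈ S, G.Adj x y := by
  intro x hx
  by_contra hxN
  change x ∉ G.closedNeighborhood S at hxN
  obtain ⟨a, b, Q, hQP, ha, hb, hxQ, hQN⟩ :=
    P.exists_isSubwalk_interior_notMem (T := G.closedNeighborhood S) (.inl hu) (.inl hv) hx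
  have hQ := hP.of_isSubwalk hQP
  have hQ₂ := Q.two_le_length_of_mem_support hxQ (fun h => hxN (h ▸ ha)) (fun h => hxN (h ▸ hb))
  obtain ⟨hab, hnadj⟩ := hQ.ne_and_not_adj hQ₂
  obtain ⟨R, hR, hRS⟩ := SimpleGraph.exists_isInducedPath_support_subset hS hb ha
  have hR₂ := R.two_le_length_of_ne_of_not_adj hab.symm fun h => hnadj h.symm
  have hRS' (z) (hz : z ∈ R.support) (hza : z ≠ a) (hzb : z ≠ b) : z ∈ S := by
    simpa [hza, hzb] using hRS z hz
  have hC := hQ.isInducedCycle_append hR hQ₂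
    (fun z hzq hzr => by
      by_contra! h
      exact hQN z hzq h.1 h.2 (.inl (hRS' z hzr h.1 h.2)))
    (fun c hcq hcr d hdr hdq hcd => hQN c hcq (fun h => hcr (h ▸ R.end_mem_support))
      (fun h => hcr (h ▸ R.start_mem_support))
      (.inr ⟨d, hRS' d hdr (fun h => hdq (h ▸ Q.start_mem_support))
        (fun h => hdq (h ▸ Q.end_mem_support)), hcd⟩))
  exact hC.nonempty_cycleGraph_embedding.elim
    (hch _ (by rw [SimpleGraph.Walk.length_append]; omega)).false

/-- in a connected chordal graph `G`, if `S` induces a connected subgraph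
and `u, v ∈ S`, then every induced `u`-`v` path of `G` stays inside the closed
neighborhood `N[S]`. -/
theorem stmt5 {V : Type*} (G : SimpleGraph V) (hG : G.Connected) (hch : G.IsChordal)
    (S : Set V) (hS : (G.induce S).Connected)
    (u v : V) (hu : u ∈ S) (hv : v ∈ S)
    (P : G.Walk u v) (hP : P.IsInducedPath) :
    ∀ x ∈ P.support, x ∈ S ∨ ∃ y ∈ S, G.Adj x y :=
  stmt5_general G hch S hS u v hu hv P hP
end

section
/- Let G be a connected chordal graph and let s, t be distinct vertices of G with {s, t} ∉ E(G). If v is an internal vertex of a shortest s-t path in G, then N[v] \ {s, t} is an s-t separator of G, i.e., deleting the vertices of N[v] \ {s, t} from G leaves no path between s and t. -/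
/-- `S ⊆ V \ {a, b}` is an `a`-`b` separator of `G` if deleting `S` from `G` leaves no
path between `a` and `b`, equivalently every `a`-`b` walk of `G` meets `S`. -/
def SimpleGraph.IsSeparator {V : Type*} (G : SimpleGraph V) (a b : V) (S : Set V) : Prop :=
  a ∉ S ∧ b ∉ S ∧ ∀ p : G.Walk a b, ∃ x ∈ p.support, x ∈ S


namespace SimpleGraph.Walk

variable {V : Type*} {G : SimpleGraph V} {u v w : V}

lemma getVert_mem_support' (p : G.Walk u v) (n : ℕ) : p.getVert n ∈ p.support := by
  rcases le_or_gt n p.length with h | h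
  · exact mem_support_iff_exists_getVert.2 ⟨n, rfl, h⟩
  · rw [p.getVert_of_length_le h.le]
    exact p.end_mem_support

lemma IsPath.getVert_inj {p : G.Walk u v} (hp : p.IsPath) {i j : ℕ} (hi : i ≤ p.length)
    (hj : j ≤ p.length) (h : p.getVert i = p.getVert j) : i = j := by
  induction p generalizing i j with
  | nil => simp at hi hj; omega
  | cons hadj q ih =>
    rw [cons_isPath_iff] at hp
    match i, j with
    | 0, 0 => rfl
    | 0, j + 1 =>
      exfalso
      rw [getVert_zero, getVert_cons_succ] at h
      exact hp.2 (h ▸ q.getVert_mem_support' j)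
    | i + 1, 0 =>
      exfalso
      rw [getVert_zero, getVert_cons_succ] at h
      exact hp.2 (h ▸ q.getVert_mem_support' i)
    | i + 1, j + 1 =>
      simp only [length_cons, Nat.add_le_add_iff_right] at hi hj
      rw [getVert_cons_succ, getVert_cons_succ] at h
      exact congrArg (· + 1) (ih hp.1 hi hj h)

/-- Take the first `n` edges of a walk. -/
def myTake : {u v : V} → (p : G.Walk u v) → (n : ℕ) → G.Walk u (p.getVert n)
  | _, _, nil, _ => nil
  | _, _, cons _ _, 0 => nil
  | _, _, cons h q, n + 1 => cons h (myTake q n)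

/-- Drop the first `n` edges of a walk. -/
def myDrop : {u v : V} → (p : G.Walk u v) → (n : ℕ) → G.Walk (p.getVert n) v
  | _, _, nil, _ => nil
  | _, _, cons h q, 0 => cons h q
  | _, _, cons _ q, n + 1 => myDrop q n

lemma length_myTake (p : G.Walk u v) (n : ℕ) : (p.myTake n).length = min n p.length := by
  induction p generalizing n with
  | nil => simp [myTake]
  | cons h q ih =>
    cases n with
    | zero => simp [myTake]; rfl
    | succ n => simp [myTake, ih]

lemma length_myDrop (p : G.Walk u v) (n : ℕ) : (p.myDrop n).length = p.length - n := by
  induction p generalizing n with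
  | nil => simp [myDrop]
  | cons h q ih =>
    cases n with
    | zero => simp [myDrop]; rfl
    | succ n => simp [myDrop, ih]

lemma getVert_myTake (p : G.Walk u v) {n i : ℕ} (hi : i ≤ n) :
    (p.myTake n).getVert i = p.getVert i := by
  induction p generalizing n i with
  | nil => simp [myTake]
  | cons h q ih =>
    cases n with
    | zero => interval_cases i; simp [myTake]; rfl
    | succ n =>
      cases i with
      | zero => simp [myTake]
      | succ i =>
        simp only [myTake, getVert_cons_succ]
        exact ih (n := n) (i := i) (by omega)

lemma getVert_myDrop (p : G.Walk u v) (n i : ℕ) :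
    (p.myDrop n).getVert i = p.getVert (n + i) := by
  induction p generalizing n i with
  | nil => rfl
  | cons h q ih =>
    cases n with
    | zero => simp [myDrop]; rfl
    | succ n =>
      show (myDrop q n).getVert i = (cons h q).getVert (n + 1 + i)
      rw [ih, show n + 1 + i = (n + i) + 1 by omega, getVert_cons_succ]

lemma support_myTake_subset (p : G.Walk u v) (n : ℕ) : (p.myTake n).support ⊆ p.support := by
  intro x hx
  obtain ⟨i, hi, hlen⟩ := mem_support_iff_exists_getVert.1 hx
  rw [length_myTake] at hlen
  rw [getVert_myTake p (show i ≤ n by omega)] at hi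
  exact hi ▸ p.getVert_mem_support' i

lemma support_myDrop_subset (p : G.Walk u v) (n : ℕ) : (p.myDrop n).support ⊆ p.support := by
  intro x hx
  obtain ⟨i, hi, -⟩ := mem_support_iff_exists_getVert.1 hx
  rw [getVert_myDrop] at hi
  exact hi ▸ p.getVert_mem_support' _

lemma mem_support_myTake {p : G.Walk u v} {n : ℕ} {x : V} (hx : x ∈ (p.myTake n).support) :
    ∃ i, i ≤ n ∧ x = p.getVert i := by
  obtain ⟨i, hi, hlen⟩ := mem_support_iff_exists_getVert.1 hx
  rw [length_myTake] at hlen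
  exact ⟨i, by omega, (getVert_myTake p (show i ≤ n by omega) ▸ hi).symm⟩

lemma mem_support_myDrop {p : G.Walk u v} {n : ℕ} {x : V} (hx : x ∈ (p.myDrop n).support) :
    ∃ i, i ≤ p.length - n ∧ x = p.getVert (n + i) := by
  obtain ⟨i, hi, hlen⟩ := mem_support_iff_exists_getVert.1 hx
  rw [length_myDrop] at hlen
  exact ⟨i, hlen, (getVert_myDrop p n i ▸ hi).symm⟩

lemma shortcut (p : G.Walk u w) {i j : ℕ} (hij : i + 2 ≤ j) (hj : j ≤ p.length)
    (hadj : G.Adj (p.getVert i) (p.getVert j)) :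
    ∃ q : G.Walk u w, q.length < p.length ∧ q.support ⊆ p.support := by
  refine ⟨(p.myTake i).append (cons hadj (p.myDrop j)), ?_, ?_⟩
  · rw [length_append, length_cons, length_myTake, length_myDrop]
    omega
  · intro x hx
    rcases (mem_support_append_iff _ _).1 hx with hx | hx
    · exact support_myTake_subset p i hx
    · rw [support_cons] at hx
      rcases List.mem_cons.1 hx with rfl | hx
      · exact p.getVert_mem_support' i
      · exact support_myDrop_subset p j hx

end SimpleGraph.Walk

namespace SimpleGraph
set_option linter.dupNamespace false

lemma fin_sub_eq_one_iff' {n : ℕ} {i j : Fin (n + 2)} :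
    i - j = 1 ↔ ((i : ℕ) = (j : ℕ) + 1 ∨ ((j : ℕ) = n + 1 ∧ (i : ℕ) = 0)) := by
  rw [sub_eq_iff_eq_add, Fin.ext_iff, Fin.val_add, Fin.val_one]
  have hi := i.isLt
  have hj := j.isLt
  rcases Nat.lt_or_ge (j : ℕ) (n + 1) with h | h
  · rw [Nat.mod_eq_of_lt (by omega)]
    omega
  · have hj1 : (j : ℕ) = n + 1 := by omega
    rw [hj1, show 1 + (n + 1) = n + 2 by omega, Nat.mod_self]
    omega

lemma cycleGraph_adj_val' {n : ℕ} {i j : Fin (n + 2)} :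
    (cycleGraph (n + 2)).Adj i j ↔
      (i : ℕ) = (j : ℕ) + 1 ∨ (j : ℕ) = (i : ℕ) + 1 ∨
        ((i : ℕ) = 0 ∧ (j : ℕ) = n + 1) ∨ ((j : ℕ) = 0 ∧ (i : ℕ) = n + 1) := by
  rw [cycleGraph_adj, fin_sub_eq_one_iff', fin_sub_eq_one_iff']
  tauto

end SimpleGraph

lemma SimpleGraph.no_good_walk {V : Type*} {G : SimpleGraph V} (hch : G.IsChordal) {v a b : V}
    (hab : a ≠ b) (hnadj : ¬ G.Adj a b) (hva : G.Adj v a) (hvb : G.Adj v b)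
    (W0 : G.Walk a b)
    (hgood : ∀ x ∈ W0.support, x = a ∨ x = b ∨ (x ≠ v ∧ ¬ G.Adj v x)) : False := by
  classical
  have hex : ∃ n, ∃ W : G.Walk a b,
      (∀ x ∈ W.support, x = a ∨ x = b ∨ (x ≠ v ∧ ¬ G.Adj v x)) ∧ W.length = n :=
    ⟨W0.length, W0, hgood, rfl⟩
  obtain ⟨W, hWgood, hWlen⟩ := Nat.find_spec hex
  set R := W.bypass with hRdef
  have hRpath : R.IsPath := W.bypass_isPath
  have hRgood : ∀ x ∈ R.support, x = a ∨ x = b ∨ (x ≠ v ∧ ¬ G.Adj v x) :=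
    fun x hx => hWgood x (W.support_bypass_subset hx)
  have hRmin : ∀ W' : G.Walk a b,
      (∀ x ∈ W'.support, x = a ∨ x = b ∨ (x ≠ v ∧ ¬ G.Adj v x)) → R.length ≤ W'.length := by
    intro W' hW'
    have h1 : Nat.find hex ≤ W'.length := Nat.find_min' hex ⟨W', hW', rfl⟩
    have h2 : R.length ≤ W.length := W.length_bypass_le
    omega
  have hm2 : 2 ≤ R.length := by
    by_contra h
    push_neg at h
    have h0 : R.length ≠ 0 := fun h0 => hab (R.eq_of_length_eq_zero h0)
    have h1 : R.length = 1 := by omega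
    have h2 := R.adj_getVert_succ (i := 0) (by omega)
    rw [R.getVert_zero] at h2
    have h3 : R.getVert 1 = b := by rw [← h1]; exact R.getVert_length
    exact hnadj (h3 ▸ h2)
  have hchord : ∀ i j, i ≤ R.length → j ≤ R.length → G.Adj (R.getVert i) (R.getVert j) →
      (j = i + 1 ∨ i = j + 1) := by
    intro i j hi hj hadj
    by_contra h
    push_neg at h
    have hne : i ≠ j := by rintro rfl; exact G.loopless.irrefl _ hadj
    rcases Nat.lt_or_ge i j with hlt | hge
    · obtain ⟨q, hql, hqs⟩ := R.shortcut (by omega) hj hadj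
      have := hRmin q (fun x hx => hRgood x (hqs hx))
      omega
    · obtain ⟨q, hql, hqs⟩ := R.shortcut (by omega) hi hadj.symm
      have := hRmin q (fun x hx => hRgood x (hqs hx))
      omega
  have hvnotR : ∀ i, R.getVert i ≠ v := by
    intro i
    rcases hRgood (R.getVert i) (R.getVert_mem_support' i) with h | h | h
    · rw [h]; exact fun hh => (G.ne_of_adj hva) hh.symm
    · rw [h]; exact fun hh => (G.ne_of_adj hvb) hh.symm
    · exact h.1
  have hintadj : ∀ i, 0 < i → i < R.length → ¬ G.Adj v (R.getVert i) := by
    intro i h0 hm hadj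
    rcases hRgood (R.getVert i) (R.getVert_mem_support' i) with h | h | h
    · have h' : R.getVert i = R.getVert 0 := h.trans R.getVert_zero.symm
      have := hRpath.getVert_inj (by omega) (by omega) h'
      omega
    · have h' : R.getVert i = R.getVert R.length := h.trans R.getVert_length.symm
      have := hRpath.getVert_inj (by omega) (le_refl _) h'
      omega
    · exact h.2 hadj
  refine (hch (R.length + 2) (by omega)).elim
    ⟨⟨fun i => if (i : ℕ) = 0 then v else R.getVert ((i : ℕ) - 1), ?_⟩, ?_⟩
  · intro i j hij
    have hi := i.isLt
    have hj := j.isLt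
    simp only at hij
    split_ifs at hij with h1 h2 h2
    · exact Fin.ext (by omega)
    · exact absurd hij.symm (hvnotR _)
    · exact absurd hij (hvnotR _)
    · have := hRpath.getVert_inj (i := (i : ℕ) - 1) (j := (j : ℕ) - 1)
        (by omega) (by omega) hij
      exact Fin.ext (by omega)
  · intro i j
    have hi := i.isLt
    have hj := j.isLt
    show G.Adj (if (i : ℕ) = 0 then v else R.getVert ((i : ℕ) - 1))
      (if (j : ℕ) = 0 then v else R.getVert ((j : ℕ) - 1)) ↔ _
    rw [cycleGraph_adj_val']
    constructor
    · intro hadj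
      split_ifs at hadj with h1 h2 h2
      · exact absurd hadj (G.loopless.irrefl v)
      · have hj1 : (j : ℕ) - 1 = 0 ∨ (j : ℕ) - 1 = R.length := by
          by_contra hc
          push_neg at hc
          exact hintadj _ (by omega) (by omega) hadj
        omega
      · have hi1 : (i : ℕ) - 1 = 0 ∨ (i : ℕ) - 1 = R.length := by
          by_contra hc
          push_neg at hc
          exact hintadj _ (by omega) (by omega) hadj.symm
        omega
      · have := hchord ((i : ℕ) - 1) ((j : ℕ) - 1) (by omega) (by omega) hadj
        omega
    · intro h
      rcases h with h | h | h | h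
      · have hi0 : (i : ℕ) ≠ 0 := by omega
        rw [if_neg hi0]
        by_cases hj0 : (j : ℕ) = 0
        · rw [if_pos hj0]
          rw [show (i : ℕ) - 1 = 0 by omega, R.getVert_zero]
          exact hva.symm
        · rw [if_neg hj0]
          have hadj := R.adj_getVert_succ (i := (j : ℕ) - 1) (by omega)
          rw [show (i : ℕ) - 1 = ((j : ℕ) - 1) + 1 by omega]
          exact hadj.symm
      · have hj0 : (j : ℕ) ≠ 0 := by omega
        rw [if_neg hj0]
        by_cases hi0 : (i : ℕ) = 0
        · rw [if_pos hi0]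
          rw [show (j : ℕ) - 1 = 0 by omega, R.getVert_zero]
          exact hva
        · rw [if_neg hi0]
          have hadj := R.adj_getVert_succ (i := (i : ℕ) - 1) (by omega)
          rw [show (j : ℕ) - 1 = ((i : ℕ) - 1) + 1 by omega]
          exact hadj
      · rw [if_pos h.1, if_neg (show (j : ℕ) ≠ 0 by omega),
          show (j : ℕ) - 1 = R.length by omega, R.getVert_length]
        exact hvb
      · rw [if_pos h.1, if_neg (show (i : ℕ) ≠ 0 by omega),
          show (i : ℕ) - 1 = R.length by omega, R.getVert_length]
        exact hvb.symm

/-- in a connected chordal graph `G`, for distinct non-adjacent vertices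
`s, t`, if `v` is an internal vertex of a shortest `s`-`t` path, then `N[v] \ {s, t}`
is an `s`-`t` separator of `G`. -/
theorem stmt6 {V : Type*} (G : SimpleGraph V) (hG : G.Connected) (hch : G.IsChordal)
    (s t : V) (hst : s ≠ t) (hadj : ¬ G.Adj s t)
    (v : V) (P : G.Walk s t) (hP : P.IsPath) (hlen : P.length = G.dist s t)
    (hv : v ∈ P.support) (hvs : v ≠ s) (hvt : v ≠ t) :
    G.IsSeparator s t ((insert v (G.neighborSet v)) \ {s, t}) := by
  refine ⟨by simp, by simp, ?_⟩
  intro Q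
  by_contra hQc
  push_neg at hQc
  have hQ' : ∀ x ∈ Q.support, (x = v ∨ G.Adj v x) → (x = s ∨ x = t) := by
    intro x hx hmem
    by_contra hc
    push_neg at hc
    refine hQc x hx ⟨?_, ?_⟩
    · rcases hmem with rfl | h
      · exact Set.mem_insert _ _
      · exact Set.mem_insert_of_mem _ h
    · simp only [Set.mem_insert_iff, Set.mem_singleton_iff]
      push_neg
      exact hc
  obtain ⟨k, hkv, hk⟩ := SimpleGraph.Walk.mem_support_iff_exists_getVert.1 hv
  have hk0 : k ≠ 0 := by
    intro h
    rw [h, P.getVert_zero] at hkv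
    exact hvs hkv.symm
  have hkl : k ≠ P.length := by
    intro h
    rw [h, P.getVert_length] at hkv
    exact hvt hkv.symm
  have hPind : ∀ i j, i ≤ P.length → j ≤ P.length → G.Adj (P.getVert i) (P.getVert j) →
      (j = i + 1 ∨ i = j + 1) := by
    intro i j hi hj hadj'
    by_contra h
    push_neg at h
    have hne : i ≠ j := by rintro rfl; exact G.loopless.irrefl _ hadj'
    rcases Nat.lt_or_ge i j with hlt | hge
    · obtain ⟨q, hql, -⟩ := P.shortcut (by omega) hj hadj'
      have := SimpleGraph.dist_le q
      omega
    · obtain ⟨q, hql, -⟩ := P.shortcut (by omega) hi hadj'.symm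
      have := SimpleGraph.dist_le q
      omega
  have hva : G.Adj v (P.getVert (k - 1)) := by
    have h2 := P.adj_getVert_succ (i := k - 1) (by omega)
    rw [show k - 1 + 1 = k by omega, hkv] at h2
    exact h2.symm
  have hvb : G.Adj v (P.getVert (k + 1)) := by
    have h2 := P.adj_getVert_succ (i := k) (by omega)
    rw [hkv] at h2
    exact h2
  have hab : P.getVert (k - 1) ≠ P.getVert (k + 1) := by
    intro h
    have := hP.getVert_inj (show k - 1 ≤ P.length by omega) (by omega) h
    omega
  have hnadj : ¬ G.Adj (P.getVert (k - 1)) (P.getVert (k + 1)) := by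
    intro h
    have := hPind _ _ (by omega) (by omega) h
    omega
  refine SimpleGraph.no_good_walk hch hab hnadj hva hvb
    (((P.myTake (k - 1)).reverse).append (Q.append (P.myDrop (k + 1)).reverse)) ?_
  intro x hx
  rw [SimpleGraph.Walk.mem_support_append_iff, SimpleGraph.Walk.mem_support_append_iff] at hx
  rcases hx with hx | hx | hx
  · rw [SimpleGraph.Walk.support_reverse, List.mem_reverse] at hx
    obtain ⟨i, hi, rfl⟩ := SimpleGraph.Walk.mem_support_myTake hx
    by_cases hieq : i = k - 1
    · left; rw [hieq]
    · right; right
      constructor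
      · intro hh
        have := hP.getVert_inj (show i ≤ P.length by omega) (by omega) (hh.trans hkv.symm)
        omega
      · intro hadj'
        rw [← hkv] at hadj'
        have := hPind k i (by omega) (by omega) hadj'
        omega
  · by_cases hxv : x = v ∨ G.Adj v x
    · have hst' := hQ' x hx hxv
      rcases hxv with rfl | hadj'
      · rcases hst' with h | h
        · exact absurd h hvs
        · exact absurd h hvt
      · rcases hst' with rfl | rfl
        · have h2 : G.Adj (P.getVert k) (P.getVert 0) := by
            rw [hkv, P.getVert_zero]; exact hadj'
          have := hPind k 0 (by omega) (by omega) h2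
          left
          rw [show k - 1 = 0 by omega, P.getVert_zero]
        · have h2 : G.Adj (P.getVert k) (P.getVert P.length) := by
            rw [hkv, P.getVert_length]; exact hadj'
          have := hPind k P.length (by omega) (le_refl _) h2
          right; left
          rw [show k + 1 = P.length by omega, P.getVert_length]
    · push_neg at hxv
      right; right
      exact hxv
  · rw [SimpleGraph.Walk.support_reverse, List.mem_reverse] at hx
    obtain ⟨i, hi, rfl⟩ := SimpleGraph.Walk.mem_support_myDrop hx
    by_cases hieq : i = 0
    · right; left; rw [hieq]
    · right; right
      constructor
      · intro hh
        have := hP.getVert_inj (show k + 1 + i ≤ P.length by omega) (by omega)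
          (hh.trans hkv.symm)
        omega
      · intro hadj'
        rw [← hkv] at hadj'
        have := hPind k (k + 1 + i) (by omega) (by omega) hadj'
        omega
end

section
/- Let G be a connected graph and let s, t be distinct vertices with d = dist_G(s, t). Then for every 0 < i < d, the set D_i is a minimal s-t separator of the induced subgraph G[D]: deleting D_i from G[D] leaves no s-t path, while for every proper subset S ⊊ D_i, the graph G[D] − S still contains an s-t path. -/
/-- `D_i`: the vertices at distance `i` from `s` and distance `d - i` from `t`,
where `d = dist_G(s, t)`. -/
def SimpleGraph.levelSet {V : Type*} (G : SimpleGraph V) (s t : V) (i : ℕ) : Set V :=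
  {v | G.dist s v = i ∧ G.dist v t = G.dist s t - i}

/-- `D = ⋃_{0 ≤ i ≤ d} D_i`. -/
def SimpleGraph.levelUnion {V : Type*} (G : SimpleGraph V) (s t : V) : Set V :=
  ⋃ i ∈ Set.Iic (G.dist s t), G.levelSet s t i

/-!
Along any walk the distance from `s` changes by at most one per edge, so an `s`-`t` walk
inside `G[D]` passes through a vertex of `D` at distance `i` from `s`, and such a vertex
lies in `D_i`. Conversely, for `w ∈ D_i` a shortest `s`-`w` walk followed by a shortest
`w`-`t` walk is a geodesic; all its vertices lie in `D`, and on a geodesic the vertex at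
distance `i` from `s` is unique, so this walk meets `D_i` only in `w`.
-/

namespace SimpleGraph

variable {V : Type*} {G : SimpleGraph V}

lemma Adj.dist_le_dist_add_one {x y : V} (h : G.Adj x y) (u : V) :
    G.dist u y ≤ G.dist u x + 1 := by
  rcases h.diff_dist_adj (u := u) with h | h | h <;> omega

lemma Walk.exists_mem_support_eq_of_le_of_le {f : V → ℕ}
    (hf : ∀ a b, G.Adj a b → f b ≤ f a + 1) {u v : V} (p : G.Walk u v) {i : ℕ}
    (hu : f u ≤ i) (hv : i ≤ f v) : ∃ x ∈ p.support, f x = i := by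
  induction p with
  | nil => exact ⟨_, Walk.start_mem_support _, by omega⟩
  | @cons a b _ hab q ih =>
    by_cases hb : f b ≤ i
    · obtain ⟨x, hx, rfl⟩ := ih hb hv
      exact ⟨x, List.mem_cons_of_mem _ hx, rfl⟩
    · exact ⟨a, List.mem_cons_self, by have := hf a b hab; omega⟩

section Geodesic

variable {u v x : V} {p : G.Walk u v}

lemma Walk.length_takeUntil_dropUntil_eq_dist [DecidableEq V]
    (hp : p.length = G.dist u v) (hx : x ∈ p.support) :
    (p.takeUntil x hx).length = G.dist u x ∧ (p.dropUntil x hx).length = G.dist x v := by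
  have hsplit : (p.takeUntil x hx).length + (p.dropUntil x hx).length = p.length := by
    rw [← length_append, take_spec]
  have := dist_le (p.takeUntil x hx)
  have := dist_le (p.dropUntil x hx)
  have := (p.takeUntil x hx).reachable.dist_triangle_left v
  omega

lemma Walk.dist_add_dist_eq_of_length_eq_dist (hp : p.length = G.dist u v)
    (hx : x ∈ p.support) : G.dist u x + G.dist x v = G.dist u v := by
  classical
  obtain ⟨htake, hdrop⟩ := length_takeUntil_dropUntil_eq_dist hp hx
  rw [← htake, ← hdrop, ← length_append, take_spec, hp]

lemma Walk.getVert_dist_of_length_eq_dist (hp : p.length = G.dist u v)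
    (hx : x ∈ p.support) : p.getVert (G.dist u x) = x := by
  classical
  simpa [(length_takeUntil_dropUntil_eq_dist hp hx).1] using p.getVert_length_takeUntil hx

lemma Walk.eq_of_dist_eq_of_length_eq_dist {y : V} (hp : p.length = G.dist u v)
    (hx : x ∈ p.support) (hy : y ∈ p.support) (hxy : G.dist u x = G.dist u y) : x = y := by
  rw [← p.getVert_dist_of_length_eq_dist hp hx, ← p.getVert_dist_of_length_eq_dist hp hy, hxy]

lemma exists_walk_length_eq_dist_mem_support {w : V} (hsw : G.Reachable u w)
    (hwv : G.Reachable w v) (h : G.dist u w + G.dist w v = G.dist u v) :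
    ∃ p : G.Walk u v, p.length = G.dist u v ∧ w ∈ p.support := by
  obtain ⟨p, hp⟩ := hsw.exists_walk_length_eq_dist
  obtain ⟨q, hq⟩ := hwv.exists_walk_length_eq_dist
  exact ⟨p.append q, by rw [Walk.length_append, hp, hq, h],
    (p.mem_support_append_iff q).2 (.inl p.end_mem_support)⟩

end Geodesic

section LevelSets

variable {s t x : V}

lemma mem_levelUnion_iff :
    x ∈ G.levelUnion s t ↔ x ∈ G.levelSet s t (G.dist s x) ∧ G.dist s x ≤ G.dist s t := by
  simp only [levelUnion, Set.mem_iUnion₂, Set.mem_Iic]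
  constructor
  · rintro ⟨j, hj, hx⟩
    obtain rfl : G.dist s x = j := hx.1
    exact ⟨hx, hj⟩
  · exact fun ⟨hx, hle⟩ ↦ ⟨_, hle, hx⟩

lemma start_mem_levelUnion : s ∈ G.levelUnion s t :=
  mem_levelUnion_iff.2 ⟨⟨rfl, by simp⟩, by simp⟩

lemma end_mem_levelUnion : t ∈ G.levelUnion s t :=
  mem_levelUnion_iff.2 ⟨⟨rfl, by simp⟩, le_rfl⟩

lemma Walk.mem_levelUnion_of_length_eq_dist {p : G.Walk s t} (hp : p.length = G.dist s t)
    (hx : x ∈ p.support) : x ∈ G.levelUnion s t := by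
  have := p.dist_add_dist_eq_of_length_eq_dist hp hx
  exact mem_levelUnion_iff.2 ⟨⟨rfl, by omega⟩, by omega⟩

variable {i : ℕ}

lemma isSeparator_induce_levelUnion_levelSet (hi0 : 0 < i) (hid : i < G.dist s t) :
    (G.induce (G.levelUnion s t)).IsSeparator ⟨s, start_mem_levelUnion⟩
      ⟨t, end_mem_levelUnion⟩ {x | (x : V) ∈ G.levelSet s t i} := by
  refine ⟨fun h ↦ hi0.ne (by simpa using h.1),
    fun h ↦ (Nat.sub_pos_of_lt hid).ne (by simpa using h.2), fun p ↦ ?_⟩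
  obtain ⟨x, hx, hxi⟩ := p.exists_mem_support_eq_of_le_of_le
    (f := fun x : G.levelUnion s t ↦ G.dist s x)
    (fun _ _ hab ↦ Adj.dist_le_dist_add_one (induce_adj.1 hab) s) (by simp) hid.le
  exact ⟨x, hx, hxi ▸ (mem_levelUnion_iff.1 x.2).1⟩

lemma exists_walk_induce_levelUnion_meeting_levelSet_only_at {w : V} (hi0 : 0 < i)
    (hid : i < G.dist s t) (hw : w ∈ G.levelSet s t i) :
    ∃ p : (G.induce (G.levelUnion s t)).Walk ⟨s, start_mem_levelUnion⟩ ⟨t, end_mem_levelUnion⟩,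
      ∀ x ∈ p.support, (x : V) ∈ G.levelSet s t i → (x : V) = w := by
  obtain ⟨hsw, hwt⟩ := hw
  obtain ⟨p, hp, hwp⟩ := exists_walk_length_eq_dist_mem_support
    (Reachable.of_dist_ne_zero (by omega)) (Reachable.of_dist_ne_zero (by omega))
    (show G.dist s w + G.dist w t = G.dist s t by omega)
  refine ⟨p.induce _ fun x hx ↦ p.mem_levelUnion_of_length_eq_dist hp hx, fun x hx hxi ↦ ?_⟩
  rw [Walk.support_induce, List.mem_attachWith] at hx
  exact p.eq_of_dist_eq_of_length_eq_dist hp hx hwp (hxi.1.trans hsw.symm)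

end LevelSets

end SimpleGraph

/-- for a connected graph `G` and distinct vertices `s, t` with
`d = dist_G(s, t)`, for every `0 < i < d` the set `D_i` is a minimal `s`-`t` separator
of the induced subgraph `G[D]`: deleting `D_i` from `G[D]` leaves no `s`-`t` path, while
for every proper subset `S ⊊ D_i` the graph `G[D] − S` still contains an `s`-`t` path. -/
theorem stmt7 {V : Type*} (G : SimpleGraph V) (s t : V)
    (i : ℕ) (hi0 : 0 < i) (hid : i < G.dist s t) :
    (G.induce (G.levelUnion s t)).IsSeparator
      ⟨s, Set.mem_biUnion (Nat.zero_le _)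
        (by simp [SimpleGraph.levelSet, SimpleGraph.dist_self])⟩
      ⟨t, Set.mem_biUnion (le_refl (G.dist s t))
        (by simp [SimpleGraph.levelSet, SimpleGraph.dist_self])⟩
      {x | (x : V) ∈ G.levelSet s t i} ∧
    ∀ S : Set ↥(G.levelUnion s t), S ⊂ {x | (x : V) ∈ G.levelSet s t i} →
      ∃ p : (G.induce (G.levelUnion s t)).Walk
        ⟨s, Set.mem_biUnion (Nat.zero_le _)
          (by simp [SimpleGraph.levelSet, SimpleGraph.dist_self])⟩
        ⟨t, Set.mem_biUnion (le_refl (G.dist s t))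
          (by simp [SimpleGraph.levelSet, SimpleGraph.dist_self])⟩,
        ∀ x ∈ p.support, x ∉ S := by
  refine ⟨SimpleGraph.isSeparator_induce_levelUnion_levelSet hi0 hid, fun S hS ↦ ?_⟩
  obtain ⟨w, hwi, hwS⟩ := Set.exists_of_ssubset hS
  obtain ⟨p, hp⟩ := SimpleGraph.exists_walk_induce_levelUnion_meeting_levelSet_only_at hi0 hid hwi
  refine ⟨p, fun x hx hxS ↦ hwS ?_⟩
  rwa [← Subtype.ext (hp x hx (hS.subset hxS))]
end

section
/- Let G be a connected chordal graph and let s, t be distinct vertices with d = dist_G(s, t). Then for every 0 ≤ i ≤ d, the set D_i is a clique of G, i.e., any two distinct vertices of D_i are adjacent in G. -/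
/-!
Concatenating shortest paths `s → u → t` and `s → v → t` for `u, v ∈ D_i` gives two paths `f`, `g`
along which the distance from `s` grows by one at each step, with `f 0 = g 0 = s` and
`f d = g d = t`. Together they form a closed walk `f 0, …, f d, g d, …, g 0`. Since the distance
from `s` changes by at most one along an edge, a chord of it joins `f p` to `g q` with
`|p - q| ≤ 1`. A chord `f k — g k` splits this "ladder" into two shorter ones, and a diagonal
chord `f k — g (k + 1)` splits it into two ladders sharing the vertex `g (k + 1)`, whose closed
walks are again shorter. By induction on the length of the closed walk, chordality (which
excludes a chordless one of length at least 4) forces every pair `f m`, `g m` to be equal or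
adjacent; for `m = i` this is `u = v` or `u ∼ v`.
-/

namespace SimpleGraph

variable {V : Type*} {G : SimpleGraph V}

theorem cycleGraph_adj_iff_val {N : ℕ} {u v : Fin (N + 2)} :
    (cycleGraph (N + 2)).Adj u v ↔ u.val = v.val + 1 ∨ v.val = u.val + 1 ∨
      (u.val = 0 ∧ v.val = N + 1) ∨ (v.val = 0 ∧ u.val = N + 1) := by
  simp only [cycleGraph_adj, sub_eq_iff_eq_add', Fin.ext_iff, Fin.val_add_one, Fin.val_last]
  split_ifs <;> omega

theorem IsChordal.false_of_chordless_cycle (hG : G.IsChordal) {n : ℕ} (hn : 4 ≤ n) (F : ℕ → V)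
    (hne : ∀ r r', r < r' → r' < n → F r ≠ F r')
    (hsucc : ∀ r, r + 1 < n → G.Adj (F r) (F (r + 1)))
    (hwrap : G.Adj (F (n - 1)) (F 0))
    (hchord : ∀ r r', r + 1 < r' → r' < n → G.Adj (F r) (F r') → r = 0 ∧ r' = n - 1) :
    False := by
  obtain ⟨N, rfl⟩ : ∃ N, n = N + 2 := ⟨n - 2, by omega⟩
  have hadj : ∀ r r', r < r' → r' < N + 2 →
      (G.Adj (F r) (F r') ↔ r' = r + 1 ∨ (r = 0 ∧ r' = N + 1)) := by
    intro r r' hr hr'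
    refine ⟨fun h => ?_, ?_⟩
    · by_cases hrr : r' = r + 1
      · exact Or.inl hrr
      · exact Or.inr (hchord r r' (by omega) hr' h)
    · rintro (rfl | ⟨rfl, rfl⟩)
      · exact hsucc r hr'
      · exact hwrap.symm
  refine (hG _ hn).false ⟨⟨fun k => F k, ?_⟩, fun {k k'} => ?_⟩
  · intro k k' hk
    by_contra hkk
    rcases Nat.lt_or_gt_of_ne (Fin.val_ne_of_ne hkk) with h | h
    · exact hne _ _ h k'.isLt hk
    · exact hne _ _ h k.isLt hk.symm
  · show G.Adj (F k) (F k') ↔ _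
    rw [cycleGraph_adj_iff_val]
    rcases Nat.lt_trichotomy k.val k'.val with h | h | h
    · rw [hadj _ _ h k'.isLt]; omega
    · rw [Fin.ext h]; simp only [G.irrefl, false_iff]; omega
    · rw [G.adj_comm, hadj _ _ h k.isLt]; omega

section Ladder

variable {ℓ : V → ℕ} {f g : ℕ → V} {i j : ℕ}

def IsAscendingOn (G : SimpleGraph V) (ℓ : V → ℕ) (f : ℕ → V) (i j : ℕ) : Prop :=
  ∀ m, i ≤ m → m < j → G.Adj (f m) (f (m + 1)) ∧ ℓ (f (m + 1)) = ℓ (f m) + 1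

namespace IsAscendingOn

theorem level (hf : IsAscendingOn G ℓ f i j) {m : ℕ} (him : i ≤ m) (hmj : m ≤ j) :
    ℓ (f m) = ℓ (f i) + (m - i) := by
  obtain ⟨k, rfl⟩ := Nat.exists_eq_add_of_le him
  induction k with
  | zero => simp
  | succ k ih =>
    rw [← add_assoc, (hf (i + k) (by omega) (by omega)).2, ih (by omega) (by omega)]
    omega

theorem mono (hf : IsAscendingOn G ℓ f i j) {i' j' : ℕ} (hi : i ≤ i') (hj : j' ≤ j) :
    IsAscendingOn G ℓ f i' j' :=
  fun m hm hm' => hf m (hi.trans hm) (hm'.trans_le hj)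

theorem eq_of_apply_eq (hf : IsAscendingOn G ℓ f i j) {p q : ℕ} (hip : i ≤ p) (hpj : p ≤ j)
    (hiq : i ≤ q) (hqj : q ≤ j) (h : f p = f q) : p = q := by
  have := hf.level hip hpj
  have := hf.level hiq hqj
  rw [h] at *
  omega

theorem adj_iff (hf : IsAscendingOn G ℓ f i j) (hℓ : ∀ x y, G.Adj x y → ℓ x ≤ ℓ y + 1)
    {p q : ℕ} (hip : i ≤ p) (hpj : p ≤ j) (hiq : i ≤ q) (hqj : q ≤ j) :
    G.Adj (f p) (f q) ↔ q = p + 1 ∨ p = q + 1 := by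
  refine ⟨fun h => ?_, ?_⟩
  · have := hf.level hip hpj
    have := hf.level hiq hqj
    have := hℓ _ _ h
    have := hℓ _ _ h.symm
    have : p ≠ q := fun hpq => G.irrefl (hpq ▸ h)
    omega
  · rintro (rfl | rfl)
    · exact (hf p hip (by omega)).1
    · exact (hf q hiq (by omega)).1.symm

theorem update_succ (hf : IsAscendingOn G ℓ f i j) {y : V} (hy : G.Adj (f j) y)
    (hℓy : ℓ y = ℓ (f j) + 1) : IsAscendingOn G ℓ (Function.update f (j + 1) y) i (j + 1) := by
  intro m him hmj
  rw [Function.update_of_ne (by omega)]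
  rcases Nat.lt_or_ge m j with hm | hm
  · rw [Function.update_of_ne (by omega)]
    exact hf m him hm
  · obtain rfl : m = j := by omega
    rw [Function.update_self]
    exact ⟨hy, hℓy⟩

theorem update_pred (hf : IsAscendingOn G ℓ f (i + 1) j) {y : V} (hy : G.Adj y (f (i + 1)))
    (hℓy : ℓ (f (i + 1)) = ℓ y + 1) : IsAscendingOn G ℓ (Function.update f i y) i j := by
  intro m him hmj
  rw [Function.update_of_ne (by omega : m + 1 ≠ i)]
  rcases Nat.lt_or_ge i m with hm | hm
  · rw [Function.update_of_ne (by omega)]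
    exact hf m hm hmj
  · obtain rfl : m = i := by omega
    rw [Function.update_self]
    exact ⟨hy, hℓy⟩

end IsAscendingOn

/-- `a` is the number of edges the rung `x, y` contributes to the closed walk of a ladder. -/
def Rung (G : SimpleGraph V) (a : ℕ) (x y : V) : Prop :=
  (a = 0 ∧ x = y) ∨ (a = 1 ∧ G.Adj x y)

theorem Rung.le_one {a : ℕ} {x y : V} (h : G.Rung a x y) : a ≤ 1 := by
  rcases h with ⟨rfl, -⟩ | ⟨rfl, -⟩ <;> omega

theorem Rung.symm {a : ℕ} {x y : V} (h : G.Rung a x y) : G.Rung a y x :=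
  h.imp (And.imp_right Eq.symm) (And.imp_right Adj.symm)

theorem Rung.eq_zero_iff {a : ℕ} {x y : V} (h : G.Rung a x y) : a = 0 ↔ x = y := by
  rcases h with ⟨rfl, h⟩ | ⟨rfl, h⟩
  · simp [h]
  · simp [h.ne]

theorem Rung.eq_one_iff {a : ℕ} {x y : V} (h : G.Rung a x y) : a = 1 ↔ G.Adj x y := by
  rcases h with ⟨rfl, rfl⟩ | ⟨rfl, h⟩
  · simp
  · simp [h]

theorem Rung.eq_or_adj {a : ℕ} {x y : V} (h : G.Rung a x y) : x = y ∨ G.Adj x y :=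
  h.imp And.right And.right

/-- The closed walk `f i, …, f j, g j, …, g i` of a ladder has length `2 * (j - i) + a + b`. -/
structure IsLadder (G : SimpleGraph V) (ℓ : V → ℕ) (f g : ℕ → V) (i j a b : ℕ) : Prop where
  left : IsAscendingOn G ℓ f i j
  right : IsAscendingOn G ℓ g i j
  level_start : ℓ (f i) = ℓ (g i)
  start : G.Rung a (f i) (g i)
  finish : G.Rung b (f j) (g j)

/-- The closed walk of a ladder, read on `[0, 2 * (j - i) + a + b)`: it skips `g j` when `b = 0`
(then `g j = f j`) and stops before `g i` when `a = 0`. -/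
def ladderCycle (f g : ℕ → V) (i j b : ℕ) (r : ℕ) : V :=
  if r ≤ j - i then f (i + r) else g (i + 2 * (j - i) + b - r)

theorem ladderCycle_of_le {b r : ℕ} (hr : r ≤ j - i) : ladderCycle f g i j b r = f (i + r) :=
  if_pos hr

theorem ladderCycle_of_lt {b r : ℕ} (hr : j - i < r) :
    ladderCycle f g i j b r = g (i + 2 * (j - i) + b - r) :=
  if_neg (by omega)

namespace IsLadder

variable {a b : ℕ}

theorem swap (h : IsLadder G ℓ f g i j a b) : IsLadder G ℓ g f i j a b :=
  ⟨h.right, h.left, h.level_start.symm, h.start.symm, h.finish.symm⟩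

theorem level_eq (h : IsLadder G ℓ f g i j a b) {m : ℕ} (him : i ≤ m) (hmj : m ≤ j) :
    ℓ (f m) = ℓ (g m) := by
  rw [h.left.level him hmj, h.right.level him hmj, h.level_start]

theorem split (h : IsLadder G ℓ f g i j a b) {k c : ℕ} (hik : i ≤ k) (hkj : k ≤ j)
    (hk : G.Rung c (f k) (g k)) : IsLadder G ℓ f g i k a c ∧ IsLadder G ℓ f g k j c b :=
  ⟨⟨h.left.mono le_rfl hkj, h.right.mono le_rfl hkj, h.level_start, h.start, hk⟩,
    ⟨h.left.mono hik le_rfl, h.right.mono hik le_rfl, h.level_eq hik hkj, hk, h.finish⟩⟩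

theorem split_diagonal (h : IsLadder G ℓ f g i j a b) {k : ℕ} (hik : i ≤ k) (hkj : k < j)
    (hk : G.Adj (f k) (g (k + 1))) :
    IsLadder G ℓ (Function.update f (k + 1) (g (k + 1))) g i (k + 1) a 0 ∧
      IsLadder G ℓ f (Function.update g k (f k)) k j 0 b := by
  have hℓ : ℓ (g (k + 1)) = ℓ (f k) + 1 := by
    rw [← h.level_eq (by omega) hkj, h.left.level hik hkj.le, h.left.level (by omega) hkj]
    omega
  refine ⟨⟨(h.left.mono le_rfl hkj.le).update_succ hk hℓ, h.right.mono le_rfl hkj, ?_, ?_,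
      Or.inl ⟨rfl, Function.update_self ..⟩⟩,
    ⟨h.left.mono hik le_rfl, (h.right.mono (by omega) le_rfl).update_pred hk hℓ, ?_,
      Or.inl ⟨rfl, (Function.update_self k (f k) g).symm⟩, ?_⟩⟩
  · rw [Function.update_of_ne (by omega)]; exact h.level_start
  · rw [Function.update_of_ne (by omega)]; exact h.start
  · rw [Function.update_self]
  · rw [Function.update_of_ne (by omega)]; exact h.finish

theorem apply_eq_apply_cases (h : IsLadder G ℓ f g i j a b)
    (hrung : ∀ k c, i < k → k < j → ¬G.Rung c (f k) (g k)) {p q : ℕ} (hip : i ≤ p) (hpj : p ≤ j)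
    (hiq : i ≤ q) (hqj : q ≤ j) (hpq : f p = g q) :
    p = i ∧ q = i ∧ a = 0 ∨ p = j ∧ q = j ∧ b = 0 := by
  have := h.left.level hip hpj
  have := h.right.level hiq hqj
  obtain rfl : p = q := by rw [hpq, h.level_start] at *; omega
  rcases eq_or_ne p i with rfl | hi
  · exact Or.inl ⟨rfl, rfl, h.start.eq_zero_iff.mpr hpq⟩
  rcases eq_or_ne p j with rfl | hj
  · exact Or.inr ⟨rfl, rfl, h.finish.eq_zero_iff.mpr hpq⟩
  exact (hrung p 0 (by omega) (by omega) (Or.inl ⟨rfl, hpq⟩)).elim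

theorem adj_apply_cases (h : IsLadder G ℓ f g i j a b) (hℓ : ∀ x y, G.Adj x y → ℓ x ≤ ℓ y + 1)
    (hrung : ∀ k c, i < k → k < j → ¬G.Rung c (f k) (g k))
    (hdiag : ∀ k, i ≤ k → k < j → G.Adj (f k) (g (k + 1)) → k = i ∧ a = 0 ∨ k + 1 = j ∧ b = 0)
    (hdiag' : ∀ k, i ≤ k → k < j → G.Adj (g k) (f (k + 1)) → k = i ∧ a = 0 ∨ k + 1 = j ∧ b = 0)
    {p q : ℕ} (hip : i ≤ p) (hpj : p ≤ j) (hiq : i ≤ q) (hqj : q ≤ j) (hpq : G.Adj (f p) (g q)) :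
    p = q ∧ (p = i ∧ a = 1 ∨ p = j ∧ b = 1) ∨ q = p + 1 ∧ (p = i ∧ a = 0 ∨ q = j ∧ b = 0) ∨
      p = q + 1 ∧ (q = i ∧ a = 0 ∨ p = j ∧ b = 0) := by
  have := h.left.level hip hpj
  have := h.right.level hiq hqj
  have := hℓ _ _ hpq
  have := hℓ _ _ hpq.symm
  rw [h.level_start] at *
  rcases (by omega : p = q ∨ q = p + 1 ∨ p = q + 1) with rfl | rfl | rfl
  · left
    rcases eq_or_ne p i with rfl | hi
    · exact ⟨rfl, Or.inl ⟨rfl, h.start.eq_one_iff.mpr hpq⟩⟩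
    rcases eq_or_ne p j with rfl | hj
    · exact ⟨rfl, Or.inr ⟨rfl, h.finish.eq_one_iff.mpr hpq⟩⟩
    exact (hrung p 1 (by omega) (by omega) (Or.inr ⟨rfl, hpq⟩)).elim
  · exact Or.inr (Or.inl ⟨rfl, hdiag p hip (by omega) hpq⟩)
  · exact Or.inr (Or.inr ⟨rfl, hdiag' q hiq (by omega) hpq.symm⟩)

theorem adj_ladderCycle_succ (h : IsLadder G ℓ f g i j a b) (hij : i ≤ j) {r : ℕ}
    (hr : r + 1 < 2 * (j - i) + a + b) :
    G.Adj (ladderCycle f g i j b r) (ladderCycle f g i j b (r + 1)) := by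
  have ha := h.start.le_one
  rcases Nat.lt_trichotomy r (j - i) with hrL | rfl | hrL
  · rw [ladderCycle_of_le hrL.le, ladderCycle_of_le hrL]
    exact (h.left (i + r) (by omega) (by omega)).1
  · rw [ladderCycle_of_le le_rfl, ladderCycle_of_lt (by omega), (by omega : i + (j - i) = j)]
    rcases h.finish with ⟨rfl, hfg⟩ | ⟨rfl, hfg⟩
    · rw [hfg, (by omega : i + 2 * (j - i) + 0 - (j - i + 1) = j - 1)]
      have := (h.right (j - 1) (by omega) (by omega)).1.symm
      rwa [Nat.sub_add_cancel (by omega)] at this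
    · rwa [(by omega : i + 2 * (j - i) + 1 - (j - i + 1) = j)]
  · have hb := h.finish.le_one
    rw [ladderCycle_of_lt hrL, ladderCycle_of_lt (by omega)]
    have := (h.right (i + 2 * (j - i) + b - (r + 1)) (by omega) (by omega)).1.symm
    rwa [(by omega : i + 2 * (j - i) + b - (r + 1) + 1 = i + 2 * (j - i) + b - r)] at this

theorem adj_ladderCycle_wrap (h : IsLadder G ℓ f g i j a b) (hij : i + 2 ≤ j) :
    G.Adj (ladderCycle f g i j b (2 * (j - i) + a + b - 1)) (ladderCycle f g i j b 0) := by
  rw [ladderCycle_of_lt (by omega), ladderCycle_of_le (by omega), add_zero]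
  rcases h.start with ⟨rfl, hfg⟩ | ⟨rfl, hfg⟩
  · rw [hfg, (by omega : i + 2 * (j - i) + b - (2 * (j - i) + 0 + b - 1) = i + 1)]
    exact (h.right i le_rfl (by omega)).1.symm
  · rw [(by omega : i + 2 * (j - i) + b - (2 * (j - i) + 1 + b - 1) = i)]
    exact hfg.symm

theorem false_of_chordless (hG : G.IsChordal) (hℓ : ∀ x y, G.Adj x y → ℓ x ≤ ℓ y + 1)
    (h : IsLadder G ℓ f g i j a b) (hij : i + 2 ≤ j)
    (hrung : ∀ k c, i < k → k < j → ¬G.Rung c (f k) (g k))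
    (hdiag : ∀ k, i ≤ k → k < j → G.Adj (f k) (g (k + 1)) → k = i ∧ a = 0 ∨ k + 1 = j ∧ b = 0)
    (hdiag' : ∀ k, i ≤ k → k < j → G.Adj (g k) (f (k + 1)) → k = i ∧ a = 0 ∨ k + 1 = j ∧ b = 0) :
    False := by
  have ha := h.start.le_one
  have hb := h.finish.le_one
  refine hG.false_of_chordless_cycle (by omega) (ladderCycle f g i j b) ?_
    (fun _ => h.adj_ladderCycle_succ (by omega)) (h.adj_ladderCycle_wrap hij) ?_
  · intro r r' hrr' hr' hF
    rcases Nat.lt_or_ge (j - i) r' with hr'L | hr'L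
    · rw [ladderCycle_of_lt hr'L] at hF
      rcases Nat.lt_or_ge (j - i) r with hrL | hrL
      · rw [ladderCycle_of_lt hrL] at hF
        have := h.right.eq_of_apply_eq (by omega) (by omega) (by omega) (by omega) hF
        omega
      · rw [ladderCycle_of_le hrL] at hF
        have := h.apply_eq_apply_cases hrung (by omega) (by omega) (by omega) (by omega) hF
        omega
    · rw [ladderCycle_of_le (by omega), ladderCycle_of_le hr'L] at hF
      have := h.left.eq_of_apply_eq (by omega) (by omega) (by omega) (by omega) hF
      omega
  · intro r r' hrr' hr' hF
    rcases Nat.lt_or_ge (j - i) r' with hr'L | hr'L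
    · rw [ladderCycle_of_lt hr'L] at hF
      rcases Nat.lt_or_ge (j - i) r with hrL | hrL
      · rw [ladderCycle_of_lt hrL, h.right.adj_iff hℓ (by omega) (by omega) (by omega) (by omega)]
          at hF
        omega
      · rw [ladderCycle_of_le hrL] at hF
        have :=
          h.adj_apply_cases hℓ hrung hdiag hdiag' (by omega) (by omega) (by omega) (by omega) hF
        omega
    · rw [ladderCycle_of_le (by omega), ladderCycle_of_le hr'L,
        h.left.adj_iff hℓ (by omega) (by omega) (by omega) (by omega)] at hF
      omega

theorem eq_or_adj (hG : G.IsChordal) (hℓ : ∀ x y, G.Adj x y → ℓ x ≤ ℓ y + 1)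
    (h : IsLadder G ℓ f g i j a b) {m : ℕ} (him : i ≤ m) (hmj : m ≤ j) :
    f m = g m ∨ G.Adj (f m) (g m) := by
  induction hn : 2 * (j - i) + a + b using Nat.strong_induction_on
    generalizing f g i j a b m with
  | _ n ih =>
  have ha := h.start.le_one
  have hb := h.finish.le_one
  rcases eq_or_ne m i with rfl | hmi
  · exact h.start.eq_or_adj
  rcases eq_or_ne m j with rfl | hmj'
  · exact h.finish.eq_or_adj
  by_cases hr : ∃ k c, i < k ∧ k < j ∧ G.Rung c (f k) (g k)
  · obtain ⟨k, c, hik, hkj, hk⟩ := hr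
    obtain ⟨h₁, h₂⟩ := h.split hik.le hkj.le hk
    have hc := hk.le_one
    rcases le_total m k with hmk | hkm
    · exact ih _ (by omega) h₁ him hmk rfl
    · exact ih _ (by omega) h₂ hkm hmj rfl
  have diag : ∀ {f g : ℕ → V}, IsLadder G ℓ f g i j a b → ∀ k, i ≤ k → k < j →
      G.Adj (f k) (g (k + 1)) → ¬(k = i ∧ a = 0 ∨ k + 1 = j ∧ b = 0) →
      f m = g m ∨ G.Adj (f m) (g m) := by
    intro f g h k hik hkj hk hend
    obtain ⟨h₁, h₂⟩ := h.split_diagonal hik hkj hk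
    rcases le_or_gt m k with hmk | hkm
    · have := ih _ (by omega) h₁ him (by omega) rfl
      rwa [Function.update_of_ne (by omega)] at this
    · have := ih _ (by omega) h₂ (by omega) hmj rfl
      rwa [Function.update_of_ne (by omega)] at this
  by_cases hd : ∃ k, i ≤ k ∧ k < j ∧ G.Adj (f k) (g (k + 1)) ∧
      ¬(k = i ∧ a = 0 ∨ k + 1 = j ∧ b = 0)
  · obtain ⟨k, hik, hkj, hk, hend⟩ := hd
    exact diag h k hik hkj hk hend
  by_cases hd' : ∃ k, i ≤ k ∧ k < j ∧ G.Adj (g k) (f (k + 1)) ∧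
      ¬(k = i ∧ a = 0 ∨ k + 1 = j ∧ b = 0)
  · obtain ⟨k, hik, hkj, hk, hend⟩ := hd'
    exact (diag h.swap k hik hkj hk hend).imp Eq.symm Adj.symm
  push Not at hr hd hd'
  exact (h.false_of_chordless hG hℓ (by omega) hr hd hd').elim

end IsLadder

end Ladder

theorem dist_le_dist_add_one_of_adj (s : V) {x y : V} (h : G.Adj x y) :
    G.dist s x ≤ G.dist s y + 1 := by
  rcases h.symm.diff_dist_adj (u := s) with h | h | h <;> omega

theorem Connected.dist_getVert_of_length_eq_dist (hG : G.Connected) {x y : V} {w : G.Walk x y}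
    (hw : w.length = G.dist x y) {m : ℕ} (hm : m ≤ w.length) : G.dist x (w.getVert m) = m := by
  have h₁ : G.dist x (w.getVert m) ≤ m := by
    simpa [Walk.take_length, hm] using dist_le (w.take m)
  have h₂ : G.dist (w.getVert m) y ≤ w.length - m := by simpa using dist_le (w.drop m)
  have h₃ : G.dist x y ≤ G.dist x (w.getVert m) + G.dist (w.getVert m) y := hG.dist_triangle
  omega

theorem Connected.isAscendingOn_getVert (hG : G.Connected) {x y : V} {w : G.Walk x y}
    (hw : w.length = G.dist x y) : IsAscendingOn G (G.dist x) w.getVert 0 w.length :=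
  fun m _ hm => ⟨w.adj_getVert_succ hm, by
    rw [hG.dist_getVert_of_length_eq_dist hw hm, hG.dist_getVert_of_length_eq_dist hw hm.le]⟩

theorem Connected.exists_isAscendingOn_of_mem_levelSet (hG : G.Connected) {s t u : V} {i : ℕ}
    (hi : i ≤ G.dist s t) (hu : u ∈ G.levelSet s t i) :
    ∃ f : ℕ → V, IsAscendingOn G (G.dist s) f 0 (G.dist s t) ∧
      f 0 = s ∧ f i = u ∧ f (G.dist s t) = t := by
  obtain ⟨p, hp⟩ := hG.exists_walk_length_eq_dist s u
  obtain ⟨q, hq⟩ := hG.exists_walk_length_eq_dist u t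
  rw [hu.1] at hp
  rw [hu.2] at hq
  have hw : (p.append q).length = G.dist s t := by rw [Walk.length_append]; omega
  refine ⟨(p.append q).getVert, hw ▸ hG.isAscendingOn_getVert hw, Walk.getVert_zero _, ?_,
    hw ▸ Walk.getVert_length _⟩
  rw [Walk.getVert_append', if_pos hp.ge, ← hp, Walk.getVert_length]

end SimpleGraph

theorem stmt8_general {V : Type*} (G : SimpleGraph V) (hG : G.Connected) (hch : G.IsChordal)
    (s t : V) :
    ∀ i ≤ G.dist s t, G.IsClique (G.levelSet s t i) := by
  intro i hi u hu v hv huv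
  obtain ⟨f, hf, hf0, hfi, hfd⟩ := hG.exists_isAscendingOn_of_mem_levelSet hi hu
  obtain ⟨g, hg, hg0, hgi, hgd⟩ := hG.exists_isAscendingOn_of_mem_levelSet hi hv
  have hL : SimpleGraph.IsLadder G (G.dist s) f g 0 (G.dist s t) 0 0 :=
    ⟨hf, hg, by rw [hf0, hg0], Or.inl ⟨rfl, hf0.trans hg0.symm⟩, Or.inl ⟨rfl, hfd.trans hgd.symm⟩⟩
  have := hL.eq_or_adj hch (fun _ _ => SimpleGraph.dist_le_dist_add_one_of_adj s) (Nat.zero_le i) hi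
  rw [hfi, hgi] at this
  exact this.resolve_left huv

/-- in a connected chordal graph `G`, for distinct vertices `s, t` with
`d = dist_G(s, t)`, each set `D_i` (`0 ≤ i ≤ d`) is a clique. -/
theorem stmt8 {V : Type*} (G : SimpleGraph V) (hG : G.Connected) (hch : G.IsChordal)
    (s t : V) (hst : s ≠ t) :
    ∀ i ≤ G.dist s t, G.IsClique (G.levelSet s t i) :=
  stmt8_general G hG hch s t
end

section
/- Let G be a connected chordal graph and let s, t be distinct vertices with d = dist_G(s, t). Suppose |D_i| > 1 for some 0 ≤ i ≤ d, let ℓ be the minimum index with |D_ℓ| > 1 and r the maximum index with |D_r| > 1. Let P be a shortest s-t path in G. Then G − V(P) is connected if and only if both of the following hold: (a) for every a ∈ D_ℓ and every b ∈ V(G) \ D, no subset of V(P) is an a-b separator of G; and (b) for every a ∈ D_ℓ and every b ∈ D_r, no subset of V(P) is an a-b separator of G. -/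
namespace SimpleGraph
section Lemmas
variable {V : Type*} {G : SimpleGraph V} {u v a b x y s t : V} {S T : Set V}






lemma exists_walk_getVert (w : G.Walk u v) {m n : ℕ} (hmn : m ≤ n) (hn : n ≤ w.length) :
    ∃ q : G.Walk (w.getVert m) (w.getVert n), q.length = n - m ∧
      ∀ z ∈ q.support, ∃ k, m ≤ k ∧ k ≤ n ∧ z = w.getVert k := by
  induction n, hmn using Nat.le_induction with
  | base => exact ⟨Walk.nil, by simp, by intro z hz; simp at hz; exact ⟨m, le_rfl, le_rfl, hz⟩⟩
  | succ n hmn ih =>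
    obtain ⟨q, hq1, hq2⟩ := ih (le_of_lt hn)
    refine ⟨q.concat (w.adj_getVert_succ hn), ?_, ?_⟩
    · rw [Walk.length_concat, hq1]; omega
    · intro z hz
      rw [Walk.support_concat] at hz
      rw [List.mem_append] at hz
      rcases hz with h | h
      · obtain ⟨k, h1, h2, h3⟩ := hq2 z h
        exact ⟨k, h1, by omega, h3⟩
      · simp at h; exact ⟨n + 1, by omega, le_rfl, h⟩

lemma dist_start_getVert_le (w : G.Walk u v) {n : ℕ} (hn : n ≤ w.length) :
    G.dist u (w.getVert n) ≤ n := by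
  obtain ⟨q, hq, -⟩ := exists_walk_getVert w (Nat.zero_le n) hn
  have := G.dist_le (q.copy (w.getVert_zero) rfl)
  simpa [hq] using this

lemma dist_getVert_end_le (w : G.Walk u v) {n : ℕ} (hn : n ≤ w.length) :
    G.dist (w.getVert n) v ≤ w.length - n := by
  obtain ⟨q, hq, -⟩ := exists_walk_getVert w hn le_rfl
  have := G.dist_le (q.copy rfl (w.getVert_length))
  simpa [hq] using this

/-- positions on a shortest walk realize distances -/
lemma dist_getVert_of_shortest (w : G.Walk u v) (hw : w.length = G.dist u v) {n : ℕ}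
    (hn : n ≤ w.length) :
    G.dist u (w.getVert n) = n ∧ G.dist (w.getVert n) v = w.length - n := by
  have h1 := dist_start_getVert_le w hn
  have h2 := dist_getVert_end_le w hn
  -- reachability to the midpoint
  obtain ⟨q1, hq1, -⟩ := exists_walk_getVert w (Nat.zero_le n) hn
  obtain ⟨q2, hq2, -⟩ := exists_walk_getVert w hn le_rfl
  obtain ⟨r1, hr1⟩ := ((q1.copy (w.getVert_zero) rfl).reachable).exists_walk_length_eq_dist
  obtain ⟨r2, hr2⟩ := ((q2.copy rfl (w.getVert_length)).reachable).exists_walk_length_eq_dist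
  constructor
  · by_contra h
    have hlt : G.dist u (w.getVert n) < n := by omega
    have := G.dist_le (r1.append (q2.copy rfl (w.getVert_length)))
    simp only [Walk.length_append, Walk.length_copy, hr1, hq2] at this
    omega
  · by_contra h
    have hlt : G.dist (w.getVert n) v < w.length - n := by omega
    have := G.dist_le ((q1.copy (w.getVert_zero) rfl).append r2)
    simp only [Walk.length_append, Walk.length_copy, hr2, hq1] at this
    omega

lemma getVert_injOn_of_shortest (w : G.Walk u v) (hw : w.length = G.dist u v) {i j : ℕ}
    (hi : i ≤ w.length) (hj : j ≤ w.length) (h : w.getVert i = w.getVert j) : i = j := by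
  have h1 := (dist_getVert_of_shortest w hw hi).1
  have h2 := (dist_getVert_of_shortest w hw hj).1
  rw [h] at h1; omega

lemma no_chord_of_shortest (w : G.Walk u v) (hw : w.length = G.dist u v) {i j : ℕ}
    (hi : i ≤ w.length) (hj : j ≤ w.length) (h : G.Adj (w.getVert i) (w.getVert j)) :
    j = i + 1 ∨ i = j + 1 := by
  have hne : i ≠ j := by rintro rfl; exact G.irrefl h
  have key : ∀ a b : ℕ, a ≤ w.length → b ≤ w.length →
      G.Adj (w.getVert a) (w.getVert b) → G.dist u (w.getVert b) ≤ a + 1 := by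
    intro a b ha hb hadj
    obtain ⟨q, hq, -⟩ := exists_walk_getVert w (Nat.zero_le a) ha
    have := G.dist_le ((q.concat hadj).copy (w.getVert_zero) rfl)
    simpa [Walk.length_concat, hq] using this
  have k1 := key i j hi hj h
  have k2 := key j i hj hi h.symm
  rw [(dist_getVert_of_shortest w hw hj).1] at k1
  rw [(dist_getVert_of_shortest w hw hi).1] at k2
  omega




/-- reachability by a walk avoiding `S` entirely -/
def AR (G : SimpleGraph V) (S : Set V) (u v : V) : Prop :=
  ∃ w : G.Walk u v, ∀ z ∈ w.support, z ∉ S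

lemma AR.refl (hu : u ∉ S) : G.AR S u u := ⟨Walk.nil, by simpa using hu⟩

lemma AR.symm (h : G.AR S u v) : G.AR S v u := by
  obtain ⟨w, hw⟩ := h
  exact ⟨w.reverse, by intro z hz; rw [Walk.support_reverse] at hz; exact hw z (by simpa using hz)⟩

lemma AR.trans (h1 : G.AR S u v) (h2 : G.AR S v b) : G.AR S u b := by
  obtain ⟨w1, hw1⟩ := h1; obtain ⟨w2, hw2⟩ := h2
  refine ⟨w1.append w2, fun z hz => ?_⟩
  rcases (Walk.mem_support_append_iff _ _).mp hz with h | h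
  · exact hw1 z h
  · exact hw2 z h

lemma AR.left_mem (h : G.AR S u v) : u ∉ S := by
  obtain ⟨w, hw⟩ := h; exact hw u w.start_mem_support

lemma AR.right_mem (h : G.AR S u v) : v ∉ S := by
  obtain ⟨w, hw⟩ := h; exact hw v w.end_mem_support

lemma AR.of_mem_support {w : G.Walk u v} (hw : ∀ z ∈ w.support, z ∉ S) {z : V}
    (hz : z ∈ w.support) : G.AR S u z := by
  classical
  exact ⟨w.takeUntil z hz, fun x hx => hw x (w.support_takeUntil_subset hz hx)⟩

lemma AR.adj (h : G.AR S u v) (hadj : G.Adj v b) (hb : b ∉ S) : G.AR S u b := by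
  obtain ⟨w, hw⟩ := h
  refine ⟨w.concat hadj, fun z hz => ?_⟩
  rw [Walk.support_concat, List.mem_append] at hz
  rcases hz with h | h
  · exact hw z h
  · simp at h; subst h; exact hb

/-- AR gives reachability in the induced graph on the complement -/
lemma AR.reachable_induce (h : G.AR S u v) :
    (G.induce {x | x ∉ S}).Reachable ⟨u, h.left_mem⟩ ⟨v, h.right_mem⟩ := by
  obtain ⟨w, hw⟩ := h
  induction w with
  | nil => rfl
  | @cons x y z hadj w ih =>
    have hy : y ∉ S := hw y (by simp)
    have h1 : (G.induce {x | x ∉ S}).Adj ⟨x, hw x (by simp)⟩ ⟨y, hy⟩ := by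
      simpa using hadj
    exact (Adj.reachable h1).trans (ih (fun z hz => hw z (by simp [hz])))

lemma reachable_induce_AR {p q : {x | x ∉ S}} (h : (G.induce {x | x ∉ S}).Reachable p q) :
    G.AR S p.1 q.1 := by
  obtain ⟨w⟩ := h
  induction w with
  | @nil x => exact ⟨Walk.nil, by rintro z hz; simp at hz; subst hz; exact x.2⟩
  | @cons x y z hadj w ih =>
    have hxy : G.Adj x.1 y.1 := hadj
    obtain ⟨w2, hw2⟩ := ih
    refine ⟨Walk.cons hxy w2, fun z hz => ?_⟩
    rw [Walk.support_cons, List.mem_cons] at hz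
    rcases hz with rfl | h
    · exact x.2
    · exact hw2 z h

/-- every separator contains a minimal separator -/
lemma exists_minimal_separator (h : G.IsSeparator a b T) :
    ∃ S, S ⊆ T ∧ Minimal (fun X => G.IsSeparator a b X) S := by
  have key : ∀ c ⊆ {X | G.IsSeparator a b X}, IsChain (· ⊆ ·) c → c.Nonempty →
      ∃ lb ∈ {X | G.IsSeparator a b X}, ∀ s ∈ c, lb ⊆ s := by
    intro c hc hchain hne
    refine ⟨⋂₀ c, ⟨?_, ?_, ?_⟩, fun s hs => Set.sInter_subset_of_mem hs⟩
    · obtain ⟨X, hX⟩ := hne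
      exact fun hmem => (hc hX).1 (Set.mem_sInter.mp hmem X hX)
    · obtain ⟨X, hX⟩ := hne
      exact fun hmem => (hc hX).2.1 (Set.mem_sInter.mp hmem X hX)
    · intro p
      by_contra hcon
      push_neg at hcon
      -- find a single element of the chain avoided by all of p.support
      have : ∃ X ∈ c, ∀ z ∈ p.support, z ∉ X := by
        have step : ∀ l : List V, (∀ z ∈ l, ∃ X ∈ c, z ∉ X) →
            ∃ X ∈ c, ∀ z ∈ l, z ∉ X := by
          intro l
          induction l with
          | nil => intro _; obtain ⟨X, hX⟩ := hne; exact ⟨X, hX, by simp⟩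
          | cons x l ih =>
            intro hl
            obtain ⟨X, hXc, hX⟩ := ih (fun z hz => hl z (by simp [hz]))
            obtain ⟨Y, hYc, hY⟩ := hl x (by simp)
            rcases eq_or_ne X Y with rfl | hne'
            · refine ⟨X, hXc, fun z hz => ?_⟩
              rcases List.mem_cons.mp hz with rfl | h
              · exact hY
              · exact hX z h
            · rcases hchain hXc hYc hne' with hs | hs
              · refine ⟨X, hXc, ?_⟩
                intro z hz; rcases List.mem_cons.mp hz with rfl | h
                · exact fun hzX => hY (hs hzX)
                · exact hX z h
              · refine ⟨Y, hYc, ?_⟩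
                intro z hz; rcases List.mem_cons.mp hz with rfl | h
                · exact hY
                · exact fun hzY => hX z h (hs hzY)
        apply step
        intro z hz
        by_contra hcc
        push_neg at hcc
        exact hcon z hz (Set.mem_sInter.mpr (fun X hX => hcc X hX))
      obtain ⟨X, hXc, hX⟩ := this
      obtain ⟨z, hz1, hz2⟩ := (hc hXc).2.2 p
      exact hX z hz1 hz2
  have := zorn_superset_nonempty {X | G.IsSeparator a b X} key T h
  obtain ⟨m, hm1, hm2⟩ := this
  exact ⟨m, hm1, hm2⟩




lemma IsChordal.no_cycle (hch : G.IsChordal) {n : ℕ} (hn : 4 ≤ n) (f : ℕ → V)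
    (hinj : ∀ i < n, ∀ j < n, f i = f j → i = j)
    (hadj : ∀ i, i + 1 < n → G.Adj (f i) (f (i + 1)))
    (hlast : G.Adj (f (n - 1)) (f 0))
    (hchord : ∀ i j, i < j → j < n → G.Adj (f i) (f j) → j = i + 1 ∨ (i = 0 ∧ j = n - 1)) :
    False := by
  obtain ⟨k, rfl⟩ : ∃ k, n = k + 2 := ⟨n - 2, by omega⟩
  set n := k + 2
  have hmain : ∀ u v : Fin n, G.Adj (f u.val) (f v.val) ↔ (cycleGraph n).Adj u v := by
    intro u v
    rw [cycleGraph_adj]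
    constructor
    · intro h
      have hne : u.val ≠ v.val := fun he => G.irrefl (by rwa [he] at h)
      have key : ∀ a b : Fin n, a.val < b.val → G.Adj (f a.val) (f b.val) →
          a - b = 1 ∨ b - a = 1 := by
        intro a b hab hadj'
        rcases hchord a.val b.val hab b.2 hadj' with h1 | ⟨h1, h2⟩
        · right
          have : b = a + 1 := by
            apply Fin.ext
            rw [Fin.add_def]
            simp only [Fin.val_one]
            rw [Nat.mod_eq_of_lt (by omega)]
            omega
          rw [this]; abel
        · left
          have : a = b + 1 := by
            apply Fin.ext
            rw [Fin.add_def]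
            simp only [Fin.val_one]
            have hbn : b.val + 1 = n := by have := b.2; omega
            rw [hbn, Nat.mod_self]
            omega
          rw [this]; abel
      rcases lt_or_gt_of_ne hne with hlt | hlt
      · exact key u v hlt h
      · exact (key v u hlt h.symm).symm
    · intro h
      have step : ∀ a b : Fin n, a - b = 1 → G.Adj (f b.val) (f a.val) := by
        intro a b hab
        have hba : a = b + 1 := by rw [← hab]; abel
        subst hba
        rw [Fin.add_def]
        simp only [Fin.val_one]
        rcases Nat.lt_or_ge (b.val + 1) n with hlt | hge
        · rw [Nat.mod_eq_of_lt hlt]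
          exact hadj b.val hlt
        · have hb : b.val = n - 1 := by have := b.2; omega
          have hmod : (b.val + 1) % n = 0 := by
            have hbn : b.val + 1 = n := by have := b.2; omega
            rw [hbn, Nat.mod_self]
          rw [hmod, hb]
          exact hlast
      rcases h with h | h
      · exact (step u v h).symm
      · exact step v u h
  have emb : SimpleGraph.cycleGraph n ↪g G :=
    ⟨⟨fun i => f i.val, fun i j hij => Fin.ext (hinj _ i.2 _ j.2 hij)⟩, fun {u v} => hmain u v⟩
  exact (hch n hn).false emb



lemma reach_upto (hax : a ≠ x) (w : G.Walk a x)
    (hw : ∀ z ∈ w.support, z ∈ S → z = x) :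
    ∃ x', G.Adj x' x ∧ G.AR S a x' := by
  classical
  set p1 := w.takeUntil x w.end_mem_support with hp1
  have hp1sub : p1.support ⊆ w.support := w.support_takeUntil_subset _
  have hp1count : p1.support.count x = 1 := w.count_support_takeUntil_eq_one _
  have hp1nil : ¬ p1.Nil := by
    intro hnil
    exact hax (Walk.Nil.eq hnil)
  have hlen : 1 ≤ p1.length := by
    rwa [Walk.not_nil_iff_lt_length] at hp1nil
  have hlenr : 1 ≤ p1.reverse.length := by rwa [Walk.length_reverse]
  set x' := p1.reverse.getVert 1 with hx'
  have hadj : G.Adj x x' := by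
    have := p1.reverse.adj_getVert_succ (i := 0) (by omega)
    simpa [hx'] using this
  have hx'mem : x' ∈ p1.support := by
    have : x' ∈ p1.reverse.support :=
      Walk.mem_support_iff_exists_getVert.mpr ⟨1, rfl, by omega⟩
    rwa [Walk.support_reverse, List.mem_reverse] at this
  have hx'ne : x' ≠ x := fun h => G.irrefl (h ▸ hadj)
  set w' := p1.takeUntil x' hx'mem with hw'
  have hw'sub : w'.support ⊆ p1.support := p1.support_takeUntil_subset _
  have hxnot : x ∉ w'.support := by
    intro hxw
    have hspec := p1.take_spec hx'mem
    have hsupp : p1.support = w'.support ++ (p1.dropUntil x' hx'mem).support.tail := by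
      rw [← Walk.support_append, hspec]
    have hcount2 : 1 ≤ (p1.dropUntil x' hx'mem).support.tail.count x := by
      apply List.one_le_count_iff.mpr
      have hxd : x ∈ (p1.dropUntil x' hx'mem).support := Walk.end_mem_support _
      have : (p1.dropUntil x' hx'mem).support =
          x' :: (p1.dropUntil x' hx'mem).support.tail := by
        rw [Walk.support_eq_cons]; rfl
      rw [this] at hxd
      rcases List.mem_cons.mp hxd with h | h
      · exact absurd h.symm hx'ne
      · exact h
    have : 2 ≤ p1.support.count x := by
      rw [hsupp, List.count_append]
      have : 1 ≤ w'.support.count x := List.one_le_count_iff.mpr hxw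
      omega
    omega
  refine ⟨x', hadj.symm, ⟨w', fun z hz => ?_⟩⟩
  intro hzS
  have := hw z (hp1sub (hw'sub hz)) hzS
  exact hxnot (this ▸ hz)





lemma induce_adj_iff {T : Set V} {p q : T} : (G.induce T).Adj p q ↔ G.Adj p.1 q.1 := Iff.rfl

lemma reachable_induce_of_walk {T : Set V} (w : G.Walk u v) (h : ∀ z ∈ w.support, z ∈ T) :
    (G.induce T).Reachable ⟨u, h u w.start_mem_support⟩ ⟨v, h v w.end_mem_support⟩ := by
  induction w with
  | nil => rfl
  | @cons p q r hadj w ih =>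
    have h1 : (G.induce T).Adj ⟨p, h p (by simp)⟩ ⟨q, h q (by simp)⟩ := hadj
    exact (Adj.reachable h1).trans (ih (fun z hz => h z (by simp [hz])))


lemma minimal_sep_walk (hmin : Minimal (fun X => G.IsSeparator a b X) S) (hx : x ∈ S) :
    ∃ W : G.Walk a b, ∀ z ∈ W.support, z ∈ S → z = x := by
  have hsep := hmin.prop
  have hnot : ¬ G.IsSeparator a b (S \ {x}) := by
    intro hs
    exact (hmin.2 hs Set.diff_subset hx).2 rfl
  rw [IsSeparator] at hnot
  push_neg at hnot
  obtain ⟨W, hW⟩ := hnot (fun h => hsep.1 h.1) (fun h => hsep.2.1 h.1)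
  refine ⟨W, fun z hz hzS => ?_⟩
  by_contra hne
  exact hW z hz ⟨hzS, hne⟩

lemma sep_neighbors (hmin : Minimal (fun X => G.IsSeparator a b X) S) (hx : x ∈ S) :
    (∃ xa, G.Adj xa x ∧ G.AR S a xa) ∧ (∃ xb, G.Adj xb x ∧ G.AR S b xb) := by
  classical
  have hsep := hmin.prop
  obtain ⟨W, hW⟩ := minimal_sep_walk hmin hx
  have hxW : x ∈ W.support := by
    obtain ⟨z, hz1, hz2⟩ := hsep.2.2 W
    exact (hW z hz1 hz2) ▸ hz1
  constructor
  · refine reach_upto (fun h => hsep.1 (h ▸ hx)) (W.takeUntil x hxW) ?_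
    exact fun z hz => hW z (W.support_takeUntil_subset hxW hz)
  · refine reach_upto (fun h => hsep.2.1 (h ▸ hx)) (W.dropUntil x hxW).reverse ?_
    intro z hz
    rw [Walk.support_reverse, List.mem_reverse] at hz
    exact hW z (W.support_dropUntil_subset hxW hz)

theorem minimal_sep_clique (hch : G.IsChordal)
    (hmin : Minimal (fun X => G.IsSeparator a b X) S) (hx : x ∈ S) (hy : y ∈ S) :
    x = y ∨ G.Adj x y := by
  classical
  by_contra hcon
  push_neg at hcon
  obtain ⟨hxy, hnadj⟩ := hcon
  have hsep := hmin.prop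
  obtain ⟨⟨xa, hxa1, hxa2⟩, ⟨xb, hxb1, hxb2⟩⟩ := sep_neighbors hmin hx
  obtain ⟨⟨ya, hya1, hya2⟩, ⟨yb, hyb1, hyb2⟩⟩ := sep_neighbors hmin hy
  -- no vertex is on both sides; no edge between sides
  have noABv : ∀ p, G.AR S a p → G.AR S b p → False := by
    intro p h1 h2
    obtain ⟨w, hw⟩ := h1.trans h2.symm
    obtain ⟨z, hz1, hz2⟩ := hsep.2.2 w
    exact hw z hz1 hz2
  have noAB : ∀ p q, G.AR S a p → G.AR S b q → ¬ G.Adj p q := by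
    intro p q h1 h2 hadj
    exact noABv q (h1.adj hadj h2.right_mem) h2
  -- side sets
  set TA : Set V := {v | v = x ∨ v = y ∨ (v ∉ S ∧ G.AR S a v)} with hTA
  set TB : Set V := {v | v = x ∨ v = y ∨ (v ∉ S ∧ G.AR S b v)} with hTB
  have hxTA : x ∈ TA := Or.inl rfl
  have hyTA : y ∈ TA := Or.inr (Or.inl rfl)
  have hxTB : x ∈ TB := Or.inl rfl
  have hyTB : y ∈ TB := Or.inr (Or.inl rfl)
  -- x and y are connected within each side
  have sideReach : ∀ (c : V) (T : Set V) (hxT : x ∈ T) (hyT : y ∈ T),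
      (∀ z, z ∉ S → G.AR S c z → z ∈ T) →
      ∀ (xc yc : V), G.Adj xc x → G.AR S c xc → G.Adj yc y → G.AR S c yc →
      (G.induce T).Reachable ⟨x, hxT⟩ ⟨y, hyT⟩ := by
    intro c T hxT hyT hmemT xc yc hxc1 hxc2 hyc1 hyc2
    obtain ⟨wm, hwm⟩ := hxc2.symm.trans hyc2
    have hmem : ∀ z ∈ wm.support, z ∈ T := by
      intro z hz
      exact hmemT z (hwm z hz) (hxc2.trans (AR.of_mem_support hwm hz))
    have r1 : (G.induce T).Reachable ⟨xc, hmem xc wm.start_mem_support⟩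
        ⟨yc, hmem yc wm.end_mem_support⟩ := reachable_induce_of_walk wm hmem
    have hxcT : xc ∈ T := hmem xc wm.start_mem_support
    have hycT : yc ∈ T := hmem yc wm.end_mem_support
    have a1 : (G.induce T).Adj ⟨x, hxT⟩ ⟨xc, hxcT⟩ := hxc1.symm
    have a2 : (G.induce T).Adj ⟨yc, hycT⟩ ⟨y, hyT⟩ := hyc1
    exact (a1.reachable.trans r1).trans a2.reachable
  have reachA : (G.induce TA).Reachable ⟨x, hxTA⟩ ⟨y, hyTA⟩ :=
    sideReach a TA hxTA hyTA (fun z h1 h2 => Or.inr (Or.inr ⟨h1, h2⟩)) xa ya hxa1 hxa2 hya1 hya2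
  have reachB : (G.induce TB).Reachable ⟨y, hyTB⟩ ⟨x, hxTB⟩ :=
    (sideReach b TB hxTB hyTB (fun z h1 h2 => Or.inr (Or.inr ⟨h1, h2⟩)) xb yb hxb1 hxb2
      hyb1 hyb2).symm
  -- shortest walks within each side
  obtain ⟨pH, hpH⟩ := reachA.exists_walk_length_eq_dist
  obtain ⟨qH, hqH⟩ := reachB.exists_walk_length_eq_dist
  set m := pH.length with hm
  set m' := qH.length with hm'
  have hm2 : 2 ≤ m := by
    have hne : (⟨x, hxTA⟩ : TA) ≠ ⟨y, hyTA⟩ := fun h => hxy (congrArg Subtype.val h)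
    have hpos := reachA.pos_dist_of_ne hne
    have hd1 : (G.induce TA).dist ⟨x, hxTA⟩ ⟨y, hyTA⟩ ≠ 1 := by
      intro h
      have hAdj : (G.induce TA).Adj ⟨x, hxTA⟩ ⟨y, hyTA⟩ := dist_eq_one_iff_adj.mp h
      exact hnadj hAdj
    omega
  have hm2' : 2 ≤ m' := by
    have hne : (⟨y, hyTB⟩ : TB) ≠ ⟨x, hxTB⟩ := fun h => hxy (congrArg Subtype.val h).symm
    have hpos := reachB.pos_dist_of_ne hne
    have hd1 : (G.induce TB).dist ⟨y, hyTB⟩ ⟨x, hxTB⟩ ≠ 1 := by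
      intro h
      have hAdj : (G.induce TB).Adj ⟨y, hyTB⟩ ⟨x, hxTB⟩ := dist_eq_one_iff_adj.mp h
      exact hnadj hAdj.symm
    omega
  set φ : ℕ → V := fun k => (pH.getVert k).1 with hφ
  set ψ : ℕ → V := fun k => (qH.getVert k).1 with hψ
  have φ0 : φ 0 = x := by simp [hφ, Walk.getVert_zero]
  have φm : φ m = y := by show (pH.getVert pH.length : V) = y; rw [Walk.getVert_length]
  have ψ0 : ψ 0 = y := by simp [hψ, Walk.getVert_zero]
  have ψm' : ψ m' = x := by show (qH.getVert qH.length : V) = x; rw [Walk.getVert_length]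
  have inj_p : ∀ i ≤ m, ∀ j ≤ m, φ i = φ j → i = j := by
    intro i hi j hj h
    exact getVert_injOn_of_shortest pH hpH hi hj (Subtype.ext h)
  have inj_q : ∀ i ≤ m', ∀ j ≤ m', ψ i = ψ j → i = j := by
    intro i hi j hj h
    exact getVert_injOn_of_shortest qH hqH hi hj (Subtype.ext h)
  have intA : ∀ k, 0 < k → k < m → (φ k ∉ S ∧ G.AR S a (φ k)) := by
    intro k h0 hk
    rcases (pH.getVert k).2 with h | h | h
    · exact absurd (inj_p k (le_of_lt hk) 0 (by omega) (by rw [φ0]; exact h)) (by omega)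
    · exact absurd (inj_p k (le_of_lt hk) m le_rfl (by rw [φm]; exact h)) (by omega)
    · exact h
  have intB : ∀ k, 0 < k → k < m' → (ψ k ∉ S ∧ G.AR S b (ψ k)) := by
    intro k h0 hk
    rcases (qH.getVert k).2 with h | h | h
    · exact absurd (inj_q k (le_of_lt hk) m' le_rfl (by rw [ψm']; exact h)) (by omega)
    · exact absurd (inj_q k (le_of_lt hk) 0 (by omega) (by rw [ψ0]; exact h)) (by omega)
    · exact h
  have nochord_p : ∀ i ≤ m, ∀ j ≤ m, G.Adj (φ i) (φ j) → j = i + 1 ∨ i = j + 1 := by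
    intro i hi j hj h
    exact no_chord_of_shortest pH hpH hi hj h
  have nochord_q : ∀ i ≤ m', ∀ j ≤ m', G.Adj (ψ i) (ψ j) → j = i + 1 ∨ i = j + 1 := by
    intro i hi j hj h
    exact no_chord_of_shortest qH hqH hi hj h
  have adj_p : ∀ i < m, G.Adj (φ i) (φ (i + 1)) := fun i hi => pH.adj_getVert_succ hi
  have adj_q : ∀ i < m', G.Adj (ψ i) (ψ (i + 1)) := fun i hi => qH.adj_getVert_succ hi
  -- the cycle
  set n := m + m' with hn
  set f : ℕ → V := fun i => if i ≤ m then φ i else ψ (i - m) with hf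
  have hfp : ∀ i ≤ m, f i = φ i := by intro i hi; simp [hf, hi]
  have hfq : ∀ i, m < i → f i = ψ (i - m) := by
    intro i hi; simp only [hf]; rw [if_neg (by omega)]
  apply hch.no_cycle (n := n) (by omega) f
  · -- injectivity
    intro i hi j hj h
    rcases le_or_gt i m with him | him <;> rcases le_or_gt j m with hjm | hjm
    · rw [hfp i him, hfp j hjm] at h; exact inj_p i him j hjm h
    · rw [hfp i him, hfq j hjm] at h
      exfalso
      have hj1 : 0 < j - m := by omega
      have hj2 : j - m < m' := by omega
      have hB := intB (j - m) hj1 hj2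
      rcases Nat.eq_zero_or_pos i with rfl | hipos
      · rw [φ0] at h
        exact absurd (inj_q m' le_rfl (j - m) (by omega) (by rw [ψm', h])) (by omega)
      · rcases eq_or_lt_of_le him with rfl | himlt
        · rw [φm] at h
          exact absurd (inj_q 0 (by omega) (j - m) (by omega) (by rw [ψ0, h])) (by omega)
        · have hA := intA i hipos himlt
          exact noABv (φ i) hA.2 (h ▸ hB.2)
    · rw [hfq i him, hfp j hjm] at h
      exfalso
      have hi1 : 0 < i - m := by omega
      have hi2 : i - m < m' := by omega
      have hB := intB (i - m) hi1 hi2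
      rcases Nat.eq_zero_or_pos j with rfl | hjpos
      · rw [φ0] at h
        exact absurd (inj_q m' le_rfl (i - m) (by omega) (by rw [ψm', h])) (by omega)
      · rcases eq_or_lt_of_le hjm with rfl | hjmlt
        · rw [φm] at h
          exact absurd (inj_q 0 (by omega) (i - m) (by omega) (by rw [ψ0, h])) (by omega)
        · have hA := intA j hjpos hjmlt
          exact noABv (φ j) hA.2 (h.symm ▸ hB.2)
    · rw [hfq i him, hfq j hjm] at h
      have := inj_q (i - m) (by omega) (j - m) (by omega) h
      omega
  · -- consecutive adjacency
    intro i hi1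
    rcases lt_or_ge i m with him | him
    · rw [hfp i (le_of_lt him), hfp (i + 1) him]
      exact adj_p i him
    · rcases eq_or_lt_of_le him with rfl | himlt
      · rw [hfp m le_rfl, hfq (m + 1) (by omega)]
        have h2 : m + 1 - m = 1 := by omega
        rw [h2, φm, ← ψ0]
        exact adj_q 0 (by omega)
      · rw [hfq i himlt, hfq (i + 1) (by omega)]
        have h1 : i + 1 - m = (i - m) + 1 := by omega
        rw [h1]
        exact adj_q (i - m) (by omega)
  · -- wrap-around adjacency
    have h1 : n - 1 > m := by omega
    rw [hfq (n - 1) h1, hfp 0 (by omega), φ0, ← ψm']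
    have h2 : n - 1 - m = m' - 1 := by omega
    rw [h2]
    have := adj_q (m' - 1) (by omega)
    have h3 : m' - 1 + 1 = m' := by omega
    rwa [h3] at this
  · -- chord classification
    intro i j hij hjn hadj
    rcases le_or_gt j m with hjm | hjm
    · -- both in p: consecutive
      rw [hfp i (by omega), hfp j hjm] at hadj
      rcases nochord_p i (by omega) j hjm hadj with h | h
      · left; omega
      · omega
    · rcases le_or_gt i m with him | him
      · -- i in p, j in q-interior
        rw [hfp i him, hfq j hjm] at hadj
        have hj1 : 0 < j - m := by omega
        have hj2 : j - m < m' := by omega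
        rcases Nat.eq_zero_or_pos i with rfl | hipos
        · -- i = 0 : f i = x = ψ m'
          rw [φ0, ← ψm'] at hadj
          rcases nochord_q m' le_rfl (j - m) (by omega) hadj with h | h
          · omega
          · exact Or.inr ⟨rfl, by omega⟩
        · rcases eq_or_lt_of_le him with rfl | himlt
          · -- i = m : f i = y = ψ 0
            rw [φm, ← ψ0] at hadj
            rcases nochord_q 0 (by omega) (j - m) (by omega) hadj with h | h
            · left; omega
            · omega
          · -- interior-interior : impossible
            exact absurd hadj (noAB _ _ (intA i hipos himlt).2 (intB (j - m) hj1 hj2).2)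
      · -- both in q
        rw [hfq i him, hfq j hjm] at hadj
        rcases nochord_q (i - m) (by omega) (j - m) (by omega) hadj with h | h
        · left; omega
        · omega





lemma slice_clique (hG : G.Connected) (hch : G.IsChordal) {i : ℕ}
    (hu : u ∈ G.levelSet s t i) (hv : v ∈ G.levelSet s t i) : u = v ∨ G.Adj u v := by
  by_contra hcon
  push_neg at hcon
  obtain ⟨hne, hnadj⟩ := hcon
  obtain ⟨hu1, hu2⟩ := hu
  obtain ⟨hv1, hv2⟩ := hv
  set d := G.dist s t with hd
  have heq0 : ∀ p q : V, G.dist p q = 0 → p = q := by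
    intro p q h
    rcases dist_eq_zero_iff_eq_or_not_reachable.mp h with h | h
    · exact h
    · exact absurd (hG p q) h
  have hipos : 1 ≤ i := by
    rcases Nat.eq_zero_or_pos i with rfl | h
    · exact absurd ((heq0 s u hu1).symm.trans (heq0 s v hv1)) hne
    · exact h
  have hdipos : 1 ≤ d - i := by
    rcases Nat.eq_zero_or_pos (d - i) with h | h
    · rw [h] at hu2 hv2
      exact absurd ((heq0 u t hu2).trans (heq0 v t hv2).symm) hne
    · exact h
  have hid : i ≤ d := by omega
  -- the universal separator
  have hTsep : G.IsSeparator u v {z | z ≠ u ∧ z ≠ v} := by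
    refine ⟨by simp, by simp, ?_⟩
    intro p
    have hlen : 0 < p.length := by
      rcases Nat.eq_zero_or_pos p.length with h | h
      · exact absurd (Walk.eq_of_length_eq_zero h) hne
      · exact h
    have hadj01 : G.Adj u (p.getVert 1) := by
      have := p.adj_getVert_succ (i := 0) hlen
      rwa [p.getVert_zero] at this
    refine ⟨p.getVert 1, Walk.mem_support_iff_exists_getVert.mpr ⟨1, rfl, by omega⟩, ?_, ?_⟩
    · intro h
      exact G.irrefl (h ▸ hadj01)
    · intro h
      exact hnadj (h ▸ hadj01)
  obtain ⟨S, hST, hminS⟩ := exists_minimal_separator hTsep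
  have hSsep := hminS.prop
  -- shortest walks
  obtain ⟨wsu, hwsu⟩ := hG.exists_walk_length_eq_dist s u
  obtain ⟨wsv, hwsv⟩ := hG.exists_walk_length_eq_dist s v
  obtain ⟨wut, hwut⟩ := hG.exists_walk_length_eq_dist u t
  obtain ⟨wvt, hwvt⟩ := hG.exists_walk_length_eq_dist v t
  -- the s-side hit
  obtain ⟨x, hxsup, hxS⟩ := hSsep.2.2 (wsu.reverse.append wsv)
  have hxT := hST hxS
  have hxs : G.dist s x ≤ i - 1 := by
    rcases (Walk.mem_support_append_iff _ _).mp hxsup with h | h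
    · rw [Walk.support_reverse, List.mem_reverse] at h
      obtain ⟨k, hk1, hk2⟩ := Walk.mem_support_iff_exists_getVert.mp h
      have hki : k ≠ wsu.length := by
        intro hk
        rw [hk, Walk.getVert_length] at hk1
        exact hxT.1 hk1.symm
      have := dist_start_getVert_le wsu (n := k) hk2
      rw [hk1] at this
      rw [hwsu, hu1] at hk2 hki
      omega
    · obtain ⟨k, hk1, hk2⟩ := Walk.mem_support_iff_exists_getVert.mp h
      have hki : k ≠ wsv.length := by
        intro hk
        rw [hk, Walk.getVert_length] at hk1
        exact hxT.2 hk1.symm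
      have := dist_start_getVert_le wsv (n := k) hk2
      rw [hk1] at this
      rw [hwsv, hv1] at hk2 hki
      omega
  -- the t-side hit
  obtain ⟨y, hysup, hyS⟩ := hSsep.2.2 (wut.append wvt.reverse)
  have hyT := hST hyS
  have hyt : G.dist y t ≤ d - i - 1 := by
    rcases (Walk.mem_support_append_iff _ _).mp hysup with h | h
    · obtain ⟨k, hk1, hk2⟩ := Walk.mem_support_iff_exists_getVert.mp h
      have hki : k ≠ 0 := by
        intro hk
        rw [hk, Walk.getVert_zero] at hk1
        exact hyT.1 hk1.symm
      have := dist_getVert_end_le wut (n := k) hk2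
      rw [hk1] at this
      rw [hwut, hu2] at hk2 this
      omega
    · rw [Walk.support_reverse, List.mem_reverse] at h
      obtain ⟨k, hk1, hk2⟩ := Walk.mem_support_iff_exists_getVert.mp h
      have hki : k ≠ 0 := by
        intro hk
        rw [hk, Walk.getVert_zero] at hk1
        exact hyT.2 hk1.symm
      have := dist_getVert_end_le wvt (n := k) hk2
      rw [hk1] at this
      rw [hwvt, hv2] at hk2 this
      omega
  -- clique property gives short s-t walk
  obtain ⟨wsx, hwsx⟩ := hG.exists_walk_length_eq_dist s x
  obtain ⟨wyt, hwyt⟩ := hG.exists_walk_length_eq_dist y t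
  rcases minimal_sep_clique hch hminS hxS hyS with heq | hadj
  · subst heq
    have := G.dist_le (wsx.append wyt)
    rw [Walk.length_append, hwsx, hwyt] at this
    omega
  · have := G.dist_le (wsx.append (Walk.cons hadj wyt))
    rw [Walk.length_append, Walk.length_cons, hwsx, hwyt] at this
    omega



end Lemmas
end SimpleGraph

open SimpleGraph Walk

/-- let `G` be a connected chordal graph, `s ≠ t`, `d = dist_G(s, t)`,
let `ℓ` be the least index with `|D_ℓ| > 1` and `r` the greatest index (`≤ d`) with
`|D_r| > 1`, and let `P` be a shortest `s`-`t` path.  Then `G − V(P)` is connected iff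
(a) for all `a ∈ D_ℓ` and `b ∈ V \ D`, no subset of `V(P)` is an `a`-`b` separator of
`G`, and (b) for all `a ∈ D_ℓ` and `b ∈ D_r`, no subset of `V(P)` is an `a`-`b`
separator of `G`. -/
theorem stmt9 {V : Type*} (G : SimpleGraph V) (hG : G.Connected) (hch : G.IsChordal)
    (s t : V) (hst : s ≠ t) (ℓ r : ℕ) (hℓd : ℓ ≤ G.dist s t) (hrd : r ≤ G.dist s t)
    (hℓ : (G.levelSet s t ℓ).Nontrivial) (hℓmin : ∀ j < ℓ, ¬ (G.levelSet s t j).Nontrivial)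
    (hr : (G.levelSet s t r).Nontrivial)
    (hrmax : ∀ j ≤ G.dist s t, r < j → ¬ (G.levelSet s t j).Nontrivial)
    (P : G.Walk s t) (hP : P.IsPath) (hlen : P.length = G.dist s t) :
    (G.induce {v | v ∉ P.support}).Connected ↔
    ((∀ a ∈ G.levelSet s t ℓ, ∀ b ∉ G.levelUnion s t,
        ∀ S ⊆ {v | v ∈ P.support}, ¬ G.IsSeparator a b S) ∧
     (∀ a ∈ G.levelSet s t ℓ, ∀ b ∈ G.levelSet s t r,
        ∀ S ⊆ {v | v ∈ P.support}, ¬ G.IsSeparator a b S)) := by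
  classical
  set d := G.dist s t with hd
  set PS : Set V := {v | v ∈ P.support} with hPS
  have hlen' : P.length = d := hlen
  have heq0 : ∀ p q : V, G.dist p q = 0 → p = q := by
    intro p q h
    rcases dist_eq_zero_iff_eq_or_not_reachable.mp h with h | h
    · exact h
    · exact absurd (hG p q) h
  -- basic facts about P
  have hPv_dist : ∀ k ≤ d, G.dist s (P.getVert k) = k ∧ G.dist (P.getVert k) t = d - k := by
    intro k hk
    have := dist_getVert_of_shortest P hlen (n := k) (by omega)
    rwa [hlen'] at this
  have hPv_level : ∀ k ≤ d, P.getVert k ∈ G.levelSet s t k := by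
    intro k hk
    exact ⟨(hPv_dist k hk).1, (hPv_dist k hk).2⟩
  have hPS_iff : ∀ z, z ∈ PS ↔ ∃ k, k ≤ d ∧ z = P.getVert k := by
    intro z
    rw [hPS]
    simp only [Set.mem_setOf_eq, Walk.mem_support_iff_exists_getVert]
    constructor
    · rintro ⟨k, h1, h2⟩; exact ⟨k, by omega, h1.symm⟩
    · rintro ⟨k, h1, h2⟩; exact ⟨k, h2.symm, by omega⟩
  have hPvPS : ∀ k ≤ d, P.getVert k ∈ PS := by
    intro k hk
    exact (hPS_iff _).mpr ⟨k, hk, rfl⟩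
  have hlevel_le : ∀ (j : ℕ) (z : V), z ∈ G.levelSet s t j → j ≤ d := by
    intro j z hz
    by_contra hjd
    have h2 : G.dist z t = 0 := by rw [hz.2]; omega
    have : z = t := heq0 z t h2
    subst this
    have := hz.1
    omega
  have hlevel_unique : ∀ (i j : ℕ) (z : V), z ∈ G.levelSet s t i → z ∈ G.levelSet s t j →
      i = j := by
    intro i j z h1 h2
    rw [← h1.1, ← h2.1]
  have hPS_level : ∀ (z : V), z ∈ PS → ∀ (j : ℕ), z ∈ G.levelSet s t j →
      z = P.getVert j := by
    intro z hz j hzj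
    obtain ⟨k, hk, rfl⟩ := (hPS_iff z).mp hz
    have := hlevel_unique k j _ (hPv_level k hk) hzj
    rw [← this]
  have hsingle : ∀ (j : ℕ), (j < ℓ ∨ r < j) → ∀ z ∈ G.levelSet s t j, z = P.getVert j := by
    intro j hj z hz
    have hjd : j ≤ d := hlevel_le j z hz
    have hsub : (G.levelSet s t j).Subsingleton := by
      rcases hj with hj | hj
      · exact Set.not_nontrivial_iff.mp (hℓmin j hj)
      · exact Set.not_nontrivial_iff.mp (hrmax j hjd hj)
    exact hsub hz (hPv_level j hjd)
  -- off-path representatives of the extreme levels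
  have hex : ∀ (i : ℕ), i ≤ d → (G.levelSet s t i).Nontrivial →
      ∃ c, c ∈ G.levelSet s t i ∧ c ∉ PS ∧ c ≠ P.getVert i := by
    intro i hid hnt
    obtain ⟨p, hp, q, hq, hpq⟩ := hnt
    have key : ∀ c, c ∈ G.levelSet s t i → c ≠ P.getVert i → c ∉ PS := by
      intro c hc hcP hcPS
      exact hcP (hPS_level c hcPS i hc)
    rcases eq_or_ne p (P.getVert i) with rfl | hp'
    · exact ⟨q, hq, key q hq (by rwa [ne_comm] at hpq), by rwa [ne_comm] at hpq⟩
    · exact ⟨p, hp, key p hp hp', hp'⟩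
  obtain ⟨aS, haS_lv, haS_PS, haS_ne⟩ := hex ℓ hℓd hℓ
  obtain ⟨bS, hbS_lv, hbS_PS, hbS_ne⟩ := hex r hrd hr
  have hPvℓ : P.getVert ℓ ∈ G.levelSet s t ℓ := hPv_level ℓ hℓd
  have hPvr : P.getVert r ∈ G.levelSet s t r := hPv_level r hrd
  have hadjℓ : G.Adj (P.getVert ℓ) aS := by
    rcases slice_clique hG hch hPvℓ haS_lv with h | h
    · exact absurd h.symm haS_ne
    · exact h
  have hadjr : G.Adj (P.getVert r) bS := by
    rcases slice_clique hG hch hPvr hbS_lv with h | h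
    · exact absurd h.symm hbS_ne
    · exact h
  have hPS_D : ∀ z ∈ PS, z ∈ G.levelUnion s t := by
    intro z hz
    obtain ⟨k, hk, rfl⟩ := (hPS_iff z).mp hz
    exact Set.mem_biUnion (Set.mem_Iic.mpr hk) (hPv_level k hk)
  -- reduction of the separator conditions to walks
  have hred : ∀ p q : V, (∀ S ⊆ PS, ¬ G.IsSeparator p q S) ↔
      ∃ w : G.Walk p q, ∀ z ∈ w.support, z ∈ PS → (z = p ∨ z = q) := by
    intro p q
    constructor
    · intro h
      have h1 := h (PS \ {p, q}) Set.diff_subset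
      rw [IsSeparator] at h1
      push_neg at h1
      obtain ⟨w, hw⟩ := h1 (by simp) (by simp)
      refine ⟨w, fun z hz hzPS => ?_⟩
      have := hw z hz
      simp only [Set.mem_diff, Set.mem_insert_iff, Set.mem_singleton_iff] at this
      rcases Decidable.em (z = p ∨ z = q) with h | h
      · exact h
      · exact absurd ⟨hzPS, h⟩ this
    · rintro ⟨w, hw⟩ S hSP ⟨hA, hB, hall⟩
      obtain ⟨z, hz1, hz2⟩ := hall w
      rcases hw z hz1 (hSP hz2) with rfl | rfl
      · exact hA hz2
      · exact hB hz2
  constructor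
  · -- FORWARD
    intro hconn
    have hARall : ∀ p q : V, p ∉ PS → q ∉ PS → G.AR PS p q := by
      intro p q hp hq
      exact reachable_induce_AR (hconn.preconnected ⟨p, hp⟩ ⟨q, hq⟩)
    have hfront : ∀ a ∈ G.levelSet s t ℓ, ∀ c, c ∉ PS →
        ∃ w : G.Walk a c, ∀ z ∈ w.support, z ∈ PS → z = a := by
      intro a ha c hc
      by_cases haPS : a ∈ PS
      · have haP : a = P.getVert ℓ := hPS_level a haPS ℓ ha
        have hadj : G.Adj a aS := haP ▸ hadjℓ
        obtain ⟨w2, hw2⟩ := hARall aS c haS_PS hc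
        refine ⟨Walk.cons hadj w2, fun z hz hzPS => ?_⟩
        rw [Walk.support_cons, List.mem_cons] at hz
        rcases hz with rfl | hz
        · rfl
        · exact absurd hzPS (hw2 z hz)
      · obtain ⟨w, hw⟩ := hARall a c haPS hc
        exact ⟨w, fun z hz hzPS => absurd hzPS (hw z hz)⟩
    have hback : ∀ b ∈ G.levelSet s t r, ∀ c, c ∉ PS →
        ∃ w : G.Walk c b, ∀ z ∈ w.support, z ∈ PS → z = b := by
      intro b hb c hc
      by_cases hbPS : b ∈ PS
      · have hbP : b = P.getVert r := hPS_level b hbPS r hb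
        have hadj : G.Adj bS b := (hbP ▸ hadjr).symm
        obtain ⟨w2, hw2⟩ := hARall c bS hc hbS_PS
        refine ⟨w2.concat hadj, fun z hz hzPS => ?_⟩
        rw [Walk.support_concat, List.mem_append] at hz
        rcases hz with hz | hz
        · exact absurd hzPS (hw2 z hz)
        · simp at hz; exact hz
      · obtain ⟨w, hw⟩ := hARall c b hc hbPS
        exact ⟨w, fun z hz hzPS => absurd hzPS (hw z hz)⟩
    constructor
    · intro a ha b hb
      have hbPS : b ∉ PS := fun h => hb (hPS_D b h)
      obtain ⟨w, hw⟩ := hfront a ha b hbPS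
      exact (hred a b).mpr ⟨w, fun z hz hzPS => Or.inl (hw z hz hzPS)⟩
    · intro a ha b hb
      obtain ⟨w1, hw1⟩ := hfront a ha aS haS_PS
      obtain ⟨w2, hw2⟩ := hback b hb aS haS_PS
      refine (hred a b).mpr ⟨w1.append w2, fun z hz hzPS => ?_⟩
      rcases (Walk.mem_support_append_iff _ _).mp hz with hz | hz
      · exact Or.inl (hw1 z hz hzPS)
      · exact Or.inr (hw2 z hz hzPS)
  · -- BACKWARD
    rintro ⟨cA, cB⟩
    have hAR_of_walk : ∀ {p q : V}, p ∉ PS → q ∉ PS →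
        (∃ w : G.Walk p q, ∀ z ∈ w.support, z ∈ PS → (z = p ∨ z = q)) → G.AR PS p q := by
      rintro p q hp hq ⟨w, hw⟩
      refine ⟨w, fun z hz hzPS => ?_⟩
      rcases hw z hz hzPS with rfl | rfl
      · exact hp hzPS
      · exact hq hzPS
    have hARab : G.AR PS aS bS :=
      hAR_of_walk haS_PS hbS_PS ((hred aS bS).mp (cB aS haS_lv bS hbS_lv))
    have hPv_inj : ∀ k, k ≤ d → ∀ k', k' ≤ d → P.getVert k = P.getVert k' → k = k' := by
      intro k hk k' hk' h
      exact getVert_injOn_of_shortest P hlen (by omega) (by omega) h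
    have hmain : ∀ u, u ∉ PS → G.AR PS u aS := by
      intro u hu
      by_contra hK
      have hKlevel : ∀ w, G.AR PS u w → ∃ j, ℓ < j ∧ j < r ∧ w ∈ G.levelSet s t j := by
        intro w hw
        have hwPS : w ∉ PS := hw.right_mem
        have hwD : w ∈ G.levelUnion s t := by
          by_contra hwD
          have h2 : G.AR PS aS w :=
            hAR_of_walk haS_PS hwPS ((hred aS w).mp (cA aS haS_lv w hwD))
          exact hK (hw.trans h2.symm)
        obtain ⟨j, hjd, hwj⟩ : ∃ j, j ≤ d ∧ w ∈ G.levelSet s t j := by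
          rw [levelUnion] at hwD
          simp only [Set.mem_iUnion, Set.mem_Iic, exists_prop] at hwD
          exact hwD
        rcases Nat.lt_or_ge j ℓ with h | h
        · have := hsingle j (Or.inl h) w hwj
          exact absurd (this ▸ hPvPS j (by omega)) hwPS
        rcases Nat.lt_or_ge r j with h' | h'
        · have := hsingle j (Or.inr h') w hwj
          exact absurd (this ▸ hPvPS j (by omega)) hwPS
        rcases Nat.lt_or_ge ℓ j with hℓj | hℓj
        · rcases Nat.lt_or_ge j r with hjr | hjr
          · exact ⟨j, hℓj, hjr, hwj⟩
          · have hjr' : j = r := by omega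
            have h2 : G.AR PS aS w :=
              hAR_of_walk haS_PS hwPS ((hred aS w).mp (cB aS haS_lv w (hjr' ▸ hwj)))
            exact absurd (hw.trans h2.symm) hK
        · have hjℓ : j = ℓ := by omega
          have h2 : G.AR PS w bS :=
            hAR_of_walk hwPS hbS_PS ((hred w bS).mp (cB w (hjℓ ▸ hwj) bS hbS_lv))
          exact absurd ((hw.trans h2).trans hARab.symm) hK
      obtain ⟨i0, hi0a, hi0b, hi0c⟩ := hKlevel u (AR.refl hu)
      set J : Set ℕ := {j | ∃ w, G.AR PS u w ∧ w ∈ G.levelSet s t j} with hJ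
      have hJne : J.Nonempty := ⟨i0, u, AR.refl hu, hi0c⟩
      have hJsub : ∀ j ∈ J, ℓ < j ∧ j < r := by
        rintro j ⟨w, hw1, hw2⟩
        obtain ⟨j', h1, h2, h3⟩ := hKlevel w hw1
        have hjj : j = j' := hlevel_unique j j' w hw2 h3
        omega
      set jK := sInf J with hjKdef
      set mK := sSup J with hmKdef
      have hjKJ : jK ∈ J := Nat.sInf_mem hJne
      have hBdd : BddAbove J := ⟨r, fun j hj => (hJsub j hj).2.le⟩
      have hmKJ : mK ∈ J := Nat.sSup_mem hJne hBdd
      have hjKb := hJsub jK hjKJ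
      have hmKb := hJsub mK hmKJ
      have hjm : jK ≤ mK := Nat.sInf_le hmKJ
      obtain ⟨wmin, hwmin_AR, hwmin_lv⟩ := hjKJ
      obtain ⟨wmax, hwmax_AR, hwmax_lv⟩ := hmKJ
      -- predecessor of the lowest level
      obtain ⟨w1, hw1len⟩ := hG.exists_walk_length_eq_dist s wmin
      have hw1len' : w1.length = jK := by rw [hw1len, hwmin_lv.1]
      set v' := w1.getVert (jK - 1) with hv'
      have hv'adj : G.Adj v' wmin := by
        have h1 := w1.adj_getVert_succ (i := jK - 1) (by omega)
        have h2 : jK - 1 + 1 = jK := by omega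
        rw [h2] at h1
        have h3 : w1.getVert jK = wmin := by rw [← hw1len']; exact w1.getVert_length
        rwa [h3] at h1
      have hv'd1 : G.dist s v' = jK - 1 :=
        (dist_getVert_of_shortest w1 hw1len (n := jK - 1) (by omega)).1
      obtain ⟨wmt, hwmt⟩ := hG.exists_walk_length_eq_dist wmin t
      have hub : G.dist v' t ≤ 1 + (d - jK) := by
        have h4 := G.dist_le (Walk.cons hv'adj wmt)
        rw [Walk.length_cons, hwmt, hwmin_lv.2] at h4
        omega
      have hlb : d ≤ G.dist s v' + G.dist v' t := hG.dist_triangle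
      have hv'd2 : G.dist v' t = d - (jK - 1) := by omega
      have hv'lv : v' ∈ G.levelSet s t (jK - 1) := ⟨hv'd1, hv'd2⟩
      have hv'PS : v' ∈ PS := by
        by_contra hnot
        have h5 : jK - 1 ∈ J := ⟨v', hwmin_AR.adj hv'adj.symm hnot, hv'lv⟩
        have := Nat.sInf_le h5
        omega
      have hv'P : v' = P.getVert (jK - 1) := hPS_level v' hv'PS _ hv'lv
      -- successor of the highest level
      obtain ⟨w2, hw2len⟩ := hG.exists_walk_length_eq_dist wmax t
      have hw2len' : w2.length = d - mK := by rw [hw2len, hwmax_lv.2]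
      set v'' := w2.getVert 1 with hv''
      have hv''adj : G.Adj wmax v'' := by
        have h1 := w2.adj_getVert_succ (i := 0) (by omega : 0 < w2.length)
        rwa [w2.getVert_zero] at h1
      have hv''d2 : G.dist v'' t = d - mK - 1 := by
        have h6 := (dist_getVert_of_shortest w2 hw2len (n := 1) (by omega)).2
        rw [hw2len'] at h6
        rw [hv'']
        omega
      have hub2 : G.dist s v'' ≤ mK + 1 := by
        obtain ⟨wsm, hwsm⟩ := hG.exists_walk_length_eq_dist s wmax
        have h7 := G.dist_le (wsm.concat hv''adj)
        rw [Walk.length_concat, hwsm, hwmax_lv.1] at h7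
        omega
      have hlb2 : d ≤ G.dist s v'' + G.dist v'' t := hG.dist_triangle
      have hv''d1 : G.dist s v'' = mK + 1 := by omega
      have hv''lv : v'' ∈ G.levelSet s t (mK + 1) := ⟨hv''d1, by omega⟩
      have hv''PS : v'' ∈ PS := by
        by_contra hnot
        have h8 : mK + 1 ∈ J := ⟨v'', hwmax_AR.adj hv''adj hnot, hv''lv⟩
        have := le_csSup hBdd h8
        omega
      have hv''P : v'' = P.getVert (mK + 1) := hPS_level v'' hv''PS _ hv''lv
      -- minimal separator inside the path
      have hUsep : G.IsSeparator u aS PS := by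
        refine ⟨hu, haS_PS, ?_⟩
        intro p
        by_contra hcc
        push_neg at hcc
        exact hK ⟨p, hcc⟩
      obtain ⟨S, hSPS, hminS⟩ := exists_minimal_separator hUsep
      -- first walk : through the predecessor side
      obtain ⟨wu0, hwu0⟩ := hwmin_AR
      obtain ⟨q1, hq1len, hq1sup⟩ :=
        exists_walk_getVert P (show ℓ ≤ jK - 1 by omega) (show jK - 1 ≤ P.length by omega)
      have hadjwm : G.Adj wmin (P.getVert (jK - 1)) := by rw [← hv'P]; exact hv'adj.symm
      obtain ⟨z1, hz1sup, hz1S⟩ :=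
        hminS.prop.2.2 (wu0.append (Walk.cons hadjwm (q1.reverse.concat hadjℓ)))
      have hz1PS : z1 ∈ PS := hSPS hz1S
      have hz1k : ∃ k, ℓ ≤ k ∧ k ≤ jK - 1 ∧ z1 = P.getVert k := by
        rcases (Walk.mem_support_append_iff _ _).mp hz1sup with h | h
        · exact absurd hz1PS (hwu0 z1 h)
        · rw [Walk.support_cons, List.mem_cons] at h
          rcases h with rfl | h
          · exact absurd hz1PS (hwu0 z1 wu0.end_mem_support)
          · rw [Walk.support_concat, List.mem_append] at h
            rcases h with h | h
            · rw [Walk.support_reverse, List.mem_reverse] at h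
              exact hq1sup z1 h
            · simp only [List.mem_singleton] at h
              exact absurd (h ▸ hz1PS) haS_PS
      -- second walk : through the successor side
      obtain ⟨wu1, hwu1⟩ := hwmax_AR
      obtain ⟨q3, hq3len, hq3sup⟩ :=
        exists_walk_getVert P (show mK + 1 ≤ r by omega) (show r ≤ P.length by omega)
      have hadjwx : G.Adj wmax (P.getVert (mK + 1)) := by rw [← hv''P]; exact hv''adj
      obtain ⟨wab, hwab⟩ := hARab
      obtain ⟨z2, hz2sup, hz2S⟩ :=
        hminS.prop.2.2 (wu1.append (Walk.cons hadjwx ((q3.concat hadjr).append wab.reverse)))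
      have hz2PS : z2 ∈ PS := hSPS hz2S
      have hz2k : ∃ k, mK + 1 ≤ k ∧ k ≤ r ∧ z2 = P.getVert k := by
        rcases (Walk.mem_support_append_iff _ _).mp hz2sup with h | h
        · exact absurd hz2PS (hwu1 z2 h)
        · rw [Walk.support_cons, List.mem_cons] at h
          rcases h with rfl | h
          · exact absurd hz2PS (hwu1 z2 wu1.end_mem_support)
          · rcases (Walk.mem_support_append_iff _ _).mp h with h | h
            · rw [Walk.support_concat, List.mem_append] at h
              rcases h with h | h
              · exact hq3sup z2 h
              · simp only [List.mem_singleton] at h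
                exact absurd (h ▸ hz2PS) hbS_PS
            · rw [Walk.support_reverse, List.mem_reverse] at h
              exact absurd hz2PS (hwab z2 h)
      obtain ⟨k1, hk1a, hk1b, hk1e⟩ := hz1k
      obtain ⟨k2, hk2a, hk2b, hk2e⟩ := hz2k
      rcases minimal_sep_clique hch hminS hz1S hz2S with heq | hadj
      · have : k1 = k2 := hPv_inj k1 (by omega) k2 (by omega) (by rw [← hk1e, ← hk2e, heq])
        omega
      · have := no_chord_of_shortest P hlen (i := k1) (j := k2) (by omega) (by omega)
          (by rw [← hk1e, ← hk2e]; exact hadj)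
        omega
    rw [connected_iff]
    constructor
    · intro p q
      have h3 : G.AR PS p.1 q.1 := (hmain p.1 p.2).trans (hmain q.1 q.2).symm
      exact h3.reachable_induce
    · exact ⟨⟨aS, haS_PS⟩⟩
end

section
/- Let G be a connected graph, let s, t be distinct vertices with d = dist_G(s, t), and let a < i < b be indices in {0, …, d} such that D_a = {u} and D_b = {w} are singletons. Then every v ∈ D_i satisfies dist_G(u, v) = i − a, dist_G(v, w) = b − i, and dist_G(u, w) = b − a; in particular, v is an internal vertex of a shortest u-w path in G. -/
/-!
For `v ∈ D_i` and `j ≤ i`, the vertex at position `j` of a shortest `s`-`v` walk lies in `D_j`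
and is at distance exactly `i - j` from `v`: the triangle inequalities through it against
`dist(s, t) = d` and `dist(s, v) = i` are all tight. Exchanging `s` and `t`, which turns `D_i`
into `D_{d-i}`, gives the same for `i ≤ j ≤ d`. When `D_a = {u}` and `D_b = {w}` these
vertices are forced to be `u` and `w`, which fixes the three distances; then a shortest
`u`-`v` walk followed by a shortest `v`-`w` walk has length `dist(u, w)`, so it is a path.
-/

namespace SimpleGraph

variable {V : Type*} {G : SimpleGraph V}

lemma Walk.dist_getVert_le {u v : V} (p : G.Walk u v) (j : ℕ) : G.dist u (p.getVert j) ≤ j :=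
  (dist_le (p.take j)).trans (by simp)

lemma Walk.dist_getVert_le_length_sub {u v : V} (p : G.Walk u v) (j : ℕ) :
    G.dist (p.getVert j) v ≤ p.length - j :=
  (dist_le (p.drop j)).trans_eq (p.drop_length j)

lemma ne_of_mem_levelSet {s t x y : V} {i j : ℕ} (hx : x ∈ G.levelSet s t i)
    (hy : y ∈ G.levelSet s t j) (hij : i ≠ j) : x ≠ y := by
  rintro rfl
  exact hij (hx.1.symm.trans hy.1)

lemma Connected.le_dist_of_mem_levelSet (hG : G.Connected) {s t v : V} {i : ℕ}
    (hv : v ∈ G.levelSet s t i) : i ≤ G.dist s t := by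
  have h := hG.dist_triangle (u := s) (v := t) (w := v)
  rw [hv.1, G.dist_comm (u := t), hv.2] at h
  omega

lemma levelSet_swap {s t : V} {i : ℕ} (hi : i ≤ G.dist s t) :
    G.levelSet t s (G.dist s t - i) = G.levelSet s t i := by
  ext v
  simp only [levelSet, Set.mem_ofPred_eq]
  rw [G.dist_comm (u := t) (v := s), G.dist_comm (u := t) (v := v), G.dist_comm (u := v) (v := s)]
  constructor <;> rintro ⟨h₁, h₂⟩ <;> refine ⟨?_, ?_⟩ <;> omega

lemma Connected.exists_mem_levelSet_dist_eq_of_le (hG : G.Connected) {s t v : V} {i j : ℕ}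
    (hv : v ∈ G.levelSet s t i) (hji : j ≤ i) :
    ∃ x ∈ G.levelSet s t j, G.dist x v = i - j := by
  obtain ⟨q, hq⟩ := hG.exists_walk_length_eq_dist s v
  have hid := hG.le_dist_of_mem_levelSet hv
  have hsx := q.dist_getVert_le j
  have hxv := q.dist_getVert_le_length_sub j
  have hsv := hG.dist_triangle (u := s) (v := q.getVert j) (w := v)
  have hxt := hG.dist_triangle (u := q.getVert j) (v := v) (w := t)
  have hst := hG.dist_triangle (u := s) (v := q.getVert j) (w := t)
  rw [hq, hv.1] at hxv
  rw [hv.1] at hsv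
  rw [hv.2] at hxt
  exact ⟨q.getVert j, ⟨by omega, by omega⟩, by omega⟩

lemma Connected.exists_mem_levelSet_dist_eq_of_ge (hG : G.Connected) {s t v : V} {i j : ℕ}
    (hv : v ∈ G.levelSet s t i) (hij : i ≤ j) (hjd : j ≤ G.dist s t) :
    ∃ x ∈ G.levelSet s t j, G.dist v x = j - i := by
  rw [← levelSet_swap (hij.trans hjd)] at hv
  obtain ⟨x, hx, hxv⟩ := hG.exists_mem_levelSet_dist_eq_of_le hv (Nat.sub_le_sub_left hij _)
  rw [levelSet_swap hjd] at hx
  exact ⟨x, hx, by rw [G.dist_comm, hxv]; omega⟩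

lemma Connected.dist_eq_of_levelSet_eq_singleton_of_le (hG : G.Connected) {s t u v : V}
    {a i : ℕ} (hu : G.levelSet s t a = {u}) (hv : v ∈ G.levelSet s t i) (hai : a ≤ i) :
    G.dist u v = i - a := by
  obtain ⟨x, hx, hxv⟩ := hG.exists_mem_levelSet_dist_eq_of_le hv hai
  rw [hu, Set.mem_singleton_iff] at hx
  rwa [← hx]

lemma Connected.dist_eq_of_levelSet_eq_singleton_of_ge (hG : G.Connected) {s t v w : V}
    {i b : ℕ} (hw : G.levelSet s t b = {w}) (hv : v ∈ G.levelSet s t i) (hib : i ≤ b)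
    (hbd : b ≤ G.dist s t) : G.dist v w = b - i := by
  obtain ⟨x, hx, hvx⟩ := hG.exists_mem_levelSet_dist_eq_of_ge hv hib hbd
  rw [hw, Set.mem_singleton_iff] at hx
  rwa [← hx]

lemma Connected.exists_isPath_length_eq_dist_mem_support (hG : G.Connected) {u v w : V}
    (h : G.dist u v + G.dist v w = G.dist u w) :
    ∃ P : G.Walk u w, P.IsPath ∧ P.length = G.dist u w ∧ v ∈ P.support := by
  obtain ⟨p, hp⟩ := hG.exists_walk_length_eq_dist u v
  obtain ⟨q, hq⟩ := hG.exists_walk_length_eq_dist v w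
  have hlen : (p.append q).length = G.dist u w := by rw [Walk.length_append, hp, hq, h]
  exact ⟨p.append q, (p.append q).isPath_of_length_eq_dist hlen, hlen,
    (p.mem_support_append_iff q).2 (Or.inl p.end_mem_support)⟩

end SimpleGraph

theorem stmt12_general {V : Type*} (G : SimpleGraph V) (hG : G.Connected) (s t : V)
    (a i b : ℕ) (hai : a < i) (hib : i < b) (hbd : b ≤ G.dist s t)
    (u w : V) (hDa : G.levelSet s t a = {u}) (hDb : G.levelSet s t b = {w}) :
    ∀ v ∈ G.levelSet s t i,
      G.dist u v = i - a ∧ G.dist v w = b - i ∧ G.dist u w = b - a ∧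
      ∃ P : G.Walk u w, P.IsPath ∧ P.length = G.dist u w ∧
        v ∈ P.support ∧ v ≠ u ∧ v ≠ w := by
  intro v hv
  have hu : u ∈ G.levelSet s t a := hDa ▸ rfl
  have hw : w ∈ G.levelSet s t b := hDb ▸ rfl
  have huv := hG.dist_eq_of_levelSet_eq_singleton_of_le hDa hv hai.le
  have hvw := hG.dist_eq_of_levelSet_eq_singleton_of_ge hDb hv hib.le hbd
  have huw := hG.dist_eq_of_levelSet_eq_singleton_of_le hDa hw (hai.trans hib).le
  obtain ⟨P, hP, hPlen, hvP⟩ :=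
    hG.exists_isPath_length_eq_dist_mem_support (u := u) (v := v) (w := w) (by omega)
  exact ⟨huv, hvw, huw, P, hP, hPlen, hvP, SimpleGraph.ne_of_mem_levelSet hv hu hai.ne',
    SimpleGraph.ne_of_mem_levelSet hv hw hib.ne⟩

/-- let `G` be connected, `s ≠ t`, `d = dist_G(s, t)`, and let
`a < i < b ≤ d` be indices with `D_a = {u}` and `D_b = {w}` singletons.  Then every
`v ∈ D_i` satisfies `dist_G(u, v) = i - a`, `dist_G(v, w) = b - i` and
`dist_G(u, w) = b - a`; in particular `v` is an internal vertex of a shortest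
`u`-`w` path of `G`. -/
theorem stmt12 {V : Type*} (G : SimpleGraph V) (hG : G.Connected) (s t : V) (hst : s ≠ t)
    (a i b : ℕ) (hai : a < i) (hib : i < b) (hbd : b ≤ G.dist s t)
    (u w : V) (hDa : G.levelSet s t a = {u}) (hDb : G.levelSet s t b = {w}) :
    ∀ v ∈ G.levelSet s t i,
      G.dist u v = i - a ∧ G.dist v w = b - i ∧ G.dist u w = b - a ∧
      ∃ P : G.Walk u w, P.IsPath ∧ P.length = G.dist u w ∧
        v ∈ P.support ∧ v ≠ u ∧ v ≠ w :=
  stmt12_general G hG s t a i b hai hib hbd u w hDa hDb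
end

section
/- Let G be a connected graph, s, t ∈ V(G), and k an integer. For 0 ≤ i ≤ k and v ∈ V(G), call an edge set F ⊆ E(G) an i-candidate at v if F is the edge set of an s-v path of length i and G − F is connected. For a family 𝓕 of edge sets and an integer q ≥ 0, say that a subfamily 𝓕̂ ⊆ 𝓕 is q-representative for 𝓕 (with respect to connectivity of G) if for every Y ⊆ E(G) with |Y| ≤ q and every X ∈ 𝓕 with X ∩ Y = ∅ and G − (X ∪ Y) connected, there exists X̂ ∈ 𝓕̂ with X̂ ∩ Y = ∅ and G − (X̂ ∪ Y) connected. Suppose dp assigns to each pair (i, v) with 0 ≤ i ≤ k a family dp(i, v) of edge sets such that dp(0, s) = {∅}, dp(0, v) = ∅ for v ≠ s, and for i > 0, dp(i, v) is a (k − i)-representative subfamily of the family of all i-candidates at v of the form F' ∪ {{u, v}} with u a neighbor of v and F' ∈ dp(i − 1, u). Then G has a non-disconnecting s-t path of length at most k if and only if dp(i, t) is nonempty for some 0 ≤ i ≤ k. -/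
namespace Stmt15

/-- `F` is an `i`-candidate at `v` (for source `s`): `F` is the edge set of an `s`-`v`
path of length `i` and `G − F` is connected. -/
def Candidate {V : Type*} (G : SimpleGraph V) (s : V) (i : ℕ) (v : V)
    (F : Set (Sym2 V)) : Prop :=
  (∃ P : G.Walk s v, P.IsPath ∧ P.length = i ∧ {e | e ∈ P.edges} = F) ∧
  (G.deleteEdges F).Connected

/-- `𝓕'` is a `q`-representative subfamily of `𝓕` (with respect to connectivity of
`G`): `𝓕' ⊆ 𝓕` and for every edge set `Y` with `|Y| ≤ q` and every `X ∈ 𝓕` disjoint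
from `Y` with `G − (X ∪ Y)` connected, there is `X' ∈ 𝓕'` disjoint from `Y` with
`G − (X' ∪ Y)` connected. -/
def IsRep {V : Type*} (G : SimpleGraph V) (q : ℕ)
    (F F' : Set (Set (Sym2 V))) : Prop :=
  F' ⊆ F ∧ ∀ Y : Set (Sym2 V), Y.Finite → Y.ncard ≤ q →
    ∀ X ∈ F, X ∩ Y = ∅ → (G.deleteEdges (X ∪ Y)).Connected →
      ∃ X' ∈ F', X' ∩ Y = ∅ ∧ (G.deleteEdges (X' ∪ Y)).Connected

lemma conn_subset {V : Type*} {G : SimpleGraph V} {A B : Set (Sym2 V)} (h : A ⊆ B)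
    (hc : (G.deleteEdges B).Connected) : (G.deleteEdges A).Connected :=
  hc.mono (SimpleGraph.deleteEdges_anti h)

lemma exists_concat' {V : Type*} {G : SimpleGraph V} {s v : V} (P : G.Walk s v)
    (h : 0 < P.length) :
    ∃ (u : V) (Q : G.Walk s u) (ha : G.Adj u v), P = Q.concat ha := by
  have hn : ¬ P.reverse.Nil := by
    rw [SimpleGraph.Walk.not_nil_iff_lt_length]; simpa using h
  obtain ⟨u, ha, q, hq⟩ := SimpleGraph.Walk.not_nil_iff.mp hn
  refine ⟨u, q.reverse, ha.symm, ?_⟩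
  have h2 := congrArg SimpleGraph.Walk.reverse hq
  rw [SimpleGraph.Walk.reverse_reverse] at h2
  rw [h2, SimpleGraph.Walk.reverse_cons]; rfl

lemma concat_isPath' {V : Type*} {G : SimpleGraph V} {s u v : V} {Q : G.Walk s u}
    (ha : G.Adj u v) (hQ : Q.IsPath) (hv : v ∉ Q.support) : (Q.concat ha).IsPath := by
  rw [← SimpleGraph.Walk.isPath_reverse_iff, SimpleGraph.Walk.reverse_concat,
    SimpleGraph.Walk.cons_isPath_iff]
  exact ⟨hQ.reverse, by simpa using hv⟩

lemma concat_path_parts {V : Type*} {G : SimpleGraph V} {s u v : V} {Q : G.Walk s u}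
    (ha : G.Adj u v) (h : (Q.concat ha).IsPath) : Q.IsPath ∧ v ∉ Q.support := by
  rw [← SimpleGraph.Walk.isPath_reverse_iff, SimpleGraph.Walk.reverse_concat,
    SimpleGraph.Walk.cons_isPath_iff] at h
  exact ⟨(SimpleGraph.Walk.isPath_reverse_iff Q).mp h.1, by simpa using h.2⟩

/-- correctness of the representative-family dynamic programming for
non-disconnecting paths.  If `dp 0 s = {∅}`, `dp 0 v = ∅` for `v ≠ s`, and for each
`0 < i ≤ k` and `v`, `dp i v` is a `(k − i)`-representative subfamily of the family of
all `i`-candidates at `v` of the form `F' ∪ {{u, v}}` with `u` a neighbor of `v` and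
`F' ∈ dp (i − 1) u`, then `G` has a non-disconnecting `s`-`t` path of length at most
`k` iff `dp i t ≠ ∅` for some `0 ≤ i ≤ k`. -/
theorem stmt15 {V : Type*} (G : SimpleGraph V) (hG : G.Connected) (s t : V) (k : ℕ)
    (dp : ℕ → V → Set (Set (Sym2 V)))
    (h0s : dp 0 s = {∅})
    (h0 : ∀ v : V, v ≠ s → dp 0 v = ∅)
    (hstep : ∀ i, 0 < i → i ≤ k → ∀ v : V,
      IsRep G (k - i)
        {F | Candidate G s i v F ∧
          ∃ u : V, G.Adj u v ∧ ∃ F' ∈ dp (i - 1) u, F = F' ∪ {s(u, v)}}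
        (dp i v)) :
    (∃ P : G.Walk s t, P.IsPath ∧ P.length ≤ k ∧
        (G.deleteEdges {e | e ∈ P.edges}).Connected) ↔
    (∃ i ≤ k, (dp i t).Nonempty) := by
  haveI : DecidableEq V := Classical.decEq V
  constructor
  · rintro ⟨P, hP, hlen, hconn⟩
    have claim : ∀ i, i ≤ k → ∀ (v : V) (F Y : Set (Sym2 V)), Y.Finite →
        Y.ncard ≤ k - i →
        (∃ Q : G.Walk s v, Q.IsPath ∧ Q.length = i ∧ {e | e ∈ Q.edges} = F) →
        F ∩ Y = ∅ → (G.deleteEdges (F ∪ Y)).Connected →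
        ∃ j ≤ i, ∃ X ∈ dp j v, X ∩ Y = ∅ ∧ (G.deleteEdges (X ∪ Y)).Connected := by
      intro i
      induction i using Nat.strong_induction_on with
      | _ i IH =>
        intro hik v F Y hYfin hYcard hpath hFY hconn'
        obtain ⟨Q, hQpath, hQlen, hQedges⟩ := hpath
        have hdisj : ∀ e ∈ F, e ∉ Y := fun e he hY =>
          (Set.eq_empty_iff_forall_notMem.mp hFY e ⟨he, hY⟩)
        rcases Nat.eq_zero_or_pos i with hi0 | hipos
        · -- i = 0 : Q is nil, v = s, F = ∅
          subst hi0
          cases Q with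
          | nil =>
            refine ⟨0, le_refl _, ∅, by rw [h0s]; rfl, Set.empty_inter _, ?_⟩
            have hF : F = ∅ := by rw [← hQedges]; simp
            rw [hF] at hconn'
            exact hconn'
          | cons h q => simp at hQlen
        · -- i > 0 : decompose Q = Q'.concat ha
          obtain ⟨u, Q', ha, rfl⟩ := exists_concat' Q (by omega)
          obtain ⟨hQ'path, hvQ'⟩ := concat_path_parts ha hQpath
          rw [SimpleGraph.Walk.length_concat] at hQlen
          set n := Q'.length with hn
          set F' : Set (Sym2 V) := {e | e ∈ Q'.edges} with hF'
          set e0 : Sym2 V := s(u, v) with he0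
          have hFsplit : F = F' ∪ {e0} := by
            rw [← hQedges]
            ext e
            simp only [Set.mem_union, Set.mem_setOf_eq, Set.mem_singleton_iff,
              SimpleGraph.Walk.edges_concat, List.concat_eq_append, List.mem_append,
              List.mem_cons, List.not_mem_nil, or_false, F', e0]
          have he0F : e0 ∈ F := by rw [hFsplit]; right; rfl
          have he0F' : e0 ∉ F' := by
            have hnd := hQpath.isTrail.edges_nodup
            rw [SimpleGraph.Walk.edges_concat, List.concat_eq_append] at hnd
            intro hmem
            exact (List.disjoint_of_nodup_append hnd) hmem (by simp [he0])
          have hF'F : F' ⊆ F := by rw [hFsplit]; exact Set.subset_union_left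
          -- apply IH at n with Y' = Y ∪ {e0}
          have hYfin' : (Y ∪ {e0}).Finite := hYfin.union (Set.finite_singleton _)
          have hYcard' : (Y ∪ {e0}).ncard ≤ k - n := by
            have h1 := Set.ncard_union_le Y {e0}
            have h2 : ({e0} : Set (Sym2 V)).ncard = 1 := Set.ncard_singleton _
            omega
          have hF'disj : F' ∩ (Y ∪ {e0}) = ∅ := by
            apply Set.eq_empty_iff_forall_notMem.mpr
            rintro e ⟨heF', heY⟩
            rcases heY with heY | heY
            · exact hdisj e (hF'F heF') heY
            · rw [Set.mem_singleton_iff] at heY; subst heY; exact he0F' heF'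
          have hunion : F' ∪ (Y ∪ {e0}) = F ∪ Y := by
            rw [hFsplit]; ext e; simp; tauto
          obtain ⟨j, hjn, X', hX'dp, hX'disj, hX'conn⟩ :=
            IH n (by omega) (by omega) u F' (Y ∪ {e0}) hYfin' hYcard'
              ⟨Q', hQ'path, rfl, rfl⟩ hF'disj (by rw [hunion]; exact hconn')
          have hX'Y : X' ∩ Y = ∅ := by
            apply Set.eq_empty_iff_forall_notMem.mpr
            rintro e ⟨heX, heY⟩
            exact Set.eq_empty_iff_forall_notMem.mp hX'disj e ⟨heX, Or.inl heY⟩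
          have he0X' : e0 ∉ X' := fun hmem =>
            Set.eq_empty_iff_forall_notMem.mp hX'disj e0 ⟨hmem, Or.inr rfl⟩
          -- realize X' as a path
          have hreal : ∃ Q₂ : G.Walk s u, Q₂.IsPath ∧ Q₂.length = j ∧
              {e | e ∈ Q₂.edges} = X' := by
            rcases Nat.eq_zero_or_pos j with hj0 | hjpos
            · subst hj0
              by_cases hus : u = s
              · subst hus
                rw [h0s, Set.mem_singleton_iff] at hX'dp
                exact ⟨SimpleGraph.Walk.nil, SimpleGraph.Walk.IsPath.nil, rfl,
                  by rw [hX'dp]; simp⟩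
              · rw [h0 u hus] at hX'dp; exact absurd hX'dp (Set.notMem_empty _)
            · obtain ⟨⟨⟨Q₂, hQ₂p, hQ₂l, hQ₂e⟩, _⟩, _⟩ :=
                (hstep j hjpos (by omega) u).1 hX'dp
              exact ⟨Q₂, hQ₂p, hQ₂l, hQ₂e⟩
          obtain ⟨Q₂, hQ₂path, hQ₂len, hQ₂edges⟩ := hreal
          by_cases hv : v ∈ Q₂.support
          · -- truncate and recurse
            set Q₃ := Q₂.takeUntil v hv with hQ₃
            have hQ₃len : Q₃.length ≤ j := hQ₂len ▸ Q₂.length_takeUntil_le hv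
            have hQ₃sub : {e | e ∈ Q₃.edges} ⊆ X' := by
              rw [← hQ₂edges]
              intro e he
              exact Q₂.edges_takeUntil_subset hv he
            have hQ₃disj : {e | e ∈ Q₃.edges} ∩ Y = ∅ := by
              apply Set.eq_empty_iff_forall_notMem.mpr
              rintro e ⟨heE, heY⟩
              exact Set.eq_empty_iff_forall_notMem.mp hX'Y e ⟨hQ₃sub heE, heY⟩
            have hQ₃conn : (G.deleteEdges ({e | e ∈ Q₃.edges} ∪ Y)).Connected := by
              refine conn_subset ?_ hX'conn
              exact Set.union_subset_union hQ₃sub Set.subset_union_left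
            obtain ⟨j', hj', X'', hX''⟩ :=
              IH Q₃.length (by omega) (by omega) v {e | e ∈ Q₃.edges} Y hYfin
                (by omega) ⟨Q₃, hQ₂path.takeUntil hv, rfl, rfl⟩ hQ₃disj hQ₃conn
            exact ⟨j', by omega, X'', hX''⟩
          · -- extend by e0 and use hstep at j+1
            set X : Set (Sym2 V) := X' ∪ {e0} with hX
            have hXY : X ∩ Y = ∅ := by
              apply Set.eq_empty_iff_forall_notMem.mpr
              rintro e ⟨heX, heY⟩
              rcases heX with heX | heX
              · exact Set.eq_empty_iff_forall_notMem.mp hX'Y e ⟨heX, heY⟩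
              · rw [Set.mem_singleton_iff] at heX; subst heX; exact hdisj e0 he0F heY
            have hXunion : X ∪ Y = X' ∪ (Y ∪ {e0}) := by
              ext e; simp [X]; tauto
            have hXconn : (G.deleteEdges (X ∪ Y)).Connected := by
              rw [hXunion]; exact hX'conn
            have hmem : X ∈ {F | Candidate G s (j + 1) v F ∧
                ∃ u' : V, G.Adj u' v ∧ ∃ F'' ∈ dp (j + 1 - 1) u', F = F'' ∪ {s(u', v)}} := by
              refine ⟨⟨⟨Q₂.concat ha, concat_isPath' ha hQ₂path hv, ?_, ?_⟩, ?_⟩,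
                u, ha, X', by simpa using hX'dp, rfl⟩
              · rw [SimpleGraph.Walk.length_concat, hQ₂len]
              · ext e
                simp only [Set.mem_union, Set.mem_setOf_eq, Set.mem_singleton_iff,
                  SimpleGraph.Walk.edges_concat, List.concat_eq_append, List.mem_append,
                  List.mem_cons, List.not_mem_nil, or_false, X, e0, ← hQ₂edges]
              · exact conn_subset Set.subset_union_left hXconn
            obtain ⟨X'', hX''dp, hX''Y, hX''conn⟩ :=
              (hstep (j + 1) (by omega) (by omega) v).2 Y hYfin (by omega) X hmem hXY hXconn
            exact ⟨j + 1, by omega, X'', hX''dp, hX''Y, hX''conn⟩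
    obtain ⟨j, hj, X, hXdp, _, _⟩ :=
      claim P.length hlen t {e | e ∈ P.edges} ∅ Set.finite_empty (by simp)
        ⟨P, hP, rfl, rfl⟩ (Set.inter_empty _) (by rwa [Set.union_empty])
    exact ⟨j, le_trans hj hlen, X, hXdp⟩
  · rintro ⟨i, hik, X, hX⟩
    rcases Nat.eq_zero_or_pos i with hi0 | hipos
    · subst hi0
      by_cases hts : t = s
      · subst hts
        refine ⟨SimpleGraph.Walk.nil, SimpleGraph.Walk.IsPath.nil, by simp, ?_⟩
        have h : {e | e ∈ (SimpleGraph.Walk.nil : G.Walk t t).edges} = (∅ : Set (Sym2 V)) := by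
          simp
        rw [h, SimpleGraph.deleteEdges_empty]
        exact hG
      · rw [h0 t hts] at hX; exact absurd hX (Set.notMem_empty _)
    · obtain ⟨⟨⟨P, hP, hlen, hE⟩, hconn⟩, _⟩ := (hstep i hipos hik t).1 hX
      exact ⟨P, hP, by omega, by rwa [hE]⟩


end Stmt15
end

section
/- Let G be a connected graph, s, t ∈ V(G), and k an integer, and let B = {v ∈ V(G) : dist_G(s, v) ≤ k} with t ∈ B. Let C be the vertex set of a connected component of G − B, and let G_C be the graph with vertex set (V(G) \ C) ∪ {v_C} (where v_C is a new vertex) in which two vertices u, w ∈ V(G) \ C are adjacent if and only if they are adjacent in G, and u ∈ V(G) \ C is adjacent to v_C if and only if u has a neighbor in C in G. Then G has a non-separating s-t path of length at most k if and only if G_C has a non-separating s-t path of length at most k. -/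
/-- The graph `G_C` obtained from `G` by contracting a vertex set `C` to a single new
vertex `v_C` (represented by `none`): its vertices are the vertices outside `C`
together with `none`; two vertices outside `C` are adjacent iff they are adjacent in
`G`, and a vertex outside `C` is adjacent to `none` iff it has a neighbor in `C`. -/
def SimpleGraph.contractSet {V : Type*} (G : SimpleGraph V) (C : Set V) :
    SimpleGraph (Option ↥(Cᶜ : Set V)) where
  Adj a b :=
    match a, b with
    | some u, some w => G.Adj u w
    | some u, none => ∃ x ∈ C, G.Adj u x
    | none, some w => ∃ x ∈ C, G.Adj w x
    | none, none => False
  symm := by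
    constructor
    rintro (u | u) (w | w) h
    · exact h
    · exact h
    · exact h
    · exact h.symm
  loopless := by
    constructor
    rintro (u | u) h
    · exact h
    · exact G.ne_of_adj h rfl

/-!
Every vertex of `C` is at distance more than `k` from `s`. Hence an `s`-`t` path of length at
most `k` in `G` avoids `C`, and one in `G_C` avoids `v_C` (a walk from `s` to `v_C` of length
`≤ k` ends with an edge into `C`, giving a walk of `G` from `s` into `C` that is no longer).
So in both graphs these paths are exactly the paths of `G − C`. Deleting such a path leaves `C`
intact, and contracting the connected set `C` does not affect the connectivity of what remains.
-/

namespace SimpleGraph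

variable {V W : Type*}

theorem Reachable.of_adj_reachable {G : SimpleGraph V} {H : SimpleGraph W} (f : V → W)
    (hf : ∀ a b, G.Adj a b → H.Reachable (f a) (f b)) {u v : V} (h : G.Reachable u v) :
    H.Reachable (f u) (f v) := by
  rw [reachable_iff_reflTransGen] at h ⊢
  exact Relation.ReflTransGen.lift' f
    (fun a b hab => (reachable_iff_reflTransGen _ _).1 (hf a b hab)) _ _ h

theorem Connected.of_adj_reachable {G : SimpleGraph V} {H : SimpleGraph W} (hG : G.Connected)
    (f : V → W) (hf : ∀ a b, G.Adj a b → H.Reachable (f a) (f b))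
    (hcover : ∀ w, ∃ v, H.Reachable (f v) w) : H.Connected := by
  have : Nonempty W := ⟨f hG.nonempty.some⟩
  refine ⟨fun w w' => ?_⟩
  obtain ⟨v, hv⟩ := hcover w
  obtain ⟨v', hv'⟩ := hcover w'
  exact hv.symm.trans (((hG.preconnected v v').of_adj_reachable f hf).trans hv')

theorem Connected.reachable_induce_of_subset {G : SimpleGraph V} {C S : Set V}
    (hC : (G.induce C).Connected) (hCS : C ⊆ S) {a b : V} (ha : a ∈ C) (hb : b ∈ C) :
    (G.induce S).Reachable ⟨a, hCS ha⟩ ⟨b, hCS hb⟩ :=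
  (hC.preconnected ⟨a, ha⟩ ⟨b, hb⟩).map (G.induceHomOfLE hCS).toHom

theorem Walk.exists_map_eq_of_support_subset_range_s16 {G : SimpleGraph V} {H : SimpleGraph W}
    (f : G ↪g H) {a b : V} (q : H.Walk (f a) (f b))
    (hq : ∀ x ∈ q.support, x ∈ Set.range f) :
    ∃ p : G.Walk a b, p.map f.toHom = q := by
  suffices key : ∀ {x y : W} (q : H.Walk x y), (∀ z ∈ q.support, z ∈ Set.range f) →
      ∀ a b (ha : f a = x) (hb : f b = y), ∃ p : G.Walk a b, (p.map f.toHom).copy ha hb = q from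
    key q hq a b rfl rfl
  intro x y q
  induction q with
  | nil =>
    rintro - a b rfl hb
    obtain rfl := f.injective hb
    exact ⟨.nil, rfl⟩
  | @cons x x' y h q ih =>
    rintro hq a b rfl rfl
    obtain ⟨a', rfl⟩ := hq x' (by simp)
    obtain ⟨p, hp⟩ := ih (fun z hz => hq z (by simp [hz])) a' b rfl rfl
    exact ⟨.cons (f.map_adj_iff.1 h) p, by simpa using hp⟩

theorem Walk.dist_le_of_mem_support {G : SimpleGraph V} {u v w : V} (p : G.Walk u v)
    (hw : w ∈ p.support) : G.dist u w ≤ p.length := by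
  classical
  exact (dist_le _).trans (p.length_takeUntil_le_length hw)

variable (G : SimpleGraph V) (C : Set V)

def Embedding.contractSet : G.induce Cᶜ ↪g G.contractSet C where
  toFun := some
  inj' := Option.some_injective _
  map_rel_iff' := Iff.rfl

@[simp]
theorem Embedding.contractSet_apply (u : ↥(Cᶜ : Set V)) :
    Embedding.contractSet G C u = some u :=
  rfl

open Classical in
noncomputable def contractSetProj (v : V) : Option ↥(Cᶜ : Set V) :=
  if h : v ∈ C then none else some ⟨v, h⟩

variable {C} in
theorem contractSetProj_of_mem {v : V} (h : v ∈ C) : contractSetProj C v = none := dif_pos h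

variable {C} in
theorem contractSetProj_of_notMem {v : V} (h : v ∉ C) : contractSetProj C v = some ⟨v, h⟩ :=
  dif_neg h

theorem contractSetProj_eq_or_adj {a b : V} (h : G.Adj a b) :
    contractSetProj C a = contractSetProj C b ∨
      (G.contractSet C).Adj (contractSetProj C a) (contractSetProj C b) := by
  by_cases ha : a ∈ C <;> by_cases hb : b ∈ C
  · exact .inl (by rw [contractSetProj_of_mem ha, contractSetProj_of_mem hb])
  · rw [contractSetProj_of_mem ha, contractSetProj_of_notMem hb]
    exact .inr ⟨a, ha, h.symm⟩
  · rw [contractSetProj_of_notMem ha, contractSetProj_of_mem hb]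
    exact .inr ⟨b, hb, h⟩
  · rw [contractSetProj_of_notMem ha, contractSetProj_of_notMem hb]
    exact .inr h

/- For `C ⊆ S`, the set `{x | ∀ u ∈ x, ↑u ∈ S}` is the image of `S` in `G_C`:
the vertices of `S \ C` together with `v_C = none`. -/
theorem Connected.contractSet_induce {S : Set V} (hC : (G.induce C).Connected) (hCS : C ⊆ S)
    (hS : (G.induce S).Connected) :
    ((G.contractSet C).induce {x | ∀ u ∈ x, ↑u ∈ S}).Connected := by
  have hproj (v : V) (hv : v ∈ S) : ∀ u ∈ contractSetProj C v, ↑u ∈ S := by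
    by_cases h : v ∈ C
    · simp [contractSetProj_of_mem h]
    · rintro u hu
      rw [contractSetProj_of_notMem h, Option.mem_some_iff] at hu
      exact hu ▸ hv
  refine hS.of_adj_reachable (fun v => ⟨contractSetProj C v, hproj v v.2⟩) ?_ ?_
  · rintro ⟨a, ha⟩ ⟨b, hb⟩ hab
    rcases G.contractSetProj_eq_or_adj C (induce_adj.1 hab) with heq | hadj
    · simp only [heq]; rfl
    · exact Adj.reachable hadj
  · obtain ⟨c, hc⟩ := hC.nonempty
    rintro ⟨_ | u, hu⟩
    · exact ⟨⟨c, hCS hc⟩, by simp only [contractSetProj_of_mem hc]; rfl⟩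
    · exact ⟨⟨u, hu u rfl⟩, by simp only [contractSetProj_of_notMem u.2]; rfl⟩

theorem Connected.of_contractSet_induce {S : Set V} (hC : (G.induce C).Connected) (hCS : C ⊆ S)
    (hS : ((G.contractSet C).induce {x | ∀ u ∈ x, ↑u ∈ S}).Connected) :
    (G.induce S).Connected := by
  obtain ⟨c, hc⟩ := hC.nonempty
  let g : ↥{x : Option ↥(Cᶜ : Set V) | ∀ u ∈ x, ↑u ∈ S} → ↥S := fun x =>
    match x with
    | ⟨none, _⟩ => ⟨c, hCS hc⟩
    | ⟨some u, hu⟩ => ⟨u, hu u rfl⟩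
  refine hS.of_adj_reachable g ?_ ?_
  · rintro ⟨_ | u, hu⟩ ⟨_ | w, hw⟩ hadj
    · exact hadj.elim
    · obtain ⟨x, hx, hwx⟩ := hadj
      exact (hC.reachable_induce_of_subset hCS hc hx).trans
        (Adj.reachable (show (G.induce S).Adj ⟨x, hCS hx⟩ ⟨w, hw w rfl⟩ from hwx.symm))
    · obtain ⟨x, hx, hux⟩ := hadj
      exact (Adj.reachable (show (G.induce S).Adj ⟨u, hu u rfl⟩ ⟨x, hCS hx⟩ from hux)).trans
        (hC.reachable_induce_of_subset hCS hx hc)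
    · exact Adj.reachable hadj
  · rintro ⟨v, hv⟩
    by_cases hvC : v ∈ C
    · exact ⟨⟨none, by simp⟩, hC.reachable_induce_of_subset hCS hc hvC⟩
    · exact ⟨⟨some ⟨v, hvC⟩, by rintro u ⟨⟩; exact hv⟩, Reachable.rfl⟩

theorem exists_walk_of_none_mem_support_contractSet :
    ∀ {u : ↥(Cᶜ : Set V)} {y : Option ↥(Cᶜ : Set V)}
      (q : (G.contractSet C).Walk (some u) y),
      none ∈ q.support → ∃ x ∈ C, ∃ p : G.Walk u x, p.length ≤ q.length
  | _, _, .nil, h => by simp at h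
  | _, _, .cons (v := none) h _, _ =>
    let ⟨x, hx, hux⟩ := h
    ⟨x, hx, hux.toWalk, Nat.succ_le_succ (Nat.zero_le _)⟩
  | _, _, .cons (v := some _) h q, hq =>
    let ⟨x, hx, p, hp⟩ := exists_walk_of_none_mem_support_contractSet q (by simpa using hq)
    ⟨x, hx, .cons h p, Nat.succ_le_succ hp⟩

theorem isPath_length_le_connected_iff_of_map_eq (hC : (G.induce C).Connected)
    {a b : ↥(Cᶜ : Set V)} (r : (G.induce Cᶜ).Walk a b)
    {p : G.Walk (Embedding.induce (G := G) Cᶜ a) (Embedding.induce (G := G) Cᶜ b)}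
    {q : (G.contractSet C).Walk (Embedding.contractSet G C a) (Embedding.contractSet G C b)}
    (hp : r.map (Embedding.induce Cᶜ).toHom = p)
    (hq : r.map (Embedding.contractSet G C).toHom = q)
    (k : ℕ) :
    (p.IsPath ∧ p.length ≤ k ∧ (G.induce {v | v ∉ p.support}).Connected) ↔
      (q.IsPath ∧ q.length ≤ k ∧
        ((G.contractSet C).induce {x | x ∉ q.support}).Connected) := by
  subst hp hq
  rw [Walk.isPath_map_iff_of_injective (Embedding.induce (G := G) _).injective,
    Walk.isPath_map_iff_of_injective (Embedding.contractSet G C).injective,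
    Walk.length_map, Walk.length_map]
  refine and_congr_right fun _ => and_congr_right fun _ => ?_
  have hCS : C ⊆ {v | v ∉ (r.map (Embedding.induce Cᶜ).toHom).support} := by
    rintro v hvC hv
    obtain ⟨u, -, rfl⟩ := List.mem_map.1 (Walk.support_map _ r ▸ hv)
    exact u.2 hvC
  have hset : {x | x ∉ (r.map (Embedding.contractSet G C).toHom).support} =
      {x : Option ↥(Cᶜ : Set V) |
        ∀ u ∈ x, ↑u ∈ {v | v ∉ (r.map (Embedding.induce Cᶜ).toHom).support}} := by
    rw [Walk.support_map, Walk.support_map]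
    ext (_ | u)
    · simp
    · simp only [Set.mem_ofPred_eq, Option.mem_def, Option.some_inj, forall_eq']
      exact not_congr ((List.mem_map_of_injective (Embedding.contractSet G C).injective).trans
        (List.mem_map_of_injective (Embedding.induce (G := G) Cᶜ).injective).symm)
  rw [hset]
  exact ⟨Connected.contractSet_induce G C hC hCS, Connected.of_contractSet_induce G C hC hCS⟩

end SimpleGraph

/-- let `G` be connected, `B = {v : dist_G(s, v) ≤ k}` with `t ∈ B`, and
let `C` be the vertex set of a connected component of `G − B` (nonempty, disjoint from
`B`, inducing a connected subgraph, and closed under adjacency outside `B`).  Then `G`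
has a non-separating `s`-`t` path of length at most `k` iff `G_C` has a non-separating
`s`-`t` path of length at most `k`. -/
theorem stmt16 {V : Type*} (G : SimpleGraph V) (s t : V) (k : ℕ)
    (htB : G.dist s t ≤ k)
    (C : Set V)
    (hCB : ∀ x ∈ C, ¬ G.dist s x ≤ k)
    (hCconn : (G.induce C).Connected) :
    (∃ P : G.Walk s t, P.IsPath ∧ P.length ≤ k ∧
        (G.induce {v | v ∉ P.support}).Connected) ↔
    (∃ Q : (G.contractSet C).Walk
        (some ⟨s, fun hs => hCB s hs (by simp [SimpleGraph.dist_self])⟩)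
        (some ⟨t, fun ht => hCB t ht htB⟩),
      Q.IsPath ∧ Q.length ≤ k ∧
        ((G.contractSet C).induce {x | x ∉ Q.support}).Connected) := by
  constructor
  · rintro ⟨P, hP⟩
    have hPC : ∀ v ∈ P.support, v ∈ Cᶜ := fun v hv hvC =>
      hCB v hvC ((P.dist_le_of_mem_support hv).trans hP.2.1)
    exact ⟨_, (G.isPath_length_le_connected_iff_of_map_eq C hCconn (P.induce Cᶜ hPC)
      (P.map_induce hPC) rfl k).1 hP⟩
  · rintro ⟨Q, hQ⟩
    have hQC : ∀ x ∈ Q.support, x ∈ Set.range (SimpleGraph.Embedding.contractSet G C) := by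
      rintro (_ | u) hx
      · obtain ⟨x, hxC, p, hp⟩ := G.exists_walk_of_none_mem_support_contractSet C Q hx
        exact absurd ((SimpleGraph.dist_le p).trans (hp.trans hQ.2.1)) (hCB x hxC)
      · exact ⟨u, rfl⟩
    obtain ⟨R, hR⟩ :=
      Q.exists_map_eq_of_support_subset_range_s16 (SimpleGraph.Embedding.contractSet G C) hQC
    exact ⟨_, (G.isPath_length_le_connected_iff_of_map_eq C hCconn R rfl hR k).2 hQ⟩
end
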